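/- arXiv:1906.07517 — 9 statements merged into one kernel-verified Lean document; each statement's English description precedes it below -/
import Mathlib

section
/- Let h_d(D) = ∫₀^∞ (s^{d+1} - s^{d+3}) e^{-φ_α(s)/D} ds. If h_d(D) = 0 for some D > 0, then 1/(d+2) < D < 1/d. -/
open MeasureTheory Real Set Filter Topology

namespace Stmt2Aux

noncomputable def J (α D : ℝ) (m : ℕ) : ℝ :=
  ∫ s in Set.Ioi (0:ℝ), s ^ m * Real.exp (-(α / 4 * s ^ 4 + (1 - α) / 2 * s ^ 2) / D)

variable {α D : ℝ}

lemma bound (hα : 0 < α) (hD : 0 < D) (m : ℕ) :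
    ∀ᶠ s in atTop,
      s ^ m * Real.exp (-(α / 4 * s ^ 4 + (1 - α) / 2 * s ^ 2) / D) ≤ Real.exp (-s) := by
  have hc : (0:ℝ) < α / 4 := by positivity
  have h2 : ∀ᶠ s : ℝ in atTop,
      ((m:ℝ) + 1) * D + |(1 - α) / 2| ≤ α / 4 * s ^ 2 := by
    have ht : Tendsto (fun s : ℝ => α / 4 * s ^ 2) atTop atTop :=
      (tendsto_pow_atTop two_ne_zero).const_mul_atTop hc
    exact ht.eventually_ge_atTop _
  filter_upwards [eventually_ge_atTop (1:ℝ), h2] with s hs1 hs2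
  have habs : -|(1 - α) / 2| ≤ (1 - α) / 2 := neg_abs_le _
  have key : ((m:ℝ) + 1) * s ≤ (α / 4 * s ^ 4 + (1 - α) / 2 * s ^ 2) / D := by
    rw [le_div_iff₀ hD]
    nlinarith [mul_le_mul_of_nonneg_right hs2 (sq_nonneg s),
      mul_le_mul_of_nonneg_right habs (sq_nonneg s),
      mul_nonneg (mul_nonneg (by positivity : (0:ℝ) ≤ (m:ℝ)+1) hD.le)
        (by nlinarith : (0:ℝ) ≤ s ^ 2 - s)]
  have hsm : s ^ m ≤ Real.exp ((m:ℝ) * s) := by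
    calc s ^ m ≤ (Real.exp s) ^ m :=
          pow_le_pow_left₀ (by linarith) (by linarith [Real.add_one_le_exp s]) m
      _ = Real.exp ((m:ℝ) * s) := by rw [← Real.exp_nat_mul]
  calc s ^ m * Real.exp (-(α / 4 * s ^ 4 + (1 - α) / 2 * s ^ 2) / D)
      ≤ Real.exp ((m:ℝ) * s) * Real.exp (-(α / 4 * s ^ 4 + (1 - α) / 2 * s ^ 2) / D) :=
        mul_le_mul_of_nonneg_right hsm (Real.exp_pos _).le
    _ = Real.exp ((m:ℝ) * s + -(α / 4 * s ^ 4 + (1 - α) / 2 * s ^ 2) / D) := by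
        rw [← Real.exp_add]
    _ ≤ Real.exp (-s) := by
        apply Real.exp_le_exp.2
        have : -(α / 4 * s ^ 4 + (1 - α) / 2 * s ^ 2) / D
            = -((α / 4 * s ^ 4 + (1 - α) / 2 * s ^ 2) / D) := by ring
        rw [this]; linarith

lemma integrableJ (hα : 0 < α) (hD : 0 < D) (m : ℕ) :
    IntegrableOn
      (fun s => s ^ m * Real.exp (-(α / 4 * s ^ 4 + (1 - α) / 2 * s ^ 2) / D))
      (Set.Ioi (0:ℝ)) := by
  apply integrable_of_isBigO_exp_neg (b := 1) one_pos
  · exact (by fun_prop : Continuous fun s : ℝ =>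
      s ^ m * Real.exp (-(α / 4 * s ^ 4 + (1 - α) / 2 * s ^ 2) / D)).continuousOn
  · apply Asymptotics.IsBigO.of_bound 1
    filter_upwards [bound hα hD m, eventually_ge_atTop (0:ℝ)] with s hs hs0
    rw [one_mul, Real.norm_eq_abs, Real.norm_eq_abs, abs_of_nonneg (by positivity),
      abs_of_nonneg (Real.exp_pos _).le, neg_one_mul]
    exact hs

lemma tendstoJ (hα : 0 < α) (hD : 0 < D) (m : ℕ) :
    Tendsto (fun s => s ^ m * Real.exp (-(α / 4 * s ^ 4 + (1 - α) / 2 * s ^ 2) / D))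
      atTop (𝓝 0) := by
  apply squeeze_zero' _ (bound hα hD m) tendsto_exp_neg_atTop_nhds_zero
  filter_upwards [eventually_ge_atTop (0:ℝ)] with s hs
  positivity


lemma Jpos (hα : 0 < α) (hD : 0 < D) (m : ℕ) : 0 < J α D m := by
  rw [J, setIntegral_pos_iff_support_of_nonneg_ae]
  · have hsub : Set.Ioi (0:ℝ) ⊆
        (Function.support fun s : ℝ =>
          s ^ m * Real.exp (-(α / 4 * s ^ 4 + (1 - α) / 2 * s ^ 2) / D)) ∩ Set.Ioi 0 := by
      intro s hs
      have hs0 : (0:ℝ) < s := hs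
      exact ⟨ne_of_gt (by positivity), hs⟩
    calc (0:ENNReal) < volume (Set.Ioi (0:ℝ)) := by simp [Real.volume_Ioi]
      _ ≤ _ := measure_mono hsub
  · refine (ae_restrict_iff' measurableSet_Ioi).2 (ae_of_all _ fun s hs => ?_)
    have hs0 : (0:ℝ) < s := hs
    positivity
  · exact integrableJ hα hD m

lemma Jconvex (hα : 0 < α) (hD : 0 < D) (m : ℕ) :
    0 < J α D (m + 4) - 2 * J α D (m + 2) + J α D m := by
  have hi4 := integrableJ hα hD (m + 4)
  have hi2 := integrableJ hα hD (m + 2)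
  have hi0 := integrableJ hα hD m
  have h1 : ∫ s in Set.Ioi (0:ℝ),
      (s ^ (m + 4) * Real.exp (-(α / 4 * s ^ 4 + (1 - α) / 2 * s ^ 2) / D)
        - 2 * (s ^ (m + 2) * Real.exp (-(α / 4 * s ^ 4 + (1 - α) / 2 * s ^ 2) / D))
        + s ^ m * Real.exp (-(α / 4 * s ^ 4 + (1 - α) / 2 * s ^ 2) / D))
      = J α D (m + 4) - 2 * J α D (m + 2) + J α D m := by
    have hi42 : IntegrableOn (fun s : ℝ =>
        s ^ (m + 4) * Real.exp (-(α / 4 * s ^ 4 + (1 - α) / 2 * s ^ 2) / D)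
          - 2 * (s ^ (m + 2) * Real.exp (-(α / 4 * s ^ 4 + (1 - α) / 2 * s ^ 2) / D)))
        (Set.Ioi (0:ℝ)) := hi4.sub (hi2.const_mul 2)
    rw [J, J, J, MeasureTheory.integral_add hi42 hi0,
      MeasureTheory.integral_sub hi4 (hi2.const_mul 2), MeasureTheory.integral_const_mul]
  have h2 : ∫ s in Set.Ioi (0:ℝ),
      (s ^ (m + 4) * Real.exp (-(α / 4 * s ^ 4 + (1 - α) / 2 * s ^ 2) / D)
        - 2 * (s ^ (m + 2) * Real.exp (-(α / 4 * s ^ 4 + (1 - α) / 2 * s ^ 2) / D))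
        + s ^ m * Real.exp (-(α / 4 * s ^ 4 + (1 - α) / 2 * s ^ 2) / D))
      = ∫ s in Set.Ioi (0:ℝ),
          s ^ m * (s ^ 2 - 1) ^ 2 * Real.exp (-(α / 4 * s ^ 4 + (1 - α) / 2 * s ^ 2) / D) :=
    setIntegral_congr_fun measurableSet_Ioi (fun s _ => by ring)
  rw [← h1, h2, setIntegral_pos_iff_support_of_nonneg_ae]
  · have hsub : Set.Ioi (1:ℝ) ⊆
        (Function.support fun s : ℝ =>
          s ^ m * (s ^ 2 - 1) ^ 2 *
            Real.exp (-(α / 4 * s ^ 4 + (1 - α) / 2 * s ^ 2) / D)) ∩ Set.Ioi 0 := by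
      intro s hs
      have hs1 : (1:ℝ) < s := hs
      have hs0 : (0:ℝ) < s := lt_trans one_pos hs1
      have h21 : (0:ℝ) < (s ^ 2 - 1) ^ 2 := pow_pos (by nlinarith) 2
      exact ⟨ne_of_gt (by positivity), hs0⟩
    calc (0:ENNReal) < volume (Set.Ioi (1:ℝ)) := by simp [Real.volume_Ioi]
      _ ≤ _ := measure_mono hsub
  · refine (ae_restrict_iff' measurableSet_Ioi).2 (ae_of_all _ fun s hs => ?_)
    have hs0 : (0:ℝ) < s := hs
    positivity
  · have hcomb : IntegrableOn (fun s : ℝ =>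
        s ^ (m + 4) * Real.exp (-(α / 4 * s ^ 4 + (1 - α) / 2 * s ^ 2) / D)
          - 2 * (s ^ (m + 2) * Real.exp (-(α / 4 * s ^ 4 + (1 - α) / 2 * s ^ 2) / D))
          + s ^ m * Real.exp (-(α / 4 * s ^ 4 + (1 - α) / 2 * s ^ 2) / D))
        (Set.Ioi (0:ℝ)) := (hi4.sub (hi2.const_mul 2)).add hi0
    exact hcomb.congr_fun (fun s _ => by ring) measurableSet_Ioi

lemma Jident (hα : 0 < α) (hD : 0 < D) (l : ℕ) :
    ((l:ℝ) + 1) * D * J α D l = α * J α D (l + 4) + (1 - α) * J α D (l + 2) := by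
  have hF : ∀ s : ℝ,
      HasDerivAt (fun s : ℝ =>
          D * (s ^ (l + 1) * Real.exp (-(α / 4 * s ^ 4 + (1 - α) / 2 * s ^ 2) / D)))
        ((((l:ℝ) + 1) * D * s ^ l - α * s ^ (l + 4) - (1 - α) * s ^ (l + 2)) *
          Real.exp (-(α / 4 * s ^ 4 + (1 - α) / 2 * s ^ 2) / D)) s := by
    intro s
    have h1 : HasDerivAt (fun s : ℝ => α / 4 * s ^ 4 + (1 - α) / 2 * s ^ 2)
        (α * s ^ 3 + (1 - α) * s) s := by
      have ha := (hasDerivAt_pow 4 s).const_mul (α / 4)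
      have hb := (hasDerivAt_pow 2 s).const_mul ((1 - α) / 2)
      refine (ha.add hb).congr_deriv ?_
      norm_num
      ring
    have hg := (h1.neg.div_const D).exp
    have hp : HasDerivAt (fun s : ℝ => s ^ (l + 1)) (((l:ℝ) + 1) * s ^ l) s := by
      have := hasDerivAt_pow (l + 1) s
      simpa using this
    have hmain := (hp.mul hg).const_mul D
    refine hmain.congr_deriv ?_
    simp only [Pi.neg_apply]
    field_simp
    ring
  have hint : IntegrableOn (fun s : ℝ =>
      (((l:ℝ) + 1) * D * s ^ l - α * s ^ (l + 4) - (1 - α) * s ^ (l + 2)) *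
        Real.exp (-(α / 4 * s ^ 4 + (1 - α) / 2 * s ^ 2) / D)) (Set.Ioi (0:ℝ)) := by
    have hcomb : IntegrableOn (fun s : ℝ =>
        ((l:ℝ) + 1) * D * (s ^ l * Real.exp (-(α / 4 * s ^ 4 + (1 - α) / 2 * s ^ 2) / D))
          - α * (s ^ (l + 4) * Real.exp (-(α / 4 * s ^ 4 + (1 - α) / 2 * s ^ 2) / D))
          - (1 - α) * (s ^ (l + 2) * Real.exp (-(α / 4 * s ^ 4 + (1 - α) / 2 * s ^ 2) / D)))
        (Set.Ioi (0:ℝ)) :=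
      (((integrableJ hα hD l).const_mul (((l:ℝ) + 1) * D)).sub
        ((integrableJ hα hD (l + 4)).const_mul α)).sub
        ((integrableJ hα hD (l + 2)).const_mul (1 - α))
    exact hcomb.congr_fun (fun s _ => by ring) measurableSet_Ioi
  have htend : Tendsto (fun s : ℝ =>
      D * (s ^ (l + 1) * Real.exp (-(α / 4 * s ^ 4 + (1 - α) / 2 * s ^ 2) / D)))
      atTop (𝓝 0) := by
    simpa using (tendstoJ hα hD (l + 1)).const_mul D
  have key := integral_Ioi_of_hasDerivAt_of_tendsto' (fun x _ => hF x) hint htend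
  have hF0 : D * ((0:ℝ) ^ (l + 1) * Real.exp (-(α / 4 * 0 ^ 4 + (1 - α) / 2 * 0 ^ 2) / D))
      = 0 := by simp
  rw [hF0, sub_zero] at key
  have h2 : ∫ s in Set.Ioi (0:ℝ),
      (((l:ℝ) + 1) * D * s ^ l - α * s ^ (l + 4) - (1 - α) * s ^ (l + 2)) *
        Real.exp (-(α / 4 * s ^ 4 + (1 - α) / 2 * s ^ 2) / D)
      = ∫ s in Set.Ioi (0:ℝ),
        (((l:ℝ) + 1) * D * (s ^ l * Real.exp (-(α / 4 * s ^ 4 + (1 - α) / 2 * s ^ 2) / D))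
          - α * (s ^ (l + 4) * Real.exp (-(α / 4 * s ^ 4 + (1 - α) / 2 * s ^ 2) / D))
          - (1 - α) * (s ^ (l + 2) * Real.exp (-(α / 4 * s ^ 4 + (1 - α) / 2 * s ^ 2) / D))) :=
    setIntegral_congr_fun measurableSet_Ioi (fun s _ => by ring)
  have h3 : ∫ s in Set.Ioi (0:ℝ),
      (((l:ℝ) + 1) * D * (s ^ l * Real.exp (-(α / 4 * s ^ 4 + (1 - α) / 2 * s ^ 2) / D))
        - α * (s ^ (l + 4) * Real.exp (-(α / 4 * s ^ 4 + (1 - α) / 2 * s ^ 2) / D))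
        - (1 - α) * (s ^ (l + 2) * Real.exp (-(α / 4 * s ^ 4 + (1 - α) / 2 * s ^ 2) / D)))
      = ((l:ℝ) + 1) * D * J α D l - α * J α D (l + 4) - (1 - α) * J α D (l + 2) := by
    have hiA : IntegrableOn (fun s : ℝ =>
        ((l:ℝ) + 1) * D * (s ^ l * Real.exp (-(α / 4 * s ^ 4 + (1 - α) / 2 * s ^ 2) / D))
          - α * (s ^ (l + 4) * Real.exp (-(α / 4 * s ^ 4 + (1 - α) / 2 * s ^ 2) / D)))
        (Set.Ioi (0:ℝ)) :=
      ((integrableJ hα hD l).const_mul (((l:ℝ) + 1) * D)).sub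
        ((integrableJ hα hD (l + 4)).const_mul α)
    rw [J, J, J,
      MeasureTheory.integral_sub hiA ((integrableJ hα hD (l + 2)).const_mul (1 - α)),
      MeasureTheory.integral_sub ((integrableJ hα hD l).const_mul (((l:ℝ) + 1) * D))
        ((integrableJ hα hD (l + 4)).const_mul α),
      MeasureTheory.integral_const_mul, MeasureTheory.integral_const_mul,
      MeasureTheory.integral_const_mul]
  rw [h2, h3] at key
  linarith

end Stmt2Aux

theorem stmt_2 (d : ℕ) (hd : 1 ≤ d) (α : ℝ) (hα : 0 < α)
    (h : ℝ → ℝ)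
    (hh : ∀ D : ℝ, h D = ∫ s in Set.Ioi (0:ℝ),
      (s ^ (d + 1) - s ^ (d + 3)) *
        Real.exp (-(α / 4 * s ^ 4 + (1 - α) / 2 * s ^ 2) / D))
    (D : ℝ) (hD : 0 < D) (hroot : h D = 0) :
    1 / (d + 2 : ℝ) < D ∧ D < 1 / (d : ℝ) := by
  obtain ⟨e, rfl⟩ : ∃ e, d = e + 1 := ⟨d - 1, by omega⟩
  have hroot' : Stmt2Aux.J α D (e + 2) = Stmt2Aux.J α D (e + 4) := by
    have h0 : (0:ℝ) = ∫ s in Set.Ioi (0:ℝ),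
        (s ^ (e + 2) - s ^ (e + 4)) *
          Real.exp (-(α / 4 * s ^ 4 + (1 - α) / 2 * s ^ 2) / D) := by
      have h0' := hh D
      rw [hroot] at h0'
      exact h0'
    have h1 : ∫ s in Set.Ioi (0:ℝ),
        (s ^ (e + 2) - s ^ (e + 4)) *
          Real.exp (-(α / 4 * s ^ 4 + (1 - α) / 2 * s ^ 2) / D)
        = Stmt2Aux.J α D (e + 2) - Stmt2Aux.J α D (e + 4) := by
      rw [Stmt2Aux.J, Stmt2Aux.J,
        ← MeasureTheory.integral_sub (Stmt2Aux.integrableJ hα hD (e + 2))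
          (Stmt2Aux.integrableJ hα hD (e + 4))]
      exact setIntegral_congr_fun measurableSet_Ioi (fun s _ => by ring)
    rw [h1] at h0
    linarith
  have hc0 := Stmt2Aux.Jconvex hα hD e
  have hc2 := Stmt2Aux.Jconvex hα hD (e + 2)
  have hid0 := Stmt2Aux.Jident hα hD e
  have hid2 := Stmt2Aux.Jident hα hD (e + 2)
  have hp2 := Stmt2Aux.Jpos hα hD (e + 2)
  have hp0 := Stmt2Aux.Jpos hα hD e
  push_cast at hid0 hid2 ⊢
  constructor
  · rw [div_lt_iff₀ (by positivity)]
    have hEB : 0 < Stmt2Aux.J α D (e + 2 + 4) - Stmt2Aux.J α D (e + 2) := by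
      have : e + 2 + 2 = e + 4 := by omega
      rw [this] at hc2
      linarith [hroot']
    nlinarith [mul_pos hα hEB, hroot', hp2]
  · rw [lt_div_iff₀ (by positivity)]
    have hAB : 0 < Stmt2Aux.J α D e - Stmt2Aux.J α D (e + 2) := by
      linarith [hroot', hc0]
    nlinarith [hp0, hAB, hid0, hroot']
end

section
/- For each d ≥ 1 and α > 0, the function h_d(D) = ∫₀^∞ (s^{d+1} - s^{d+3}) e^{-φ_α(s)/D} ds has a unique positive root D_*; moreover h_d is positive on (0, D_*) and negative on (D_*, ∞). -/
open MeasureTheory Real Set Filter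

noncomputable def wfun (m : ℕ) (α D u : ℝ) : ℝ :=
  (u^(m+2) - ((m:ℝ)+1)*u^m) * Real.exp (-(α/4*D * u ^ 4 + (1-α)/2 * u ^ 2))

noncomputable def Gfun (m : ℕ) (α D : ℝ) : ℝ :=
  ∫ u in Set.Ioi (0:ℝ), wfun m α D u

/-- integrability of `u^k * exp(-b u^2)` on `(0,∞)` -/
lemma int_pow_gauss (k : ℕ) {b : ℝ} (hb : 0 < b) :
    IntegrableOn (fun u : ℝ => u ^ k * Real.exp (-b * u ^ 2)) (Set.Ioi 0) := by
  have hrp := integrableOn_rpow_mul_exp_neg_mul_sq hb (s := (k : ℝ)) (lt_of_lt_of_le neg_one_lt_zero (Nat.cast_nonneg k))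
  apply hrp.congr_fun ?_ measurableSet_Ioi
  intro x hx
  simp [Real.rpow_natCast]

/-- integrability of `u^k * exp(-(a u^4 + b u^2))` on `(0,∞)` -/
lemma int_aux (k : ℕ) {a b : ℝ} (hab : 0 < a ∨ (a = 0 ∧ 0 < b)) :
    IntegrableOn (fun u : ℝ => u ^ k * Real.exp (-(a * u ^ 4 + b * u ^ 2))) (Set.Ioi 0) := by
  rcases hab with ha | ⟨rfl, hb⟩
  · set M : ℝ := (1 - b) ^ 2 / (4 * a) with hM
    have hM4 : 4 * a * M = (1 - b) ^ 2 := by rw [hM]; field_simp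
    apply Integrable.mono' (g := fun u : ℝ => Real.exp M * (u ^ k * Real.exp (-1 * u ^ 2)))
      (((int_pow_gauss k (by norm_num : (0:ℝ) < 1))).const_mul _)
      (Continuous.aestronglyMeasurable (by fun_prop)).restrict
    filter_upwards [ae_restrict_mem measurableSet_Ioi] with u hu
    have hu0 : (0:ℝ) < u := hu
    have key : a * u ^ 4 + (b - 1) * u ^ 2 + M ≥ 0 := by
      nlinarith [sq_nonneg (2 * a * u ^ 2 - (1 - b)), ha, sq_nonneg u]
    have : Real.exp (-(a * u ^ 4 + b * u ^ 2)) ≤ Real.exp M * Real.exp (-1 * u ^ 2) := by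
      rw [← Real.exp_add]
      apply Real.exp_le_exp.mpr
      nlinarith
    have h1 : ‖u ^ k * Real.exp (-(a * u ^ 4 + b * u ^ 2))‖
        = u ^ k * Real.exp (-(a * u ^ 4 + b * u ^ 2)) := by
      rw [Real.norm_eq_abs, abs_mul, abs_of_nonneg (by positivity), Real.abs_exp]
    rw [h1]
    calc u ^ k * Real.exp (-(a * u ^ 4 + b * u ^ 2))
        ≤ u ^ k * (Real.exp M * Real.exp (-1 * u ^ 2)) := by
          apply mul_le_mul_of_nonneg_left this (by positivity)
      _ = Real.exp M * (u ^ k * Real.exp (-1 * u ^ 2)) := by ring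
  · apply (int_pow_gauss k hb).congr_fun ?_ measurableSet_Ioi
    intro x hx
    norm_num

/-- `u^k exp(-(a u^4 + b u^2)) → 0` at `+∞`. -/
lemma tendsto_aux (k : ℕ) {a b : ℝ} (hab : 0 < a ∨ (a = 0 ∧ 0 < b)) :
    Tendsto (fun u : ℝ => u ^ k * Real.exp (-(a * u ^ 4 + b * u ^ 2))) atTop (nhds 0) := by
  obtain ⟨ε, M, hε, key⟩ : ∃ ε M : ℝ, 0 < ε ∧ ∀ u : ℝ, ε * u ^ 2 - M ≤ a * u ^ 4 + b * u ^ 2 := by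
    rcases hab with ha | ⟨rfl, hb⟩
    · refine ⟨1, (1 - b) ^ 2 / (4 * a), one_pos, fun u => ?_⟩
      have hM4 : 4 * a * ((1 - b) ^ 2 / (4 * a)) = (1 - b) ^ 2 := by field_simp
      nlinarith [sq_nonneg (2 * a * u ^ 2 - (1 - b)), ha]
    · exact ⟨b, 0, hb, fun u => by nlinarith⟩
  have h2 : Tendsto (fun u : ℝ => Real.exp M * (u ^ k * Real.exp (-u))) atTop (nhds 0) := by
    simpa using (tendsto_pow_mul_exp_neg_atTop_nhds_zero k).const_mul (Real.exp M)
  apply squeeze_zero' ?_ ?_ h2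
  · filter_upwards [eventually_ge_atTop (0:ℝ)] with u hu
    positivity
  · filter_upwards [eventually_ge_atTop (max 1 (1/ε))] with u hu
    have hu1 : (1:ℝ) ≤ u := le_trans (le_max_left _ _) hu
    have hu2 : 1/ε ≤ u := le_trans (le_max_right _ _) hu
    have h3 : u ≤ ε * u ^ 2 := by
      rw [div_le_iff₀ hε] at hu2
      nlinarith
    have h4 : Real.exp (-(a * u ^ 4 + b * u ^ 2)) ≤ Real.exp M * Real.exp (-u) := by
      rw [← Real.exp_add]
      apply Real.exp_le_exp.mpr
      have := key u
      linarith
    calc u ^ k * Real.exp (-(a * u ^ 4 + b * u ^ 2))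
        ≤ u ^ k * (Real.exp M * Real.exp (-u)) :=
          mul_le_mul_of_nonneg_left h4 (by positivity)
      _ = Real.exp M * (u ^ k * Real.exp (-u)) := by ring

lemma ibp (k : ℕ) {a b : ℝ} (hab : 0 < a ∨ (a = 0 ∧ 0 < b)) :
    ∫ u in Set.Ioi (0:ℝ), u ^ (k+1) * (4*a*u^3 + 2*b*u) * Real.exp (-(a * u ^ 4 + b * u ^ 2))
      = (k+1) * ∫ u in Set.Ioi (0:ℝ), u ^ k * Real.exp (-(a * u ^ 4 + b * u ^ 2)) := by
  set E : ℝ → ℝ := fun u => Real.exp (-(a * u ^ 4 + b * u ^ 2)) with hE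
  set F : ℝ → ℝ := fun u => -(u ^ (k+1) * E u) with hF
  set f' : ℝ → ℝ := fun u =>
      u ^ (k+1) * (4*a*u^3 + 2*b*u) * E u - ((k:ℝ)+1) * (u ^ k * E u) with hf'
  have hint4 : IntegrableOn (fun u : ℝ => u ^ (k+4) * E u) (Set.Ioi 0) := int_aux (k+4) hab
  have hint2 : IntegrableOn (fun u : ℝ => u ^ (k+2) * E u) (Set.Ioi 0) := int_aux (k+2) hab
  have hint0 : IntegrableOn (fun u : ℝ => u ^ k * E u) (Set.Ioi 0) := int_aux k hab
  have hintf' : IntegrableOn f' (Set.Ioi 0) := by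
    apply IntegrableOn.congr_fun (((hint4.const_mul (4*a)).add (hint2.const_mul (2*b))).sub
      (hint0.const_mul ((k:ℝ)+1))) ?_ measurableSet_Ioi
    intro u hu
    simp only [hf', Pi.sub_apply, Pi.add_apply]
    ring
  have hderiv : ∀ u : ℝ, HasDerivAt F (f' u) u := by
    intro u
    have h1 : HasDerivAt (fun u : ℝ => u ^ (k+1)) (((k:ℝ)+1) * u ^ k) u := by
      simpa using hasDerivAt_pow (k+1) u
    have h2 : HasDerivAt (fun u : ℝ => -(a * u ^ 4 + b * u ^ 2))
        (-(a * (4 * u ^ 3) + b * (2 * u))) u := by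
      have := ((hasDerivAt_pow 4 u).const_mul a).add ((hasDerivAt_pow 2 u).const_mul b)
      exact this.neg.congr_deriv (by norm_num)
    have h3 : HasDerivAt E (E u * (-(a * (4 * u ^ 3) + b * (2 * u)))) u := by
      simpa [hE] using h2.exp
    have := (h1.mul h3).neg
    refine this.congr_deriv ?_
    simp only [hf', hE]
    ring
  have hcont : ContinuousWithinAt F (Set.Ici 0) 0 :=
    ((hderiv 0).continuousAt).continuousWithinAt
  have htendsF : Tendsto F atTop (nhds 0) := by
    simpa only [neg_zero] using (tendsto_aux (k+1) hab).neg
  have key : ∫ u in Set.Ioi (0:ℝ), f' u = 0 - F 0 :=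
    integral_Ioi_of_hasDerivAt_of_tendsto hcont (fun x _ => hderiv x) hintf' htendsF
  have hF0 : F 0 = 0 := by simp [hF]
  rw [hF0, sub_zero] at key
  have hintg1 : IntegrableOn (fun u : ℝ => u ^ (k+1) * (4*a*u^3 + 2*b*u) * E u) (Set.Ioi 0) := by
    apply IntegrableOn.congr_fun ((hint4.const_mul (4*a)).add (hint2.const_mul (2*b)))
      ?_ measurableSet_Ioi
    intro u hu
    simp only [Pi.add_apply]
    ring
  have hsub : ∫ u in Set.Ioi (0:ℝ), f' u
      = (∫ u in Set.Ioi (0:ℝ), u ^ (k+1) * (4*a*u^3 + 2*b*u) * E u)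
        - ((k:ℝ)+1) * ∫ u in Set.Ioi (0:ℝ), u ^ k * E u := by
    rw [hf']
    rw [integral_sub hintg1 (hint0.const_mul _), integral_const_mul]
  rw [hsub] at key
  linarith

lemma main_identity (m : ℕ) {α D : ℝ} (hα : 0 < α) (hD : 0 < D) :
    (∫ s in Set.Ioi (0:ℝ), (s^(m+2) - s^(m+4)) *
        Real.exp (-(α/4 * s^4 + (1-α)/2 * s^2) / D))
      = (Real.sqrt D)^(m+3)/α * Gfun m α D := by
  have hD0 : D ≠ 0 := hD.ne'
  set g : ℝ → ℝ := fun s => (s^(m+2) - s^(m+4)) *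
      Real.exp (-(α/(4*D) * s ^ 4 + (1-α)/(2*D) * s ^ 2)) with hg
  have step0 : (∫ s in Set.Ioi (0:ℝ), (s^(m+2) - s^(m+4)) *
        Real.exp (-(α/4 * s^4 + (1-α)/2 * s^2) / D)) = ∫ s in Set.Ioi (0:ℝ), g s := by
    congr 1
    funext s
    have : -(α/4 * s^4 + (1-α)/2 * s^2) / D = -(α/(4*D) * s ^ 4 + (1-α)/(2*D) * s ^ 2) := by
      field_simp
    rw [hg, this]
  have hs : 0 < Real.sqrt D := Real.sqrt_pos.mpr hD
  have hDD : Real.sqrt D ^ 2 = D := Real.sq_sqrt hD.le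
  have h4 : Real.sqrt D ^ 4 = D ^ 2 := by
    rw [show 4 = 2*2 from rfl, pow_mul, hDD]
  have hsub := integral_comp_mul_left_Ioi g 0 hs
  simp only [mul_zero, smul_eq_mul] at hsub
  have step1 : ∫ s in Set.Ioi (0:ℝ), g s
      = Real.sqrt D * ∫ u in Set.Ioi (0:ℝ), g (Real.sqrt D * u) := by
    rw [hsub]
    field_simp
  have step2 : ∀ u : ℝ, g (Real.sqrt D * u) = (Real.sqrt D)^(m+2) *
      ((u^(m+2) - D*u^(m+4)) * Real.exp (-(α/4*D * u ^ 4 + (1-α)/2 * u ^ 2))) := by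
    intro u
    have hpow : (Real.sqrt D)^(m+4) = (Real.sqrt D)^(m+2) * D := by
      rw [show m+4 = (m+2)+2 from by omega, pow_add, hDD]
    have hexp : -(α/(4*D) * (Real.sqrt D * u) ^ 4 + (1-α)/(2*D) * (Real.sqrt D * u) ^ 2)
        = -(α/4*D * u ^ 4 + (1-α)/2 * u ^ 2) := by
      simp only [mul_pow, h4, hDD]
      field_simp
    rw [hg]
    simp only []
    rw [hexp]
    simp only [mul_pow, hpow]
    ring
  have step2' : ∫ u in Set.Ioi (0:ℝ), g (Real.sqrt D * u)
      = (Real.sqrt D)^(m+2) * ∫ u in Set.Ioi (0:ℝ),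
          (u^(m+2) - D*u^(m+4)) * Real.exp (-(α/4*D * u ^ 4 + (1-α)/2 * u ^ 2)) := by
    rw [show (fun u : ℝ => g (Real.sqrt D * u)) = fun u : ℝ => (Real.sqrt D)^(m+2) *
      ((u^(m+2) - D*u^(m+4)) * Real.exp (-(α/4*D * u ^ 4 + (1-α)/2 * u ^ 2)))
      from funext step2, integral_const_mul]
  -- now the IBP step
  have hpos : 0 < α/4*D := by positivity
  have hibp := ibp m (a := α/4*D) (b := (1-α)/2) (Or.inl hpos)
  set E : ℝ → ℝ := fun u => Real.exp (-(α/4*D * u ^ 4 + (1-α)/2 * u ^ 2)) with hE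
  have h2i := int_aux (m+2) (a := α/4*D) (b := (1-α)/2) (Or.inl hpos)
  have h4i := int_aux (m+4) (a := α/4*D) (b := (1-α)/2) (Or.inl hpos)
  have h0i := int_aux m (a := α/4*D) (b := (1-α)/2) (Or.inl hpos)
  set J4 := ∫ u in Set.Ioi (0:ℝ), u^(m+4) * E u with hJ4
  set J2 := ∫ u in Set.Ioi (0:ℝ), u^(m+2) * E u with hJ2
  set J0 := ∫ u in Set.Ioi (0:ℝ), u^m * E u with hJ0
  have key : α*D*J4 + (1-α)*J2 = ((m:ℝ)+1) * J0 := by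
    have e1 : (∫ u in Set.Ioi (0:ℝ),
        u ^ (m+1) * (4*(α/4*D)*u^3 + 2*((1-α)/2)*u) * E u)
        = α*D*J4 + (1-α)*J2 := by
      rw [hJ4, hJ2, ← integral_const_mul, ← integral_const_mul,
        ← integral_add ((h4i).const_mul _) ((h2i).const_mul _)]
      congr 1
      funext u
      ring
    rw [← e1, hibp]
  have step3 : ∫ u in Set.Ioi (0:ℝ),
      (u^(m+2) - D*u^(m+4)) * E u = J2 - D * J4 := by
    rw [hJ2, hJ4, ← integral_const_mul, ← integral_sub h2i ((h4i).const_mul _)]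
    congr 1
    funext u
    ring
  have hGf : Gfun m α D = J2 - ((m:ℝ)+1) * J0 := by
    rw [Gfun, hJ2, hJ0, ← integral_const_mul, ← integral_sub h2i ((h0i).const_mul _)]
    congr 1
    funext u
    simp only [wfun]
    ring
  rw [step0, step1, step2', step3, hGf]
  have hα0 : α ≠ 0 := hα.ne'
  rw [div_mul_eq_mul_div, eq_div_iff hα0]
  linear_combination (-(Real.sqrt D)^(m+3)) * key

lemma int_wfull (m : ℕ) {α D : ℝ} (hα : 0 < α) (hD : 0 < D) :
    IntegrableOn (wfun m α D) (Set.Ioi 0) := by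
  have h2 := int_aux (m+2) (a := α/4*D) (b := (1-α)/2) (Or.inl (by positivity))
  have h0 := int_aux m (a := α/4*D) (b := (1-α)/2) (Or.inl (by positivity))
  apply IntegrableOn.congr_fun (h2.sub (h0.const_mul ((m:ℝ)+1))) ?_ measurableSet_Ioi
  intro u hu
  simp only [Pi.sub_apply, wfun]
  ring

lemma G_mono (m : ℕ) {α D₁ D₂ : ℝ} (hα : 0 < α) (h1 : 0 < D₁) (h12 : D₁ < D₂)
    (hG1 : Gfun m α D₁ ≤ 0) : Gfun m α D₂ < 0 := by
  have h2 : 0 < D₂ := h1.trans h12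
  set c : ℝ := α/4 * (D₂ - D₁) with hc
  have hcpos : 0 < c := mul_pos (by positivity) (sub_pos.mpr h12)
  set m₀ : ℝ := Real.exp (-(c * ((m:ℝ)+1)^2)) with hm₀
  have hm₀pos : 0 < m₀ := Real.exp_pos _
  have hm1 : (0:ℝ) ≤ (m:ℝ) := Nat.cast_nonneg m
  have hfact : ∀ u : ℝ, m₀ * wfun m α D₁ u - wfun m α D₂ u
      = (u^m * Real.exp (-(α/4*D₁ * u ^ 4 + (1-α)/2 * u ^ 2)))
        * ((u^2 - ((m:ℝ)+1)) * (m₀ - Real.exp (-(c*u^4)))) := by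
    intro u
    have hsplit : wfun m α D₂ u = wfun m α D₁ u * Real.exp (-(c * u^4)) := by
      simp only [wfun, mul_assoc, ← Real.exp_add]
      congr 2
      rw [hc]; ring
    rw [hsplit]
    simp only [wfun]
    ring
  have hpt : ∀ u ∈ Set.Ioi (0:ℝ), 0 ≤ m₀ * wfun m α D₁ u - wfun m α D₂ u := by
    intro u hu
    have hu0 : (0:ℝ) < u := hu
    rw [hfact u]
    apply mul_nonneg (by positivity)
    rcases le_total (u^2) ((m:ℝ)+1) with hcase | hcase
    · have h4 : u^4 ≤ ((m:ℝ)+1)^2 := by nlinarith [sq_nonneg u]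
      have hE : m₀ ≤ Real.exp (-(c*u^4)) := by
        rw [hm₀]; apply Real.exp_le_exp.mpr; nlinarith
      nlinarith
    · have h4 : ((m:ℝ)+1)^2 ≤ u^4 := by nlinarith [sq_nonneg u]
      have hE : Real.exp (-(c*u^4)) ≤ m₀ := by
        rw [hm₀]; apply Real.exp_le_exp.mpr; nlinarith
      nlinarith
  have hstrict : ∀ u ∈ Set.Ioo (0:ℝ) 1, 0 < m₀ * wfun m α D₁ u - wfun m α D₂ u := by
    intro u hu
    obtain ⟨hu0, hu1⟩ := hu
    rw [hfact u]
    apply mul_pos (by positivity)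
    have hu2 : u^2 < 1 := by nlinarith
    have hu4 : u^4 < 1 := by nlinarith [sq_nonneg u, pow_pos hu0 2]
    have hA : u^2 - ((m:ℝ)+1) < 0 := by linarith
    have hEgt : m₀ < Real.exp (-(c*u^4)) := by
      rw [hm₀]
      apply Real.exp_lt_exp.mpr
      have hsq : (1:ℝ) ≤ ((m:ℝ)+1)^2 := by nlinarith
      nlinarith [mul_pos hcpos (show (0:ℝ) < ((m:ℝ)+1)^2 - u^4 by linarith)]
    nlinarith
  have hi1 : IntegrableOn (wfun m α D₁) (Set.Ioi 0) := int_wfull m hα h1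
  have hi2 : IntegrableOn (wfun m α D₂) (Set.Ioi 0) := int_wfull m hα h2
  have hiF : IntegrableOn (fun u => m₀ * wfun m α D₁ u - wfun m α D₂ u) (Set.Ioi 0) :=
    (hi1.const_mul m₀).sub hi2
  have hpos : 0 < ∫ u in Set.Ioi (0:ℝ), (m₀ * wfun m α D₁ u - wfun m α D₂ u) := by
    rw [setIntegral_pos_iff_support_of_nonneg_ae ?_ hiF]
    · apply lt_of_lt_of_le ?_ (measure_mono (show Set.Ioo (0:ℝ) 1 ⊆ _ from ?_))
      · rw [Real.volume_Ioo]
        norm_num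
      · intro u hu
        exact ⟨(hstrict u hu).ne', hu.1⟩
    · filter_upwards [ae_restrict_mem measurableSet_Ioi] with u hu
      exact hpt u hu
  have heq : ∫ u in Set.Ioi (0:ℝ), (m₀ * wfun m α D₁ u - wfun m α D₂ u)
      = m₀ * Gfun m α D₁ - Gfun m α D₂ := by
    rw [integral_sub (hi1.const_mul m₀) hi2, integral_const_mul]
    rfl
  rw [heq] at hpos
  nlinarith

lemma G_contAt (m : ℕ) {α D₀ : ℝ} (hα : 0 < α) (hD : 0 < D₀) :
    ContinuousAt (Gfun m α) D₀ := by
  have hic : ∀ D : ℝ, Continuous (wfun m α D) := by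
    intro D
    apply Continuous.mul (by continuity)
    exact Real.continuous_exp.comp (by continuity)
  apply continuousAt_of_dominated (bound := fun u : ℝ => (u^(m+2) + ((m:ℝ)+1)*u^m) *
      Real.exp (-(α/4*(D₀/2) * u ^ 4 + (1-α)/2 * u ^ 2)))
  · exact Eventually.of_forall fun D => ((hic D).aestronglyMeasurable).restrict
  · filter_upwards [Ioi_mem_nhds (half_lt_self hD)] with D hD2
    filter_upwards [ae_restrict_mem measurableSet_Ioi] with u hu
    have hu0 : (0:ℝ) < u := hu
    have hm1 : (0:ℝ) ≤ (m:ℝ) := Nat.cast_nonneg m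
    rw [wfun, Real.norm_eq_abs, abs_mul, Real.abs_exp]
    have habs : |u^(m+2) - ((m:ℝ)+1)*u^m| ≤ u^(m+2) + ((m:ℝ)+1)*u^m := by
      have h := abs_sub (u^(m+2)) (((m:ℝ)+1)*u^m)
      rw [abs_of_nonneg (show (0:ℝ) ≤ u^(m+2) by positivity),
        abs_of_nonneg (show (0:ℝ) ≤ ((m:ℝ)+1)*u^m by positivity)] at h
      exact h
    have hexp : Real.exp (-(α/4*D * u ^ 4 + (1-α)/2 * u ^ 2))
        ≤ Real.exp (-(α/4*(D₀/2) * u ^ 4 + (1-α)/2 * u ^ 2)) := by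
      apply Real.exp_le_exp.mpr
      have : α/4*(D₀/2) * u ^ 4 ≤ α/4*D * u ^ 4 := by
        apply mul_le_mul_of_nonneg_right ?_ (by positivity)
        have : D₀/2 ≤ D := le_of_lt hD2
        nlinarith
      linarith
    exact mul_le_mul habs hexp (Real.exp_pos _).le (by positivity)
  · have h2 := int_aux (m+2) (a := α/4*(D₀/2)) (b := (1-α)/2) (Or.inl (by positivity))
    have h0 := int_aux m (a := α/4*(D₀/2)) (b := (1-α)/2) (Or.inl (by positivity))
    apply IntegrableOn.congr_fun (h2.add (h0.const_mul ((m:ℝ)+1))) ?_ measurableSet_Ioi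
    intro u hu
    simp only [Pi.add_apply]
    ring
  · apply Eventually.of_forall
    intro u
    apply Continuous.continuousAt
    apply Continuous.mul continuous_const
    exact Real.continuous_exp.comp (by continuity)

lemma phi_bound_small {α : ℝ} (hα : 0 < α) {s : ℝ} (h0 : 0 ≤ s) (h1 : s ≤ 1) :
    -(α/4 * s^4 + (1-α)/2 * s^2) ≤ α/4 + |1-α|/2 := by
  have hs2 : s^2 ≤ 1 := pow_le_one₀ h0 h1
  have p1 : 0 ≤ ((1-α)+|1-α|)*s^2 := mul_nonneg (by linarith [neg_abs_le (1-α)]) (sq_nonneg s)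
  have p2 : 0 ≤ |1-α| *(1-s^2) := mul_nonneg (abs_nonneg _) (by linarith)
  have p3 : 0 ≤ α/4 * s^4 := by positivity
  nlinarith
lemma phi_bound_big {α T s : ℝ} (hα : 0 < α) (h0 : 0 ≤ s) (hT : s ≤ T) :
    α/4 * s^4 + (1-α)/2 * s^2 ≤ α/4*T^4 + |1-α|/2*T^2 + 1 := by
  have h4 : s^4 ≤ T^4 := pow_le_pow_left₀ h0 hT 4
  have h2 : s^2 ≤ T^2 := pow_le_pow_left₀ h0 hT 2
  have habs : (1-α)*s^2 ≤ |1-α| *T^2 := by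
    rcases le_total 0 (1-α) with hc | hc
    · calc (1-α)*s^2 ≤ (1-α)*T^2 := mul_le_mul_of_nonneg_left h2 hc
        _ ≤ |1-α| * T^2 := mul_le_mul_of_nonneg_right (le_abs_self _) (by nlinarith)
    · calc (1-α)*s^2 ≤ 0 := mul_nonpos_of_nonpos_of_nonneg hc (sq_nonneg s)
        _ ≤ |1-α| * T^2 := mul_nonneg (abs_nonneg _) (by nlinarith)
  nlinarith [sq_nonneg T, abs_nonneg (1-α), mul_nonneg hα.le (sub_nonneg.mpr h4)]

lemma h_neg (m : ℕ) {α : ℝ} (hα : 0 < α) :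
    ∃ D : ℝ, 0 < D ∧ (∫ s in Set.Ioi (0:ℝ), (s^(m+2) - s^(m+4)) *
      Real.exp (-(α/4 * s^4 + (1-α)/2 * s^2) / D)) < 0 := by
  obtain ⟨M₁, hM₁0, hM₁b⟩ : ∃ M₁ : ℝ, 0 ≤ M₁ ∧ ∀ s : ℝ, 0 ≤ s → s ≤ 1 →
      -(α/4 * s^4 + (1-α)/2 * s^2) ≤ M₁ :=
    ⟨α/4 + |1-α|/2, by positivity, fun s h0 h1 => phi_bound_small hα h0 h1⟩
  obtain ⟨T, hT3, hTb⟩ : ∃ T : ℝ, 3 ≤ T ∧ Real.exp M₁ + 1 ≤ (T - 2) * Real.exp (-1) := by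
    refine ⟨3 + Real.exp 1 * (Real.exp M₁ + 1), by nlinarith [Real.exp_pos (1:ℝ), Real.exp_pos M₁], ?_⟩
    have he1 : Real.exp (-1) * Real.exp 1 = 1 := by rw [← Real.exp_add]; norm_num
    have h2 : (3 + Real.exp 1 * (Real.exp M₁ + 1) - 2) * Real.exp (-1)
        = Real.exp (-1) + (Real.exp (-1) * Real.exp 1) * (Real.exp M₁ + 1) := by ring
    rw [he1, one_mul] at h2
    rw [h2]
    linarith [Real.exp_pos (-1:ℝ)]
  obtain ⟨D, hD1, hDφ⟩ : ∃ D : ℝ, 1 ≤ D ∧ ∀ s : ℝ, 0 ≤ s → s ≤ T →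
      α/4 * s^4 + (1-α)/2 * s^2 ≤ D :=
    ⟨max 1 (α/4*T^4 + |1-α|/2*T^2 + 1), le_max_left _ _,
      fun s h0 hT => le_trans (phi_bound_big hα h0 hT) (le_max_right _ _)⟩
  have hD0 : 0 < D := lt_of_lt_of_le one_pos hD1
  refine ⟨D, hD0, ?_⟩
  set f : ℝ → ℝ := fun s => (s^(m+2) - s^(m+4)) *
      Real.exp (-(α/4 * s^4 + (1-α)/2 * s^2) / D) with hf
  have hfi : IntegrableOn f (Set.Ioi 0) := by
    have h2 := int_aux (m+2) (a := α/(4*D)) (b := (1-α)/(2*D)) (Or.inl (by positivity))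
    have h4 := int_aux (m+4) (a := α/(4*D)) (b := (1-α)/(2*D)) (Or.inl (by positivity))
    apply IntegrableOn.congr_fun (h2.sub h4) ?_ measurableSet_Ioi
    intro s hs
    have hexp : -(α/4 * s^4 + (1-α)/2 * s^2) / D
        = -(α/(4*D) * s ^ 4 + (1-α)/(2*D) * s ^ 2) := by
      field_simp
    simp only [Pi.sub_apply, hf, hexp]
    ring
  have hneg : ∀ s ∈ Set.Ici (1:ℝ), f s ≤ 0 := by
    intro s hs
    have hs1 : (1:ℝ) ≤ s := hs
    have hq : s^(m+2) ≤ s^(m+4) := pow_le_pow_right₀ hs1 (by omega)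
    rw [hf]
    exact mul_nonpos_of_nonpos_of_nonneg (by linarith) (Real.exp_pos _).le
  have hb1 : ∫ s in Set.Ioo (0:ℝ) 1, f s ≤ Real.exp M₁ := by
    have hmono : ∫ s in Set.Ioo (0:ℝ) 1, f s
        ≤ ∫ _ in Set.Ioo (0:ℝ) 1, Real.exp M₁ := by
      apply setIntegral_mono_on (hfi.mono_set Set.Ioo_subset_Ioi_self)
        (integrableOn_const (by simp [Real.volume_Ioo])) measurableSet_Ioo
      intro s hs
      obtain ⟨hs0, hs1⟩ := hs
      have hq1 : s^(m+2) - s^(m+4) ≤ 1 := by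
        have h1 : s^(m+2) ≤ 1 := pow_le_one₀ hs0.le hs1.le
        have h2 : 0 ≤ s^(m+4) := by positivity
        linarith
      have hexp : Real.exp (-(α/4 * s^4 + (1-α)/2 * s^2) / D) ≤ Real.exp M₁ := by
        apply Real.exp_le_exp.mpr
        rw [div_le_iff₀ hD0]
        have := hM₁b s hs0.le hs1.le
        nlinarith [mul_le_mul_of_nonneg_left hD1 hM₁0]
      rw [hf]
      calc (s^(m+2) - s^(m+4)) * Real.exp (-(α/4 * s^4 + (1-α)/2 * s^2) / D)
          ≤ 1 * Real.exp M₁ := mul_le_mul hq1 hexp (Real.exp_pos _).le one_pos.le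
        _ = Real.exp M₁ := one_mul _
    calc ∫ s in Set.Ioo (0:ℝ) 1, f s ≤ ∫ _ in Set.Ioo (0:ℝ) 1, Real.exp M₁ := hmono
      _ = Real.exp M₁ := by simp [Real.volume_Ioo]
  have hb3 : ∫ s in Set.Icc (2:ℝ) T, f s ≤ -(Real.exp M₁ + 1) := by
    have hmono : ∫ s in Set.Icc (2:ℝ) T, f s
        ≤ ∫ _ in Set.Icc (2:ℝ) T, (-Real.exp (-1)) := by
      apply setIntegral_mono_on
        (hfi.mono_set (fun x hx => lt_of_lt_of_le two_pos hx.1))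
        (integrableOn_const (by simp [Real.volume_Icc])) measurableSet_Icc
      intro s hs
      obtain ⟨hs2, hsT⟩ := hs
      have hs1 : (1:ℝ) ≤ s := by linarith
      have hs0 : (0:ℝ) ≤ s := by linarith
      have hqle : s^(m+2) - s^(m+4) ≤ -1 := by
        have h1 : (1:ℝ) ≤ s^(m+2) := by
          have := pow_le_pow_left₀ (zero_le_one) hs1 (m+2)
          simpa using this
        have h2 : s^(m+2) * 3 ≤ s^(m+2) * (s^2 - 1) := by
          apply mul_le_mul_of_nonneg_left ?_ (by positivity)
          nlinarith
        have h3 : s^(m+2)*(s^2-1) = s^(m+4) - s^(m+2) := by ring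
        nlinarith
      have hexp : Real.exp (-1) ≤ Real.exp (-(α/4 * s^4 + (1-α)/2 * s^2) / D) := by
        apply Real.exp_le_exp.mpr
        rw [le_div_iff₀ hD0]
        have := hDφ s hs0 hsT
        linarith
      rw [hf]
      have hE0 : 0 < Real.exp (-(α/4 * s^4 + (1-α)/2 * s^2) / D) := Real.exp_pos _
      nlinarith
    have hvol : ∫ _ in Set.Icc (2:ℝ) T, (-Real.exp (-1)) = -((T - 2) * Real.exp (-1)) := by
      rw [setIntegral_const]
      simp only [measureReal_def, Real.volume_Icc, smul_eq_mul]
      rw [ENNReal.toReal_ofReal (by linarith)]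
      ring
    rw [hvol] at hmono
    linarith
  have hb2 : ∫ s in Set.Ici (1:ℝ), f s ≤ ∫ s in Set.Icc (2:ℝ) T, f s := by
    have hIci : IntegrableOn (fun s => -f s) (Set.Ici 1) :=
      (hfi.mono_set (fun x (hx : (1:ℝ) ≤ x) => show (0:ℝ) < x from lt_of_lt_of_le one_pos hx)).neg
    have hsub : Set.Icc (2:ℝ) T ⊆ Set.Ici (1:ℝ) := fun x hx => le_trans (by norm_num) hx.1
    have := setIntegral_mono_set hIci ?_ (HasSubset.Subset.eventuallyLE hsub)
    · rw [integral_neg, integral_neg] at this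
      linarith
    · filter_upwards [ae_restrict_mem measurableSet_Ici] with s hs
      simp only [Pi.neg_apply, Pi.zero_apply]
      linarith [hneg s hs]
  have hsplit : ∫ s in Set.Ioi (0:ℝ), f s
      = (∫ s in Set.Ioo (0:ℝ) 1, f s) + ∫ s in Set.Ici (1:ℝ), f s := by
    rw [← Set.Ioo_union_Ici_eq_Ioi (show (0:ℝ) < 1 by norm_num)]
    apply setIntegral_union ?_ measurableSet_Ici
      (hfi.mono_set Set.Ioo_subset_Ioi_self)
      (hfi.mono_set (fun x hx => lt_of_lt_of_le one_pos hx))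
    rw [Set.disjoint_left]
    intro x hx hx2
    exact absurd hx2 (not_le.mpr hx.2)
  have hfin : ∫ s in Set.Ioi (0:ℝ), f s < 0 := by
    rw [hsplit]
    linarith
  exact hfin

lemma exp_lb (q Q E x : ℝ) (hE : 0 < E) (hx : 0 ≤ x) (h1 : -Q ≤ q) (h2 : q ≤ Q) :
    q*E - x*(Q*E) ≤ q*E*Real.exp (-x) := by
  have ha : 1 - x ≤ Real.exp (-x) := by have := Real.add_one_le_exp (-x); linarith
  have hb : Real.exp (-x) ≤ 1 := by
    have := Real.exp_le_exp.mpr (neg_nonpos.mpr hx)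
    simpa using this
  rcases le_or_gt 0 q with hq0 | hq0
  · have k1 : q*E*(1-x) ≤ q*E*Real.exp (-x) :=
      mul_le_mul_of_nonneg_left ha (mul_nonneg hq0 hE.le)
    have k2 : 0 ≤ x*((Q - q)*E) := mul_nonneg hx (mul_nonneg (by linarith) hE.le)
    nlinarith
  · have k1 : q*E*1 ≤ q*E*Real.exp (-x) :=
      mul_le_mul_of_nonpos_left hb (by nlinarith)
    have k2 : 0 ≤ x*(Q*E) := mul_nonneg hx (mul_nonneg (by linarith) hE.le)
    nlinarith

set_option maxHeartbeats 1000000 in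
lemma G_pos (m : ℕ) {α : ℝ} (hα : 0 < α) : ∃ D : ℝ, 0 < D ∧ 0 < Gfun m α D := by
  have hm0 : (0:ℝ) ≤ (m:ℝ) := Nat.cast_nonneg m
  rcases lt_or_ge α 1 with hα1 | hα1
  -- case α < 1 : Gaussian comparison
  · have hb : 0 < (1-α)/2 := by linarith
    set E0 : ℝ → ℝ := fun u => Real.exp (-((0:ℝ) * u ^ 4 + (1-α)/2 * u ^ 2)) with hE0
    have hE0pos : ∀ u, 0 < E0 u := fun u => Real.exp_pos _
    have hi : ∀ k : ℕ, IntegrableOn (fun u : ℝ => u ^ k * E0 u) (Set.Ioi 0) :=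
      fun k => int_aux k (Or.inr ⟨rfl, hb⟩)
    set I2 := ∫ u in Set.Ioi (0:ℝ), u^(m+2) * E0 u with hI2
    set I0 := ∫ u in Set.Ioi (0:ℝ), u^m * E0 u with hI0
    -- Gaussian moment identity
    have hibp := ibp m (a := (0:ℝ)) (b := (1-α)/2) (Or.inr ⟨rfl, hb⟩)
    have hlhs : (∫ u in Set.Ioi (0:ℝ), u ^ (m+1) * (4*(0:ℝ)*u^3 + 2*((1-α)/2)*u) * E0 u)
        = (1-α) * I2 := by
      rw [hI2, ← integral_const_mul]
      congr 1
      funext u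
      ring
    rw [hlhs] at hibp
    -- value of G at "0"
    set v0 : ℝ → ℝ := fun u => (u^(m+2) - ((m:ℝ)+1)*u^m) * E0 u with hv0
    have hiv0 : IntegrableOn v0 (Set.Ioi 0) := by
      apply IntegrableOn.congr_fun ((hi (m+2)).sub ((hi m).const_mul ((m:ℝ)+1)))
        ?_ measurableSet_Ioi
      intro u hu
      simp only [Pi.sub_apply, hv0]
      ring
    set G0 := ∫ u in Set.Ioi (0:ℝ), v0 u with hG0
    have hG0eq : G0 = I2 - ((m:ℝ)+1) * I0 := by
      rw [hG0, hI2, hI0, ← integral_const_mul, ← integral_sub (hi (m+2)) ((hi m).const_mul _)]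
      congr 1
      funext u
      simp only [hv0]
      ring
    have hI2pos : 0 < I2 := by
      rw [hI2, setIntegral_pos_iff_support_of_nonneg_ae ?_ (hi (m+2))]
      · apply lt_of_lt_of_le ?_ (measure_mono (show Set.Ioi (0:ℝ) ⊆ _ from ?_))
        · rw [Real.volume_Ioi]; norm_num
        · intro u hu
          have hu0 : (0:ℝ) < u := hu
          exact ⟨ne_of_gt (mul_pos (pow_pos hu0 _) (hE0pos u)), hu⟩
      · filter_upwards [ae_restrict_mem measurableSet_Ioi] with u hu
        have hu0 : (0:ℝ) < u := hu
        positivity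
    have hG0pos : 0 < G0 := by
      have : G0 = α * I2 := by
        rw [hG0eq]
        linarith [hibp]
      rw [this]
      positivity
    -- the perturbation bound
    set Bnd : ℝ → ℝ := fun u => (u^(m+6) + ((m:ℝ)+1)*u^(m+4)) * E0 u with hBnd
    have hiB : IntegrableOn Bnd (Set.Ioi 0) := by
      apply IntegrableOn.congr_fun ((hi (m+6)).add ((hi (m+4)).const_mul ((m:ℝ)+1)))
        ?_ measurableSet_Ioi
      intro u hu
      simp only [Pi.add_apply, hBnd]
      ring
    set C4 := ∫ u in Set.Ioi (0:ℝ), Bnd u with hC4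
    have hC4nn : 0 ≤ C4 := by
      apply setIntegral_nonneg measurableSet_Ioi
      intro u hu
      have hu0 : (0:ℝ) < u := hu
      have := (hE0pos u).le
      rw [hBnd]
      positivity
    set D : ℝ := G0 / (α/4*C4 + 1) with hD
    have hden : 0 < α/4*C4 + 1 := by positivity
    have hD0 : 0 < D := div_pos hG0pos hden
    refine ⟨D, hD0, ?_⟩
    have hptw : ∀ u ∈ Set.Ioi (0:ℝ), v0 u - α/4*D*Bnd u ≤ wfun m α D u := by
      intro u hu
      have hu0 : (0:ℝ) < u := hu
      have hq1 : -(u^(m+2) + ((m:ℝ)+1)*u^m) ≤ u^(m+2) - ((m:ℝ)+1)*u^m := by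
        nlinarith [pow_pos hu0 (m+2), mul_nonneg (by linarith : (0:ℝ) ≤ (m:ℝ)+1) (pow_pos hu0 m).le]
      have hq2 : u^(m+2) - ((m:ℝ)+1)*u^m ≤ u^(m+2) + ((m:ℝ)+1)*u^m := by
        nlinarith [mul_nonneg (by linarith : (0:ℝ) ≤ (m:ℝ)+1) (pow_pos hu0 m).le]
      have hx : 0 ≤ α/4*D*u^4 := by positivity
      have key := exp_lb (u^(m+2) - ((m:ℝ)+1)*u^m) (u^(m+2) + ((m:ℝ)+1)*u^m)
        (E0 u) (α/4*D*u^4) (hE0pos u) hx hq1 hq2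
      have hsplit : wfun m α D u
          = (u^(m+2) - ((m:ℝ)+1)*u^m) * E0 u * Real.exp (-(α/4*D*u^4)) := by
        rw [wfun]
        have hee : Real.exp (-(α/4*D * u ^ 4 + (1-α)/2 * u ^ 2))
            = E0 u * Real.exp (-(α/4*D*u^4)) := by
          simp only [hE0, ← Real.exp_add]
          congr 1
          ring
        rw [hee]; ring
      rw [hsplit]
      have hre : v0 u - α/4*D*Bnd u
          = (u^(m+2) - ((m:ℝ)+1)*u^m) * E0 u
            - (α/4*D*u^4) * ((u^(m+2) + ((m:ℝ)+1)*u^m) * E0 u) := by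
        rw [hv0, hBnd]
        ring
      rw [hre]
      exact key
    have hmono : G0 - α/4*D*C4 ≤ Gfun m α D := by
      have h1 : ∫ u in Set.Ioi (0:ℝ), (v0 u - α/4*D*Bnd u) ≤ Gfun m α D :=
        setIntegral_mono_on (hiv0.sub (hiB.const_mul _)) (int_wfull m hα hD0)
          measurableSet_Ioi hptw
      rw [integral_sub hiv0 (hiB.const_mul _), integral_const_mul] at h1
      exact h1
    have hfinal : 0 < G0 - α/4*D*C4 := by
      have hDval : D * (α/4*C4 + 1) = G0 := by
        rw [hD]
        field_simp
      nlinarith [hD0, hC4nn]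
    linarith
  -- case 1 ≤ α
  · obtain ⟨s₀, hs₀pos, hs₀sq⟩ : ∃ s : ℝ, 0 < s ∧ s^2 = (m:ℝ)+1 :=
      ⟨Real.sqrt ((m:ℝ)+1), Real.sqrt_pos.mpr (by positivity), Real.sq_sqrt (by positivity)⟩
    have hs₀T₁ : s₀ ≤ (m:ℝ)+2 := by
      nlinarith [sq_nonneg (s₀ - ((m:ℝ)+2))]
    set v : ℝ → ℝ := fun u => (u^(m+2) - ((m:ℝ)+1)*u^m) * Real.exp (-((1-α)/2 * u^2)) with hv
    have hvcont : Continuous v := by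
      apply Continuous.mul (by continuity)
      exact Real.continuous_exp.comp (by continuity)
    have hvnonpos : ∀ u ∈ Set.Ioo (0:ℝ) s₀, v u ≤ 0 := by
      intro u hu
      obtain ⟨hu0, hus⟩ := hu
      have hu2 : u^2 ≤ (m:ℝ)+1 := by
        have := pow_le_pow_left₀ hu0.le hus.le 2
        rw [hs₀sq] at this
        linarith
      have hq : u^(m+2) - ((m:ℝ)+1)*u^m ≤ 0 := by
        have h1 : u^(m+2) = u^m * u^2 := by ring
        nlinarith [pow_pos hu0 m]
      rw [hv]
      exact mul_nonpos_of_nonpos_of_nonneg hq (Real.exp_pos _).le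
    obtain ⟨C₀, hC₀nn, hC₀eq⟩ : ∃ C : ℝ, 0 ≤ C ∧ (∫ u in Set.Ioo (0:ℝ) s₀, v u) = -C :=
      ⟨-(∫ u in Set.Ioo (0:ℝ) s₀, v u),
        neg_nonneg.mpr (setIntegral_nonpos measurableSet_Ioo hvnonpos), by ring⟩
    have he1 : Real.exp (-1) * Real.exp 1 = 1 := by rw [← Real.exp_add]; norm_num
    obtain ⟨T, hT₁T, hval⟩ : ∃ T : ℝ, (m:ℝ)+2 ≤ T ∧
        (T - ((m:ℝ)+2)) * Real.exp (-1) = C₀ + 1 := by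
      refine ⟨(m:ℝ)+2 + Real.exp 1 * (C₀+1), by nlinarith [Real.exp_pos (1:ℝ)], ?_⟩
      have h2 : ((m:ℝ)+2 + Real.exp 1 * (C₀+1) - ((m:ℝ)+2)) * Real.exp (-1)
          = (C₀+1) * (Real.exp (-1) * Real.exp 1) := by ring
      rw [h2, he1, mul_one]
    have hT₁pos : (0:ℝ) < (m:ℝ)+2 := by positivity
    have hTpos : 0 < T := lt_of_lt_of_le hT₁pos hT₁T
    obtain ⟨D, hD0, hDax⟩ : ∃ D : ℝ, 0 < D ∧ ∀ u : ℝ, 0 ≤ u → u ≤ T → α/4*D*u^4 ≤ 1 := by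
      have hden : (0:ℝ) < α/4*T^4+1 := by positivity
      refine ⟨1/(α/4*T^4+1), by positivity, fun u h0 hTu => ?_⟩
      have hu4 : u^4 ≤ T^4 := pow_le_pow_left₀ h0 hTu 4
      have heq : α/4*(1/(α/4*T^4+1))*u^4 = (α/4*u^4)/(α/4*T^4+1) := by ring
      rw [heq, div_le_one hden]
      nlinarith
    refine ⟨D, hD0, ?_⟩
    -- part 1 : lower bound on (0, s₀)
    have hpart1 : -C₀ ≤ ∫ u in Set.Ioo (0:ℝ) s₀, wfun m α D u := by
      rw [← hC₀eq]
      apply setIntegral_mono_on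
        ((hvcont.integrableOn_Icc).mono_set Set.Ioo_subset_Icc_self)
        ((int_wfull m hα hD0).mono_set Set.Ioo_subset_Ioi_self)
        measurableSet_Ioo
      intro u hu
      obtain ⟨hu0, hus⟩ := hu
      have hu2 : u^2 ≤ (m:ℝ)+1 := by
        have := pow_le_pow_left₀ hu0.le hus.le 2
        rw [hs₀sq] at this
        linarith
      have hq : u^(m+2) - ((m:ℝ)+1)*u^m ≤ 0 := by
        have h1 : u^(m+2) = u^m * u^2 := by ring
        nlinarith [pow_pos hu0 m]
      have hexp : Real.exp (-(α/4*D * u ^ 4 + (1-α)/2 * u ^ 2))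
          ≤ Real.exp (-((1-α)/2 * u^2)) := by
        apply Real.exp_le_exp.mpr
        have : 0 ≤ α/4*D*u^4 := by positivity
        linarith
      rw [hv]
      exact mul_le_mul_of_nonpos_left hexp hq
    -- nonnegativity on [s₀, ∞)
    have hwnn : ∀ u ∈ Set.Ici s₀, 0 ≤ wfun m α D u := by
      intro u hu
      have hu0 : 0 < u := lt_of_lt_of_le hs₀pos hu
      have hu2 : (m:ℝ)+1 ≤ u^2 := by
        have := pow_le_pow_left₀ hs₀pos.le hu 2
        rw [hs₀sq] at this
        linarith
      have hq : 0 ≤ u^(m+2) - ((m:ℝ)+1)*u^m := by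
        have h1 : u^(m+2) = u^m * u^2 := by ring
        nlinarith [pow_pos hu0 m]
      rw [wfun]
      exact mul_nonneg hq (Real.exp_pos _).le
    -- part 2 : lower bound on [m+2, T]
    have hpart2 : (C₀ + 1) ≤ ∫ u in Set.Ici s₀, wfun m α D u := by
      have hsub : Set.Icc ((m:ℝ)+2) T ⊆ Set.Ici s₀ := fun x hx => le_trans hs₀T₁ hx.1
      have hstep1 : ∫ u in Set.Icc ((m:ℝ)+2) T, wfun m α D u
          ≤ ∫ u in Set.Ici s₀, wfun m α D u := by
        apply setIntegral_mono_set
          ((int_wfull m hα hD0).mono_set (fun x hx => lt_of_lt_of_le hs₀pos hx))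
          ?_ (HasSubset.Subset.eventuallyLE hsub)
        filter_upwards [ae_restrict_mem measurableSet_Ici] with u hu
        exact hwnn u hu
      have hconst : ∫ _ in Set.Icc ((m:ℝ)+2) T, Real.exp (-1)
          = (T - ((m:ℝ)+2)) * Real.exp (-1) := by
        rw [setIntegral_const]
        simp only [measureReal_def, Real.volume_Icc, smul_eq_mul]
        rw [ENNReal.toReal_ofReal (by linarith)]
      have hstep2 : (T - ((m:ℝ)+2)) * Real.exp (-1)
          ≤ ∫ u in Set.Icc ((m:ℝ)+2) T, wfun m α D u := by
        rw [← hconst]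
        apply setIntegral_mono_on
          (integrableOn_const (by simp [Real.volume_Icc]))
          ((int_wfull m hα hD0).mono_set
            (fun x hx => lt_of_lt_of_le hT₁pos hx.1))
          measurableSet_Icc
        intro u hu
        obtain ⟨hu1, huT⟩ := hu
        have hu0 : 0 < u := lt_of_lt_of_le hT₁pos hu1
        have hu1' : (1:ℝ) ≤ u := by linarith
        have hqge : 1 ≤ u^(m+2) - ((m:ℝ)+1)*u^m := by
          have hum : (1:ℝ) ≤ u^m := by
            have := pow_le_pow_left₀ zero_le_one hu1' m
            simpa using this
          have hu2 : (m:ℝ)+2 ≤ u^2 := by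
            have h := pow_le_pow_left₀ hT₁pos.le hu1 2
            nlinarith
          have h1 : u^(m+2) = u^m * u^2 := by ring
          nlinarith [pow_pos hu0 m]
        have hexp : Real.exp (-1) ≤ Real.exp (-(α/4*D * u ^ 4 + (1-α)/2 * u ^ 2)) := by
          apply Real.exp_le_exp.mpr
          have hb2 : (1-α)/2 * u^2 ≤ 0 :=
            mul_nonpos_of_nonpos_of_nonneg (by linarith) (sq_nonneg u)
          have hDax' := hDax u hu0.le huT
          linarith
        rw [wfun]
        calc Real.exp (-1) = 1 * Real.exp (-1) := (one_mul _).symm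
          _ ≤ (u^(m+2) - ((m:ℝ)+1)*u^m) * Real.exp (-(α/4*D * u ^ 4 + (1-α)/2 * u ^ 2)) :=
            mul_le_mul hqge hexp (Real.exp_pos _).le (by linarith)
      linarith [hval ▸ hstep2, hstep1]
    -- combine
    have hsplit : Gfun m α D = (∫ u in Set.Ioo (0:ℝ) s₀, wfun m α D u)
        + ∫ u in Set.Ici s₀, wfun m α D u := by
      rw [Gfun, ← Set.Ioo_union_Ici_eq_Ioi hs₀pos]
      apply setIntegral_union ?_ measurableSet_Ici
        ((int_wfull m hα hD0).mono_set Set.Ioo_subset_Ioi_self)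
        ((int_wfull m hα hD0).mono_set (fun x hx => lt_of_lt_of_le hs₀pos hx))
      rw [Set.disjoint_left]
      intro x hx hx2
      exact absurd hx2 (not_le.mpr hx.2)
    rw [hsplit]
    linarith

theorem stmt_3 (d : ℕ) (hd : 1 ≤ d) (α : ℝ) (hα : 0 < α)
    (h : ℝ → ℝ)
    (hh : ∀ D : ℝ, h D = ∫ s in Set.Ioi (0:ℝ),
      (s ^ (d + 1) - s ^ (d + 3)) *
        Real.exp (-(α / 4 * s ^ 4 + (1 - α) / 2 * s ^ 2) / D)) :
    ∃ Dstar : ℝ, 0 < Dstar ∧ h Dstar = 0 ∧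
      (∀ D : ℝ, 0 < D → h D = 0 → D = Dstar) ∧
      (∀ D : ℝ, 0 < D → D < Dstar → 0 < h D) ∧
      (∀ D : ℝ, Dstar < D → h D < 0) := by
  obtain ⟨m, rfl⟩ : ∃ m, d = m + 1 := ⟨d - 1, by omega⟩
  simp only [show m+1+1 = m+2 from by omega, show m+1+3 = m+4 from by omega] at hh
  have hhG : ∀ D : ℝ, 0 < D → h D = (Real.sqrt D)^(m+3)/α * Gfun m α D := by
    intro D hD
    rw [hh D, main_identity m hα hD]
  have hcoef : ∀ D : ℝ, 0 < D → 0 < (Real.sqrt D)^(m+3)/α := by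
    intro D hD
    have := Real.sqrt_pos.mpr hD
    positivity
  obtain ⟨Dp, hDp0, hDpPos⟩ := G_pos m hα
  obtain ⟨Dn, hDn0, hDnNeg'⟩ := h_neg m hα
  have hDnNeg : Gfun m α Dn < 0 := by
    have hident := main_identity m hα hDn0
    rw [hident] at hDnNeg'
    by_contra hge
    push_neg at hge
    exact absurd (mul_nonneg (hcoef Dn hDn0).le hge) (not_le.mpr hDnNeg')
  have hlt : Dp < Dn := by
    rcases lt_trichotomy Dp Dn with h1 | h1 | h1
    · exact h1
    · rw [h1] at hDpPos; linarith
    · have := G_mono m hα hDn0 h1 hDnNeg.le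
      linarith
  have hcont : ContinuousOn (Gfun m α) (Set.Icc Dp Dn) := fun x hx =>
    (G_contAt m hα (lt_of_lt_of_le hDp0 hx.1)).continuousWithinAt
  have hIVT := intermediate_value_Icc' hlt.le hcont
  have h0mem : (0:ℝ) ∈ Set.Icc (Gfun m α Dn) (Gfun m α Dp) := ⟨hDnNeg.le, hDpPos.le⟩
  obtain ⟨Dstar, hDmem, hGstar⟩ := hIVT h0mem
  have hDstar0 : 0 < Dstar := lt_of_lt_of_le hDp0 hDmem.1
  have hGpos_lt : ∀ D : ℝ, 0 < D → D < Dstar → 0 < Gfun m α D := by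
    intro D hD0 hltD
    by_contra hnp
    push_neg at hnp
    have := G_mono m hα hD0 hltD hnp
    rw [hGstar] at this
    exact lt_irrefl 0 this
  have hGneg_gt : ∀ D : ℝ, Dstar < D → Gfun m α D < 0 := fun D hgt =>
    G_mono m hα hDstar0 hgt (le_of_eq hGstar)
  have hzero_iff : ∀ D : ℝ, 0 < D → h D = 0 → Gfun m α D = 0 := by
    intro D hD0 hhD
    have hid := hhG D hD0
    rw [hhD] at hid
    rcases mul_eq_zero.mp hid.symm with hc | hg
    · exact absurd hc (hcoef D hD0).ne'
    · exact hg
  refine ⟨Dstar, hDstar0, ?_, ?_, ?_, ?_⟩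
  · rw [hhG Dstar hDstar0, hGstar, mul_zero]
  · intro D hD0 hhD
    rcases lt_trichotomy D Dstar with hc | hc | hc
    · exact absurd (hzero_iff D hD0 hhD) (hGpos_lt D hD0 hc).ne'
    · exact hc
    · exact absurd (hzero_iff D (hDstar0.trans hc) hhD) (hGneg_gt D hc).ne
  · intro D hD0 hltD
    rw [hhG D hD0]
    exact mul_pos (hcoef D hD0) (hGpos_lt D hD0 hltD)
  · intro D hgt
    have hD0 : 0 < D := hDstar0.trans hgt
    rw [hhG D hD0]
    exact mul_neg_of_pos_of_neg (hcoef D hD0) (hGneg_gt D hgt)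
end

section
/- If α ∈ (0,1], then the derivative of h_d satisfies 4 D² h_d'(D) = α h_{d+4}(D) + 2(1-α) h_{d+2}(D), and in particular h_d'(D) < 0 for all D ≥ 1/(d+2). -/
open MeasureTheory Real Set

namespace Stmt4Aux

noncomputable def PHI (α s : ℝ) : ℝ := α / 4 * s ^ 4 + (1 - α) / 2 * s ^ 2
noncomputable def K (α D s : ℝ) : ℝ := Real.exp (-(PHI α s) / D)
noncomputable def M (α : ℝ) (k : ℕ) (D : ℝ) : ℝ := ∫ s in Set.Ioi (0:ℝ), s ^ k * K α D s

variable {α D : ℝ}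

lemma K_pos : 0 < K α D s := exp_pos _

lemma PHI_nonneg (hα : 0 < α) (hα1 : α ≤ 1) (s : ℝ) : 0 ≤ PHI α s := by
  unfold PHI; nlinarith [pow_two_nonneg s, pow_two_nonneg (s^2)]

lemma K_le (hα : 0 < α) (hα1 : α ≤ 1) (hD : 0 < D) (s : ℝ) :
    K α D s ≤ Real.exp (α/(4*D)) * Real.exp (-(α/(4*D)) * s^2) := by
  rw [K, ← Real.exp_add]
  apply Real.exp_le_exp.2
  rw [div_le_iff₀ hD] at *
  have h4 : s^2 - 1 ≤ s^4 := by nlinarith [sq_nonneg (s^2 - 1)]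
  have : (α/(4*D) + -(α/(4*D)) * s^2) * D = α/4 - α/4 * s^2 := by
    field_simp; ring
  rw [this]
  unfold PHI
  nlinarith [pow_two_nonneg s]

lemma cont_pow_K (k : ℕ) : Continuous (fun s : ℝ => s ^ k * K α D s) := by
  unfold K PHI; fun_prop

lemma int_pow_exp {c : ℝ} (hc : 0 < c) (k : ℕ) :
    IntegrableOn (fun s : ℝ => s ^ k * Real.exp (-c * s^2)) (Set.Ioi 0) := by
  have := integrableOn_rpow_mul_exp_neg_mul_sq hc (s := (k:ℝ))
    (lt_of_lt_of_le neg_one_lt_zero (Nat.cast_nonneg k))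
  apply this.congr_fun ?_ measurableSet_Ioi
  intro s _
  simp [Real.rpow_natCast]

lemma int_pow (hα : 0 < α) (hα1 : α ≤ 1) (hD : 0 < D) (k : ℕ) :
    IntegrableOn (fun s : ℝ => s ^ k * K α D s) (Set.Ioi 0) := by
  have hc : 0 < α/(4*D) := by positivity
  apply Integrable.mono' (((int_pow_exp hc k).const_mul (Real.exp (α/(4*D)))))
  · exact (cont_pow_K k).aestronglyMeasurable
  · filter_upwards [ae_restrict_mem measurableSet_Ioi] with s hs
    have hs' : (0:ℝ) < s := hs
    rw [Real.norm_eq_abs, abs_mul, abs_of_nonneg (by positivity), abs_of_nonneg K_pos.le]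
    calc s ^ k * K α D s ≤ s ^ k * (Real.exp (α/(4*D)) * Real.exp (-(α/(4*D)) * s^2)) := by
          exact mul_le_mul_of_nonneg_left (K_le hα hα1 hD s) (by positivity)
      _ = Real.exp (α/(4*D)) * (s ^ k * Real.exp (-(α/(4*D)) * s^2)) := by ring

lemma M_pos (hα : 0 < α) (hα1 : α ≤ 1) (hD : 0 < D) (k : ℕ) : 0 < M α k D := by
  rw [M, setIntegral_pos_iff_support_of_nonneg_ae]
  · have hsub : Set.Ioi (0:ℝ) ⊆ (Function.support fun s => s ^ k * K α D s) ∩ Set.Ioi 0 := by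
      intro s hs
      have h0 : (0:ℝ) < s := hs
      exact ⟨ne_of_gt (mul_pos (pow_pos h0 k) K_pos), hs⟩
    calc (0:ENNReal) < volume (Set.Ioi (0:ℝ)) := by simp [Real.volume_Ioi]
      _ ≤ _ := measure_mono hsub
  · filter_upwards [ae_restrict_mem measurableSet_Ioi] with s hs
    have h0 : (0:ℝ) < s := hs
    exact mul_nonneg (pow_nonneg h0.le k) K_pos.le
  · exact int_pow hα hα1 hD k

lemma tendsto_pow_K (hα : 0 < α) (hα1 : α ≤ 1) (hD : 0 < D) (k : ℕ) :
    Filter.Tendsto (fun s : ℝ => s ^ k * K α D s) Filter.atTop (nhds 0) := by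
  set c := α/(4*D) with hc
  have hcpos : 0 < c := by positivity
  have lim1 : Filter.Tendsto (fun s : ℝ => (c*s) ^ k * Real.exp (-(c*s))) Filter.atTop (nhds 0) := by
    exact (Real.tendsto_pow_mul_exp_neg_atTop_nhds_zero k).comp
      (Filter.tendsto_id.const_mul_atTop hcpos)
  have lim2 : Filter.Tendsto (fun s : ℝ => Real.exp c / c^k * ((c*s) ^ k * Real.exp (-(c*s))))
      Filter.atTop (nhds 0) := by
    simpa using lim1.const_mul (Real.exp c / c^k)
  apply squeeze_zero_norm' ?_ lim2
  filter_upwards [Filter.eventually_ge_atTop (1:ℝ)] with s hs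
  have hs0 : (0:ℝ) < s := lt_of_lt_of_le one_pos hs
  rw [Real.norm_eq_abs, abs_mul, abs_of_nonneg (by positivity), abs_of_nonneg K_pos.le]
  have h1 : K α D s ≤ Real.exp c * Real.exp (-c * s^2) := K_le hα hα1 hD s
  have h2 : Real.exp (-c * s^2) ≤ Real.exp (-(c*s)) := by
    apply Real.exp_le_exp.2
    have hss : s ≤ s^2 := by nlinarith
    nlinarith [mul_le_mul_of_nonneg_left hss hcpos.le]
  have : Real.exp c / c^k * ((c*s) ^ k * Real.exp (-(c*s)))
      = Real.exp c * s^k * Real.exp (-(c*s)) := by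
    rw [mul_pow]; field_simp
  rw [this]
  calc s ^ k * K α D s ≤ s ^ k * (Real.exp c * Real.exp (-c*s^2)) :=
        mul_le_mul_of_nonneg_left h1 (by positivity)
    _ ≤ s ^ k * (Real.exp c * Real.exp (-(c*s))) := by
        apply mul_le_mul_of_nonneg_left (mul_le_mul_of_nonneg_left h2 (exp_pos _).le) (by positivity)
    _ = Real.exp c * s^k * Real.exp (-(c*s)) := by ring

lemma hasDerivAt_K (hD : D ≠ 0) (s : ℝ) :
    HasDerivAt (fun s => K α D s) ((-(α * s^3 + (1-α) * s)/D) * K α D s) s := by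
  have h1 : HasDerivAt (fun s => -(PHI α s)/D) (-(α * s^3 + (1-α) * s)/D) s := by
    have : HasDerivAt (fun s => PHI α s) (α * s^3 + (1-α) * s) s := by
      unfold PHI
      have := ((hasDerivAt_pow 4 s).const_mul (α/4)).add ((hasDerivAt_pow 2 s).const_mul ((1-α)/2))
      refine this.congr_deriv ?_
      norm_num
      ring
    simpa [neg_div] using (this.neg.div_const D)
  simpa [mul_comm, K] using h1.exp

lemma IBP (hα : 0 < α) (hα1 : α ≤ 1) (hD : 0 < D) (n : ℕ) :
    ((n:ℝ)+1) * D * M α n D = α * M α (n+4) D + (1-α) * M α (n+2) D := by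
  set f : ℝ → ℝ := fun s => s^(n+1) * K α D s with hf
  set f' : ℝ → ℝ := fun s => ((n:ℝ)+1) * (s^n * K α D s)
    - ((α/D) * (s^(n+4) * K α D s) + ((1-α)/D) * (s^(n+2) * K α D s)) with hf'
  have hderiv : ∀ x ∈ Set.Ici (0:ℝ), HasDerivAt f (f' x) x := by
    intro x _
    have := ((hasDerivAt_pow (n+1) x).mul (hasDerivAt_K (α := α) hD.ne' x))
    refine this.congr_deriv ?_
    have hDne : D ≠ 0 := hD.ne'
    simp only [hf', Nat.add_sub_cancel]
    push_cast
    field_simp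
    ring
  have h1 : IntegrableOn (fun s : ℝ => ((n:ℝ)+1) * (s^n * K α D s)) (Set.Ioi 0) :=
    (int_pow hα hα1 hD n).const_mul _
  have h2 : IntegrableOn (fun s : ℝ => (α/D) * (s^(n+4) * K α D s)) (Set.Ioi 0) :=
    (int_pow hα hα1 hD (n+4)).const_mul _
  have h3 : IntegrableOn (fun s : ℝ => ((1-α)/D) * (s^(n+2) * K α D s)) (Set.Ioi 0) :=
    (int_pow hα hα1 hD (n+2)).const_mul _
  have h23 : IntegrableOn (fun s : ℝ => (α/D) * (s^(n+4) * K α D s)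
      + ((1-α)/D) * (s^(n+2) * K α D s)) (Set.Ioi 0) := h2.add h3
  have hint : IntegrableOn f' (Set.Ioi 0) := h1.sub h23
  have htend : Filter.Tendsto f Filter.atTop (nhds 0) := tendsto_pow_K hα hα1 hD (n+1)
  have h0 : (∫ s in Set.Ioi (0:ℝ), f' s) = 0 - f 0 := by
    exact integral_Ioi_of_hasDerivAt_of_tendsto' hderiv hint htend
  have hf0 : f 0 = 0 := by simp [hf]
  rw [hf0, sub_zero] at h0
  have hsplit : (∫ s in Set.Ioi (0:ℝ), f' s)
      = ((n:ℝ)+1) * M α n D - ((α/D) * M α (n+4) D + ((1-α)/D) * M α (n+2) D) := by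
    rw [hf']
    rw [integral_sub h1 h23, integral_add h2 h3,
      integral_const_mul, integral_const_mul, integral_const_mul]
    rfl
  rw [hsplit] at h0
  have hD' := hD.ne'
  field_simp at h0 ⊢
  linarith

lemma sq_integral_pos (hα : 0 < α) (hα1 : α ≤ 1) (hD : 0 < D) (n : ℕ) {t : ℝ} (ht : 0 < t) :
    0 < ∫ s in Set.Ioi (0:ℝ), s^n * (s^2 - t)^2 * K α D s := by
  have hint : IntegrableOn (fun s : ℝ => s^n * (s^2 - t)^2 * K α D s) (Set.Ioi 0) := by
    have : (fun s : ℝ => s^n * (s^2 - t)^2 * K α D s)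
        = fun s : ℝ => (s^(n+4) * K α D s) - (2*t) * (s^(n+2) * K α D s)
          + t^2 * (s^n * K α D s) := by
      funext s; ring
    rw [this]
    exact ((int_pow hα hα1 hD (n+4)).sub ((int_pow hα hα1 hD (n+2)).const_mul _)).add
      ((int_pow hα hα1 hD n).const_mul _)
  rw [setIntegral_pos_iff_support_of_nonneg_ae]
  · have hsub : Set.Ioi (t+1) ⊆
        (Function.support fun s => s^n * (s^2-t)^2 * K α D s) ∩ Set.Ioi 0 := by
      intro s hs
      have hs1 : t + 1 < s := hs
      have hs0 : (0:ℝ) < s := by linarith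
      have hst : t < s^2 := by nlinarith
      refine ⟨?_, hs0⟩
      have : 0 < s^n * (s^2-t)^2 * K α D s :=
        mul_pos (mul_pos (pow_pos hs0 n) (pow_pos (by linarith) 2)) K_pos
      exact ne_of_gt this
    calc (0:ENNReal) < volume (Set.Ioi (t+1)) := by simp [Real.volume_Ioi]
      _ ≤ _ := measure_mono hsub
  · filter_upwards [ae_restrict_mem measurableSet_Ioi] with s hs
    have h0 : (0:ℝ) < s := hs
    exact mul_nonneg (mul_nonneg (pow_nonneg h0.le n) (sq_nonneg _)) K_pos.le
  · exact hint

lemma CS (hα : 0 < α) (hα1 : α ≤ 1) (hD : 0 < D) (n : ℕ) :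
    (M α (n+2) D)^2 < M α n D * M α (n+4) D := by
  have ha := M_pos hα hα1 hD n
  have hb := M_pos hα hα1 hD (n+2)
  set t := M α (n+2) D / M α n D with htdef
  have ht : 0 < t := div_pos hb ha
  have hpos := sq_integral_pos hα hα1 hD n ht
  have hval : (∫ s in Set.Ioi (0:ℝ), s^n * (s^2 - t)^2 * K α D s)
      = M α (n+4) D - (2*t) * M α (n+2) D + t^2 * M α n D := by
    have : (fun s : ℝ => s^n * (s^2 - t)^2 * K α D s)
        = fun s : ℝ => (s^(n+4) * K α D s) - (2*t) * (s^(n+2) * K α D s)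
          + t^2 * (s^n * K α D s) := by
      funext s; ring
    have g1 : IntegrableOn (fun s : ℝ => s^(n+4) * K α D s - (2*t) * (s^(n+2) * K α D s))
        (Set.Ioi 0) := (int_pow hα hα1 hD (n+4)).sub ((int_pow hα hα1 hD (n+2)).const_mul _)
    have g2 : IntegrableOn (fun s : ℝ => t^2 * (s^n * K α D s)) (Set.Ioi 0) :=
      (int_pow hα hα1 hD n).const_mul _
    rw [this, integral_add g1 g2,
      integral_sub (int_pow hα hα1 hD (n+4)) ((int_pow hα hα1 hD (n+2)).const_mul _),
      integral_const_mul, integral_const_mul]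
    rfl
  rw [hval] at hpos
  have hane : M α n D ≠ 0 := ha.ne'
  have ht2 : t * M α n D = M α (n+2) D := div_mul_cancel₀ _ hane
  nlinarith [hpos, ht2, ha]

lemma M_lt (hα : 0 < α) (hα1 : α ≤ 1) (n : ℕ) {D : ℝ} (hD : 1/((n:ℝ)+1) ≤ D) :
    M α (n+2) D < M α (n+4) D := by
  have hn1 : (0:ℝ) < (n:ℝ)+1 := by positivity
  have hD0 : 0 < D := lt_of_lt_of_le (by positivity) hD
  have hcs := CS hα hα1 hD0 n
  have hibp := IBP hα hα1 hD0 n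
  have ha := M_pos hα hα1 hD0 n
  have hb := M_pos hα hα1 hD0 (n+2)
  have hc := M_pos hα hα1 hD0 (n+4)
  by_contra hcon
  push_neg at hcon
  have h1 : (1:ℝ) ≤ ((n:ℝ)+1) * D := by
    rw [div_le_iff₀ hn1] at hD; linarith
  nlinarith [hcs, hibp, hcon, ha, hb, hc, mul_le_mul_of_nonneg_left hcon hα.le]


lemma hasDerivAt_K_D (s : ℝ) {D : ℝ} (hD : D ≠ 0) :
    HasDerivAt (fun D => K α D s) ((PHI α s / D^2) * K α D s) D := by
  unfold K
  simp only [div_eq_mul_inv, neg_mul]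
  have h := (((hasDerivAt_inv hD).const_mul (-(PHI α s))).exp)
  convert h using 1
  · funext x; simp [neg_mul]
  · simp only [neg_mul]
    ring

lemma int_sub_pow (hα : 0 < α) (hα1 : α ≤ 1) (hD : 0 < D) (k l : ℕ) :
    IntegrableOn (fun s : ℝ => (s ^ k - s ^ l) * K α D s) (Set.Ioi 0) := by
  have : (fun s : ℝ => (s ^ k - s ^ l) * K α D s)
      = fun s : ℝ => s ^ k * K α D s - s ^ l * K α D s := by funext s; ring
  rw [this]
  exact (int_pow hα hα1 hD k).sub (int_pow hα hα1 hD l)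

lemma hasDerivAt_integral (hα : 0 < α) (hα1 : α ≤ 1) (d : ℕ) {D₀ : ℝ} (hD₀ : 0 < D₀) :
    HasDerivAt (fun D => ∫ s in Set.Ioi (0:ℝ), (s ^ (d+1) - s ^ (d+3)) * K α D s)
      (∫ s in Set.Ioi (0:ℝ), (s ^ (d+1) - s ^ (d+3)) * ((PHI α s / D₀^2) * K α D₀ s)) D₀ := by
  set c : ℝ := α/(4*(3*D₀/2)) with hc
  have hcpos : 0 < c := by rw [hc]; positivity
  set bound : ℝ → ℝ := fun s => (4/D₀^2) * Real.exp c *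
    ((s^(d+5) + s^(d+3) + s^(d+7) + s^(d+5)) * Real.exp (-c * s^2)) with hbound
  have key := hasDerivAt_integral_of_dominated_loc_of_deriv_le (μ := volume.restrict (Set.Ioi 0))
    (F := fun D s => (s ^ (d+1) - s ^ (d+3)) * K α D s)
    (F' := fun D s => (s ^ (d+1) - s ^ (d+3)) * ((PHI α s / D^2) * K α D s))
    (x₀ := D₀) (bound := bound) (s := Metric.ball D₀ (D₀/2)) (Metric.ball_mem_nhds _ (by positivity))
    ?_ ?_ ?_ ?_ ?_ ?_
  · exact key.2
  · -- measurability of F D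
    filter_upwards with D
    apply Continuous.aestronglyMeasurable
    exact ((continuous_pow (d+1)).sub (continuous_pow (d+3))).mul (by unfold K PHI; fun_prop)
  · exact int_sub_pow hα hα1 hD₀ (d+1) (d+3)
  · -- measurability of F' D₀
    apply Continuous.aestronglyMeasurable
    unfold K PHI; fun_prop
  · -- bound
    filter_upwards [ae_restrict_mem measurableSet_Ioi] with s hs D hD
    have hs0 : (0:ℝ) < s := hs
    rw [Metric.mem_ball, Real.dist_eq, abs_lt] at hD
    have hDlow : D₀/2 < D := by linarith
    have hDhigh : D < 3*D₀/2 := by linarith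
    have hD0 : 0 < D := by linarith
    have habs : |s ^ (d+1) - s ^ (d+3)| ≤ s^(d+1) + s^(d+3) := by
      have h1 : (0:ℝ) ≤ s^(d+1) := by positivity
      have h2 : (0:ℝ) ≤ s^(d+3) := by positivity
      rw [abs_le]; constructor <;> nlinarith
    have hK1 : K α D s ≤ K α (3*D₀/2) s := by
      unfold K
      apply Real.exp_le_exp.2
      rw [div_le_div_iff₀ hD0 (by positivity)]
      nlinarith [PHI_nonneg hα hα1 s]
    have hK2 : K α (3*D₀/2) s ≤ Real.exp c * Real.exp (-c * s^2) := by
      have := K_le hα hα1 (D := 3*D₀/2) (by positivity) s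
      rw [← hc] at this
      convert this using 4 <;> ring
    have hPhi_le : PHI α s ≤ s^4 + s^2 := by
      unfold PHI
      nlinarith [pow_pos hs0 2, pow_pos hs0 4]
    have hquot : PHI α s / D^2 ≤ (s^4+s^2) * (4/D₀^2) := by
      rw [div_le_iff₀ (by positivity)]
      have h2 : D₀^2/4 ≤ D^2 := by nlinarith
      calc PHI α s ≤ s^4+s^2 := hPhi_le
        _ = (s^4+s^2)*(4/D₀^2)*(D₀^2/4) := by field_simp
        _ ≤ (s^4+s^2)*(4/D₀^2)*D^2 := by
            apply mul_le_mul_of_nonneg_left h2 (by positivity)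
    rw [Real.norm_eq_abs, abs_mul]
    have hKpos : (0:ℝ) < K α D s := K_pos
    have habs2 : |(PHI α s / D^2) * K α D s| = (PHI α s / D^2) * K α D s := by
      rw [abs_of_nonneg]
      exact mul_nonneg (div_nonneg (PHI_nonneg hα hα1 s) (by positivity)) hKpos.le
    rw [habs2]
    calc |s ^ (d+1) - s ^ (d+3)| * ((PHI α s / D^2) * K α D s)
        ≤ (s^(d+1) + s^(d+3)) * (((s^4+s^2) * (4/D₀^2)) * (Real.exp c * Real.exp (-c * s^2))) := by
          apply mul_le_mul habs ?_ ?_ (by positivity)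
          · apply mul_le_mul hquot (hK1.trans hK2) hKpos.le
            positivity
          · exact mul_nonneg (div_nonneg (PHI_nonneg hα hα1 s) (by positivity)) hKpos.le
      _ = bound s := by rw [hbound]; ring
  · -- integrability of bound
    apply Integrable.const_mul
    have : (fun s : ℝ => (s^(d+5) + s^(d+3) + s^(d+7) + s^(d+5)) * Real.exp (-c * s^2))
        = fun s : ℝ => ((s^(d+5) * Real.exp (-c * s^2) + s^(d+3) * Real.exp (-c * s^2))
          + s^(d+7) * Real.exp (-c * s^2)) + s^(d+5) * Real.exp (-c * s^2) := by
      funext s; ring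
    rw [this]
    exact (((int_pow_exp hcpos (d+5)).add (int_pow_exp hcpos (d+3))).add
      (int_pow_exp hcpos (d+7))).add (int_pow_exp hcpos (d+5))
  · -- differentiability
    filter_upwards with s D hD
    rw [Metric.mem_ball, Real.dist_eq, abs_lt] at hD
    have hD0 : 0 < D := by linarith
    exact (hasDerivAt_K_D s hD0.ne').const_mul _

lemma integral_F' (hα : 0 < α) (hα1 : α ≤ 1) (d : ℕ) {D : ℝ} (hD : 0 < D) :
    (∫ s in Set.Ioi (0:ℝ), (s ^ (d+1) - s ^ (d+3)) * ((PHI α s / D^2) * K α D s))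
      = ((1-α)/(2*D^2)) * M α (d+3) D + ((α/4 - (1-α)/2)/D^2) * M α (d+5) D
        + (-(α/4)/D^2) * M α (d+7) D := by
  have hDne : D ≠ 0 := hD.ne'
  have hfun : (fun s : ℝ => (s ^ (d+1) - s ^ (d+3)) * ((PHI α s / D^2) * K α D s))
      = fun s : ℝ => (((1-α)/(2*D^2)) * (s^(d+3) * K α D s)
        + ((α/4 - (1-α)/2)/D^2) * (s^(d+5) * K α D s))
        + (-(α/4)/D^2) * (s^(d+7) * K α D s) := by
    funext s
    unfold PHI
    field_simp
    ring
  have g1 : IntegrableOn (fun s : ℝ => ((1-α)/(2*D^2)) * (s^(d+3) * K α D s)) (Set.Ioi 0) :=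
    (int_pow hα hα1 hD (d+3)).const_mul _
  have g2 : IntegrableOn (fun s : ℝ => ((α/4 - (1-α)/2)/D^2) * (s^(d+5) * K α D s)) (Set.Ioi 0) :=
    (int_pow hα hα1 hD (d+5)).const_mul _
  have g3 : IntegrableOn (fun s : ℝ => (-(α/4)/D^2) * (s^(d+7) * K α D s)) (Set.Ioi 0) :=
    (int_pow hα hα1 hD (d+7)).const_mul _
  have g12 : IntegrableOn (fun s : ℝ => ((1-α)/(2*D^2)) * (s^(d+3) * K α D s)
      + ((α/4 - (1-α)/2)/D^2) * (s^(d+5) * K α D s)) (Set.Ioi 0) := g1.add g2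
  rw [hfun, integral_add g12 g3, integral_add g1 g2,
    integral_const_mul, integral_const_mul, integral_const_mul]
  rfl

end Stmt4Aux

open Stmt4Aux in
theorem stmt_4 (d : ℕ) (hd : 1 ≤ d) (α : ℝ) (hα : 0 < α) (hα1 : α ≤ 1)
    (h : ℕ → ℝ → ℝ)
    (hh : ∀ m : ℕ, ∀ D : ℝ, h m D = ∫ s in Set.Ioi (0:ℝ),
      (s ^ (m + 1) - s ^ (m + 3)) *
        Real.exp (-(α / 4 * s ^ 4 + (1 - α) / 2 * s ^ 2) / D)) :
    (∀ D : ℝ, 0 < D →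
      4 * D ^ 2 * deriv (h d) D = α * h (d + 4) D + 2 * (1 - α) * h (d + 2) D)
    ∧ (∀ D : ℝ, 1 / (d + 2 : ℝ) ≤ D → deriv (h d) D < 0) := by
  have hfun : h d = fun D => ∫ s in Set.Ioi (0:ℝ), (s ^ (d+1) - s ^ (d+3)) * K α D s := by
    funext D; exact hh d D
  have hM : ∀ m : ℕ, ∀ D : ℝ, 0 < D → h m D = M α (m+1) D - M α (m+3) D := by
    intro m D hD
    rw [hh m D]
    have : (fun s : ℝ => (s ^ (m+1) - s ^ (m+3)) *
        Real.exp (-(α / 4 * s ^ 4 + (1 - α) / 2 * s ^ 2) / D))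
        = fun s : ℝ => s ^ (m+1) * K α D s - s ^ (m+3) * K α D s := by
      funext s; unfold K PHI; ring
    rw [this, integral_sub (int_pow hα hα1 hD (m+1)) (int_pow hα hα1 hD (m+3))]
    rfl
  have hderiv : ∀ D : ℝ, 0 < D → deriv (h d) D
      = ((1-α)/(2*D^2)) * M α (d+3) D + ((α/4 - (1-α)/2)/D^2) * M α (d+5) D
        + (-(α/4)/D^2) * M α (d+7) D := by
    intro D hD
    rw [hfun]
    rw [(hasDerivAt_integral hα hα1 d hD).deriv]
    exact integral_F' hα hα1 d hD
  have part1 : ∀ D : ℝ, 0 < D →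
      4 * D ^ 2 * deriv (h d) D = α * h (d + 4) D + 2 * (1 - α) * h (d + 2) D := by
    intro D hD
    rw [hderiv D hD, hM (d+4) D hD, hM (d+2) D hD]
    have e1 : d + 4 + 1 = d + 5 := by omega
    have e2 : d + 4 + 3 = d + 7 := by omega
    have e3 : d + 2 + 1 = d + 3 := by omega
    have e4 : d + 2 + 3 = d + 5 := by omega
    rw [e1, e2, e3, e4]
    have hDne : D ≠ 0 := hD.ne'
    field_simp
    ring
  refine ⟨part1, ?_⟩
  intro D hD2
  have hd2 : (0:ℝ) < (d:ℝ) + 2 := by positivity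
  have hD : 0 < D := lt_of_lt_of_le (by positivity) hD2
  have hA : M α (d+3) D < M α (d+5) D := by
    have := M_lt hα hα1 (d+1) (D := D) (by push_cast; convert hD2 using 2; ring)
    convert this using 2 <;> omega
  have hB : M α (d+5) D < M α (d+7) D := by
    have hle : 1/((d:ℝ)+4) ≤ D := by
      refine le_trans ?_ hD2
      apply one_div_le_one_div_of_le hd2
      linarith
    have := M_lt hα hα1 (d+3) (D := D) (by push_cast at hle ⊢; convert hle using 2; ring)
    convert this using 2 <;> omega
  have heq := part1 D hD
  rw [hM (d+4) D hD, hM (d+2) D hD] at heq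
  have e1 : d + 4 + 1 = d + 5 := by omega
  have e2 : d + 4 + 3 = d + 7 := by omega
  have e3 : d + 2 + 1 = d + 3 := by omega
  have e4 : d + 2 + 3 = d + 5 := by omega
  rw [e1, e2, e3, e4] at heq
  nlinarith [sq_nonneg D, mul_pos hD hD, mul_pos hα (sub_pos.2 hB),
    mul_nonneg (sub_nonneg.2 hα1) (sub_pos.2 hA).le]
end

section
/- Let ψ : [0,∞) → (0,∞) be continuous with s ↦ ψ(s) e^{s²} integrable, and define H(u) = ∫₀^∞ (1 - s²) ψ(s) sinh(s u) ds for u ≥ 0. Then for every u > 0, H''(u) - H(u) = -∫₀^∞ (1 - s²)² ψ(s) sinh(s u) ds < 0; in particular H''(u) < 0 at any point where H(u) ≤ 0. -/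
open MeasureTheory Real

private lemma aux_sinh_le (x : ℝ) : |Real.sinh x| ≤ Real.exp |x| := by
  rw [Real.abs_sinh, Real.sinh_eq]
  have h1 := (Real.exp_pos (-|x|)).le
  have h2 := (Real.exp_pos |x|).le
  linarith

private lemma aux_cosh_le (x : ℝ) : Real.cosh x ≤ Real.exp |x| := by
  rw [Real.cosh_eq]
  have h1 : Real.exp x ≤ Real.exp |x| := Real.exp_le_exp.mpr (le_abs_self x)
  have h2 : Real.exp (-x) ≤ Real.exp |x| := Real.exp_le_exp.mpr (neg_le_abs x)
  linarith

private lemma aux_exp_bound (k : ℕ) (R s : ℝ) (hs : 0 ≤ s) :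
    s ^ k * Real.exp (s * R) ≤ Real.exp (((k : ℝ) + |R|) ^ 2 / 2) * Real.exp (s ^ 2) := by
  have hse : s ≤ Real.exp s := by linarith [Real.add_one_le_exp s]
  have h1 : s ^ k ≤ Real.exp (s * k) := by
    calc s ^ k ≤ (Real.exp s) ^ k := pow_le_pow_left₀ hs hse k
      _ = Real.exp (s * k) := by rw [← Real.exp_nat_mul]; ring_nf
  have h2 : Real.exp (s * R) ≤ Real.exp (s * |R|) :=
    Real.exp_le_exp.mpr (mul_le_mul_of_nonneg_left (le_abs_self R) hs)
  calc s ^ k * Real.exp (s * R) ≤ Real.exp (s * k) * Real.exp (s * |R|) := by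
        apply mul_le_mul h1 h2 (Real.exp_pos _).le (Real.exp_pos _).le
    _ = Real.exp (s * k + s * |R|) := (Real.exp_add _ _).symm
    _ ≤ Real.exp (((k : ℝ) + |R|) ^ 2 / 2 + s ^ 2) := by
        apply Real.exp_le_exp.mpr
        nlinarith [sq_nonneg (s - ((k : ℝ) + |R|))]
    _ = _ := Real.exp_add _ _

private lemma aux_key_int (ψ : ℝ → ℝ)
    (hpos : ∀ s ≥ (0:ℝ), 0 < ψ s)
    (hint : IntegrableOn (fun s => ψ s * Real.exp (s ^ 2)) (Set.Ioi 0))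
    (f : ℝ → ℝ) (hf : AEStronglyMeasurable f (volume.restrict (Set.Ioi 0)))
    (n m : ℕ) (R : ℝ)
    (hb : ∀ s ∈ Set.Ioi (0:ℝ), |f s| ≤ (s ^ n + s ^ m) * ψ s * Real.exp (s * R)) :
    IntegrableOn f (Set.Ioi 0) := by
  set C : ℝ := Real.exp (((n : ℝ) + |R|) ^ 2 / 2) + Real.exp (((m : ℝ) + |R|) ^ 2 / 2) with hC
  refine Integrable.mono (hint.const_mul C) hf ?_
  rw [ae_restrict_iff' measurableSet_Ioi]
  filter_upwards with s hs
  have hs0 : (0:ℝ) < s := hs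
  have hψ := hpos s hs0.le
  have h1 := aux_exp_bound n R s hs0.le
  have h2 := aux_exp_bound m R s hs0.le
  have key : (s ^ n + s ^ m) * ψ s * Real.exp (s * R) ≤ C * (ψ s * Real.exp (s ^ 2)) := by
    have : (s ^ n + s ^ m) * Real.exp (s * R) ≤ C * Real.exp (s ^ 2) := by
      rw [hC]; nlinarith [h1, h2]
    nlinarith [this, hψ.le, (Real.exp_pos (s ^ 2)).le]
  have hCpos : 0 < C := by positivity
  calc ‖f s‖ = |f s| := rfl
    _ ≤ (s ^ n + s ^ m) * ψ s * Real.exp (s * R) := hb s hs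
    _ ≤ C * (ψ s * Real.exp (s ^ 2)) := key
    _ ≤ ‖C * (ψ s * Real.exp (s ^ 2))‖ := le_abs_self _

theorem stmt_5 (ψ : ℝ → ℝ)
    (hcont : ContinuousOn ψ (Set.Ici 0))
    (hpos : ∀ s ≥ (0:ℝ), 0 < ψ s)
    (hint : IntegrableOn (fun s => ψ s * Real.exp (s ^ 2)) (Set.Ioi 0))
    (H : ℝ → ℝ)
    (hH : ∀ u : ℝ, H u = ∫ s in Set.Ioi (0:ℝ), (1 - s ^ 2) * ψ s * Real.sinh (s * u))
    (u : ℝ) (hu : 0 < u) :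
    deriv (deriv H) u - H u
        = -∫ s in Set.Ioi (0:ℝ), (1 - s ^ 2) ^ 2 * ψ s * Real.sinh (s * u)
    ∧ 0 < ∫ s in Set.Ioi (0:ℝ), (1 - s ^ 2) ^ 2 * ψ s * Real.sinh (s * u)
    ∧ (H u ≤ 0 → deriv (deriv H) u < 0) := by
  have hψae : AEStronglyMeasurable ψ (volume.restrict (Set.Ioi 0)) :=
    (hcont.mono (Set.Ioi_subset_Ici le_rfl)).aestronglyMeasurable measurableSet_Ioi
  -- measurability of the various integrands
  have meas0 : ∀ v : ℝ, AEStronglyMeasurable (fun s => (1 - s ^ 2) * ψ s * Real.sinh (s * v))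
      (volume.restrict (Set.Ioi 0)) := fun v =>
    (((continuous_const.sub (continuous_pow 2)).aestronglyMeasurable.mul hψae).mul
      ((Real.continuous_sinh.comp (continuous_id.mul continuous_const)).aestronglyMeasurable))
  have meas1 : ∀ v : ℝ, AEStronglyMeasurable (fun s => s * (1 - s ^ 2) * ψ s * Real.cosh (s * v))
      (volume.restrict (Set.Ioi 0)) := fun v =>
    (((continuous_id.mul (continuous_const.sub (continuous_pow 2))).aestronglyMeasurable.mul
      hψae).mul
      ((Real.continuous_cosh.comp (continuous_id.mul continuous_const)).aestronglyMeasurable))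
  have meas2 : ∀ v : ℝ, AEStronglyMeasurable
      (fun s => s ^ 2 * (1 - s ^ 2) * ψ s * Real.sinh (s * v))
      (volume.restrict (Set.Ioi 0)) := fun v =>
    ((((continuous_pow 2).mul (continuous_const.sub (continuous_pow 2))).aestronglyMeasurable.mul
      hψae).mul
      ((Real.continuous_sinh.comp (continuous_id.mul continuous_const)).aestronglyMeasurable))
  -- abs bounds
  have habs : ∀ (s v : ℝ), 0 < s → |Real.sinh (s * v)| ≤ Real.exp (s * |v|) ∧
      Real.cosh (s * v) ≤ Real.exp (s * |v|) := by
    intro s v hs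
    have : |s * v| = s * |v| := by rw [abs_mul, abs_of_pos hs]
    constructor
    · simpa [this] using aux_sinh_le (s * v)
    · simpa [this] using aux_cosh_le (s * v)
  -- integrability of all three families, for v in a ball of radius giving |v| ≤ R
  have int0 : ∀ v : ℝ, IntegrableOn (fun s => (1 - s ^ 2) * ψ s * Real.sinh (s * v))
      (Set.Ioi 0) := by
    intro v
    refine aux_key_int ψ hpos hint _ (meas0 v) 0 2 |v| (fun s hs => ?_)
    have hs0 : (0:ℝ) < s := hs
    have hψ := (hpos s hs0.le).le
    have h1 := (habs s v hs0).1
    have h2 : |1 - s ^ 2| ≤ s ^ 0 + s ^ 2 := by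
      rw [abs_le]; constructor <;> nlinarith [sq_nonneg s]
    calc |(1 - s ^ 2) * ψ s * Real.sinh (s * v)|
        = |1 - s ^ 2| * ψ s * |Real.sinh (s * v)| := by
          rw [abs_mul, abs_mul, abs_of_nonneg hψ]
      _ ≤ (s ^ 0 + s ^ 2) * ψ s * Real.exp (s * |v|) := by
          apply mul_le_mul (mul_le_mul_of_nonneg_right h2 hψ) h1 (abs_nonneg _) (by positivity)
  have int1 : ∀ v : ℝ, IntegrableOn (fun s => s * (1 - s ^ 2) * ψ s * Real.cosh (s * v))
      (Set.Ioi 0) := by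
    intro v
    refine aux_key_int ψ hpos hint _ (meas1 v) 1 3 |v| (fun s hs => ?_)
    have hs0 : (0:ℝ) < s := hs
    have hψ := (hpos s hs0.le).le
    have h1 := (habs s v hs0).2
    have h2 : |s * (1 - s ^ 2)| ≤ s ^ 1 + s ^ 3 := by
      rw [abs_le]; constructor <;> nlinarith [sq_nonneg s, hs0.le]
    calc |s * (1 - s ^ 2) * ψ s * Real.cosh (s * v)|
        = |s * (1 - s ^ 2)| * ψ s * |Real.cosh (s * v)| := by
          rw [abs_mul, abs_mul, abs_of_nonneg hψ]
      _ ≤ (s ^ 1 + s ^ 3) * ψ s * Real.exp (s * |v|) := by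
          rw [abs_of_pos (Real.cosh_pos _)]
          apply mul_le_mul (mul_le_mul_of_nonneg_right h2 hψ) h1 (Real.cosh_pos _).le
            (by positivity)
  have int2 : ∀ v : ℝ, IntegrableOn (fun s => s ^ 2 * (1 - s ^ 2) * ψ s * Real.sinh (s * v))
      (Set.Ioi 0) := by
    intro v
    refine aux_key_int ψ hpos hint _ (meas2 v) 2 4 |v| (fun s hs => ?_)
    have hs0 : (0:ℝ) < s := hs
    have hψ := (hpos s hs0.le).le
    have h1 := (habs s v hs0).1
    have h2 : |s ^ 2 * (1 - s ^ 2)| ≤ s ^ 2 + s ^ 4 := by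
      rw [abs_le]; constructor <;> nlinarith [sq_nonneg s, sq_nonneg (s ^ 2)]
    calc |s ^ 2 * (1 - s ^ 2) * ψ s * Real.sinh (s * v)|
        = |s ^ 2 * (1 - s ^ 2)| * ψ s * |Real.sinh (s * v)| := by
          rw [abs_mul, abs_mul, abs_of_nonneg hψ]
      _ ≤ (s ^ 2 + s ^ 4) * ψ s * Real.exp (s * |v|) := by
          apply mul_le_mul (mul_le_mul_of_nonneg_right h2 hψ) h1 (abs_nonneg _) (by positivity)
  -- first derivative
  have hA : ∀ v : ℝ, HasDerivAt H
      (∫ s in Set.Ioi (0:ℝ), s * (1 - s ^ 2) * ψ s * Real.cosh (s * v)) v := by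
    intro v
    set R : ℝ := |v| + 1 with hR
    have key := hasDerivAt_integral_of_dominated_loc_of_deriv_le (μ := volume.restrict (Set.Ioi 0))
      (F := fun x s => (1 - s ^ 2) * ψ s * Real.sinh (s * x))
      (F' := fun x s => s * (1 - s ^ 2) * ψ s * Real.cosh (s * x))
      (bound := fun s => (s ^ 1 + s ^ 3) * ψ s * Real.exp (s * R))
      (x₀ := v) (Metric.ball_mem_nhds v one_pos) (Filter.Eventually.of_forall fun x => meas0 x) (int0 v) (meas1 v)
      ?_ ?_ ?_
    · have h2 := key.2
      have : H = fun n => ∫ s in Set.Ioi (0:ℝ), (1 - s ^ 2) * ψ s * Real.sinh (s * n) :=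
        funext fun w => hH w
      rw [this]
      exact h2
    · filter_upwards [self_mem_ae_restrict measurableSet_Ioi] with s hsmem
      intro x hx
      have hs : (0:ℝ) < s := hsmem
      have hψ := (hpos s hs.le).le
      have hxR : |x| ≤ R := by
        have := mem_ball_iff_norm.mp hx
        rw [hR]
        have : |x - v| < 1 := this
        have := abs_sub_abs_le_abs_sub x v
        linarith
      have h1 : Real.cosh (s * x) ≤ Real.exp (s * R) := by
        refine (habs s x hs).2.trans (Real.exp_le_exp.mpr ?_)
        exact mul_le_mul_of_nonneg_left hxR hs.le
      have h2 : |s * (1 - s ^ 2)| ≤ s ^ 1 + s ^ 3 := by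
        rw [abs_le]; constructor <;> nlinarith [sq_nonneg s, hs.le]
      calc ‖s * (1 - s ^ 2) * ψ s * Real.cosh (s * x)‖
          = |s * (1 - s ^ 2)| * ψ s * Real.cosh (s * x) := by
            rw [Real.norm_eq_abs, abs_mul, abs_mul, abs_of_nonneg hψ,
              abs_of_pos (Real.cosh_pos _)]
        _ ≤ (s ^ 1 + s ^ 3) * ψ s * Real.exp (s * R) :=
            mul_le_mul (mul_le_mul_of_nonneg_right h2 hψ) h1 (Real.cosh_pos _).le (by positivity)
    · refine aux_key_int ψ hpos hint _ ?_ 1 3 R (fun s hs => ?_)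
      · exact (((continuous_pow 1).add (continuous_pow 3)).aestronglyMeasurable.mul hψae).mul
          (Real.continuous_exp.comp (continuous_id.mul continuous_const)).aestronglyMeasurable
      · have hs0 : (0:ℝ) < s := hs
        have hψ := (hpos s hs0.le).le
        have : (0:ℝ) ≤ (s ^ 1 + s ^ 3) * ψ s * Real.exp (s * R) := by positivity
        rw [abs_of_nonneg this]
    · filter_upwards with s
      intro x hx
      have hlin : HasDerivAt (fun y : ℝ => s * y) s x := by
        simpa using (hasDerivAt_id x).const_mul s
      have := ((Real.hasDerivAt_sinh (s * x)).comp x hlin).const_mul ((1 - s ^ 2) * ψ s)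
      convert this using 1
      · rfl
      · rfl
      ring
  -- second derivative
  have hB : ∀ v : ℝ, HasDerivAt
      (fun w => ∫ s in Set.Ioi (0:ℝ), s * (1 - s ^ 2) * ψ s * Real.cosh (s * w))
      (∫ s in Set.Ioi (0:ℝ), s ^ 2 * (1 - s ^ 2) * ψ s * Real.sinh (s * v)) v := by
    intro v
    set R : ℝ := |v| + 1 with hR
    have key := hasDerivAt_integral_of_dominated_loc_of_deriv_le (μ := volume.restrict (Set.Ioi 0))
      (F := fun x s => s * (1 - s ^ 2) * ψ s * Real.cosh (s * x))
      (F' := fun x s => s ^ 2 * (1 - s ^ 2) * ψ s * Real.sinh (s * x))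
      (bound := fun s => (s ^ 2 + s ^ 4) * ψ s * Real.exp (s * R))
      (x₀ := v) (Metric.ball_mem_nhds v one_pos) (Filter.Eventually.of_forall fun x => meas1 x) (int1 v) (meas2 v)
      ?_ ?_ ?_
    · exact key.2
    · filter_upwards [self_mem_ae_restrict measurableSet_Ioi] with s hsmem
      intro x hx
      have hs : (0:ℝ) < s := hsmem
      have hψ := (hpos s hs.le).le
      have hxR : |x| ≤ R := by
        have h := mem_ball_iff_norm.mp hx
        rw [hR]
        have h' : |x - v| < 1 := h
        have := abs_sub_abs_le_abs_sub x v
        linarith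
      have h1 : |Real.sinh (s * x)| ≤ Real.exp (s * R) := by
        refine (habs s x hs).1.trans (Real.exp_le_exp.mpr ?_)
        exact mul_le_mul_of_nonneg_left hxR hs.le
      have h2 : |s ^ 2 * (1 - s ^ 2)| ≤ s ^ 2 + s ^ 4 := by
        rw [abs_le]; constructor <;> nlinarith [sq_nonneg s, sq_nonneg (s ^ 2)]
      calc ‖s ^ 2 * (1 - s ^ 2) * ψ s * Real.sinh (s * x)‖
          = |s ^ 2 * (1 - s ^ 2)| * ψ s * |Real.sinh (s * x)| := by
            rw [Real.norm_eq_abs, abs_mul, abs_mul, abs_of_nonneg hψ]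
        _ ≤ (s ^ 2 + s ^ 4) * ψ s * Real.exp (s * R) :=
            mul_le_mul (mul_le_mul_of_nonneg_right h2 hψ) h1 (abs_nonneg _) (by positivity)
    · refine aux_key_int ψ hpos hint _ ?_ 2 4 R (fun s hs => ?_)
      · exact (((continuous_pow 2).add (continuous_pow 4)).aestronglyMeasurable.mul hψae).mul
          (Real.continuous_exp.comp (continuous_id.mul continuous_const)).aestronglyMeasurable
      · have hs0 : (0:ℝ) < s := hs
        have hψ := (hpos s hs0.le).le
        have : (0:ℝ) ≤ (s ^ 2 + s ^ 4) * ψ s * Real.exp (s * R) := by positivity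
        rw [abs_of_nonneg this]
    · filter_upwards with s
      intro x hx
      have hlin : HasDerivAt (fun y : ℝ => s * y) s x := by
        simpa using (hasDerivAt_id x).const_mul s
      have := ((Real.hasDerivAt_cosh (s * x)).comp x hlin).const_mul (s * (1 - s ^ 2) * ψ s)
      convert this using 1
      · rfl
      · rfl
      ring
  have hderivH : deriv H = fun v => ∫ s in Set.Ioi (0:ℝ),
      s * (1 - s ^ 2) * ψ s * Real.cosh (s * v) := funext fun v => (hA v).deriv
  have hdd : deriv (deriv H) u = ∫ s in Set.Ioi (0:ℝ),
      s ^ 2 * (1 - s ^ 2) * ψ s * Real.sinh (s * u) := by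
    rw [hderivH]; exact (hB u).deriv
  -- the main identity
  have hmain : deriv (deriv H) u - H u
      = -∫ s in Set.Ioi (0:ℝ), (1 - s ^ 2) ^ 2 * ψ s * Real.sinh (s * u) := by
    rw [hdd, hH u, ← integral_sub (int2 u) (int0 u)]
    rw [show (fun s => s ^ 2 * (1 - s ^ 2) * ψ s * Real.sinh (s * u)
        - (1 - s ^ 2) * ψ s * Real.sinh (s * u))
        = fun s => -((1 - s ^ 2) ^ 2 * ψ s * Real.sinh (s * u)) from funext fun s => by ring]
    exact integral_neg _
  -- integrability of the squared integrand
  have intI : IntegrableOn (fun s => (1 - s ^ 2) ^ 2 * ψ s * Real.sinh (s * u)) (Set.Ioi 0) := by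
    have h := (int0 u).sub (int2 u)
    refine h.congr ?_
    filter_upwards with s
    simp only [Pi.sub_apply]
    ring
  -- positivity
  have hposI : 0 < ∫ s in Set.Ioi (0:ℝ), (1 - s ^ 2) ^ 2 * ψ s * Real.sinh (s * u) := by
    rw [setIntegral_pos_iff_support_of_nonneg_ae ?_ intI]
    · refine lt_of_lt_of_le ?_ (measure_mono (?_ :
        Set.Ioi (1:ℝ) ⊆ Function.support (fun s => (1 - s ^ 2) ^ 2 * ψ s * Real.sinh (s * u))
          ∩ Set.Ioi 0))
      · simp
      · intro s hs
        have hs1 : (1:ℝ) < s := hs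
        have hs0 : (0:ℝ) < s := lt_trans one_pos hs1
        refine ⟨?_, hs0⟩
        have h0 : (0:ℝ) < s ^ 2 - 1 := by nlinarith
        have h1 : (0:ℝ) < (1 - s ^ 2) ^ 2 := by nlinarith [mul_pos h0 h0]
        have h2 := hpos s hs0.le
        have h3 : 0 < Real.sinh (s * u) := Real.sinh_pos_iff.mpr (mul_pos hs0 hu)
        exact ne_of_gt (mul_pos (mul_pos h1 h2) h3)
    · filter_upwards [self_mem_ae_restrict measurableSet_Ioi] with s hs
      have hs0 : (0:ℝ) < s := hs
      have := (hpos s hs0.le).le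
      have hsh : 0 ≤ Real.sinh (s * u) := (Real.sinh_pos_iff.mpr (by positivity)).le
      positivity
  exact ⟨hmain, hposI, fun hHu => by
    have : deriv (deriv H) u = H u - ∫ s in Set.Ioi (0:ℝ),
        (1 - s ^ 2) ^ 2 * ψ s * Real.sinh (s * u) := by linarith [hmain]
    linarith⟩
end

section
/- Let ψ : [0,∞) → (0,∞) be continuous with s ↦ ψ(s) e^{s²} integrable, and H(u) = ∫₀^∞ (1 - s²) ψ(s) sinh(s u) ds. Then H changes sign at most once on (0, ∞): if H(u_*) = 0 for some u_* > 0, then H(u) < 0 for all u > u_*. -/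
open MeasureTheory Real

lemma aux_sinh_lt {t : ℝ} (ht : 0 < t) : Real.sinh t < t * Real.cosh t := by
  have key : StrictMonoOn (fun t => t * Real.cosh t - Real.sinh t) (Set.Ici 0) := by
    apply strictMonoOn_of_deriv_pos (convex_Ici 0)
    · exact (Continuous.sub (continuous_id.mul Real.continuous_cosh) Real.continuous_sinh).continuousOn
    · intro x hx
      rw [interior_Ici] at hx
      have hd : HasDerivAt (fun t => t * Real.cosh t - Real.sinh t)
          (1 * Real.cosh x + x * Real.sinh x - Real.cosh x) x :=
        ((hasDerivAt_id x).mul (Real.hasDerivAt_cosh x)).sub (Real.hasDerivAt_sinh x)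
      rw [hd.deriv]
      have hx' : (0:ℝ) < x := hx
      have h1 : 0 < Real.sinh x := Real.sinh_pos_iff.2 hx'
      nlinarith
  have h := key Set.self_mem_Ici (Set.mem_Ici.2 ht.le) ht
  simp at h
  linarith

lemma aux_ratio {x y : ℝ} (hx : 0 < x) (hxy : x < y) : y * Real.sinh x < x * Real.sinh y := by
  have key : StrictMonoOn (fun t => Real.sinh t / t) (Set.Ioi 0) := by
    apply strictMonoOn_of_deriv_pos (convex_Ioi 0)
    · exact ContinuousOn.div Real.continuous_sinh.continuousOn continuousOn_id
        (fun t ht => ne_of_gt ht)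
    · intro t ht
      rw [interior_Ioi] at ht
      have hd : HasDerivAt (fun t => Real.sinh t / t)
          ((Real.cosh t * t - Real.sinh t * 1) / t ^ 2) t :=
        (Real.hasDerivAt_sinh t).div (hasDerivAt_id t) (ne_of_gt ht)
      rw [hd.deriv]
      apply div_pos _ (pow_pos ht 2)
      have := aux_sinh_lt ht
      nlinarith
  have h := key (Set.mem_Ioi.2 hx) (Set.mem_Ioi.2 (hx.trans hxy)) hxy
  simp only [] at h
  rw [div_lt_div_iff₀ hx (hx.trans hxy)] at h
  linarith

lemma aux_mono {a b : ℝ} (hb : 0 < b) (hba : b < a) :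
    StrictMonoOn (fun s => Real.sinh (s * a) / Real.sinh (s * b)) (Set.Ioi 0) := by
  have ha : 0 < a := hb.trans hba
  apply strictMonoOn_of_deriv_pos (convex_Ioi 0)
  · apply ContinuousOn.div
    · exact (Real.continuous_sinh.comp (continuous_id.mul continuous_const)).continuousOn
    · exact (Real.continuous_sinh.comp (continuous_id.mul continuous_const)).continuousOn
    · intro s hs
      exact ne_of_gt (Real.sinh_pos_iff.2 (mul_pos hs hb))
  · intro s hs
    rw [interior_Ioi] at hs
    have hs' : (0:ℝ) < s := hs
    have hsb : 0 < Real.sinh (s * b) := Real.sinh_pos_iff.2 (mul_pos hs hb)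
    have hda : HasDerivAt (fun s => Real.sinh (s * a)) (Real.cosh (s * a) * (1 * a)) s :=
      ((hasDerivAt_id s).mul_const a).sinh
    have hdb : HasDerivAt (fun s => Real.sinh (s * b)) (Real.cosh (s * b) * (1 * b)) s :=
      ((hasDerivAt_id s).mul_const b).sinh
    have hd := hda.div hdb (ne_of_gt hsb)
    rw [show (fun s => Real.sinh (s * a) / Real.sinh (s * b)) =
      ((fun s => Real.sinh (s * a)) / fun s => Real.sinh (s * b)) from rfl, hd.deriv]
    apply div_pos _ (pow_pos hsb 2)
    have key := aux_ratio (x := s * (a - b)) (y := s * (a + b))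
      (mul_pos hs' (by linarith)) (by nlinarith)
    have e1 : s * (a + b) = s * a + s * b := by ring
    have e2 : s * (a - b) = s * a - s * b := by ring
    rw [e1, e2, Real.sinh_add, Real.sinh_sub] at key
    have h2 : 0 < s * (2 * (Real.cosh (s * a) * (1 * a) * Real.sinh (s * b) -
        Real.sinh (s * a) * (Real.cosh (s * b) * (1 * b)))) := by nlinarith [key]
    rcases mul_pos_iff.1 h2 with ⟨_, h⟩ | ⟨h, _⟩
    · linarith
    · linarith

theorem stmt_6 (ψ : ℝ → ℝ)
    (hcont : ContinuousOn ψ (Set.Ici 0))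
    (hpos : ∀ s ≥ (0:ℝ), 0 < ψ s)
    (hint : IntegrableOn (fun s => ψ s * Real.exp (s ^ 2)) (Set.Ioi 0))
    (H : ℝ → ℝ)
    (hH : ∀ u : ℝ, H u = ∫ s in Set.Ioi (0:ℝ), (1 - s ^ 2) * ψ s * Real.sinh (s * u))
    (ustar : ℝ) (hustar : 0 < ustar) (hzero : H ustar = 0) :
    ∀ u : ℝ, ustar < u → H u < 0 := by
  -- integrability of the integrand for any parameter v
  have integ : ∀ v : ℝ,
      IntegrableOn (fun s => (1 - s ^ 2) * ψ s * Real.sinh (s * v)) (Set.Ioi 0) := by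
    intro v
    have hmeas : AEStronglyMeasurable (fun s => (1 - s ^ 2) * ψ s * Real.sinh (s * v))
        (volume.restrict (Set.Ioi 0)) := by
      apply ContinuousOn.aestronglyMeasurable _ measurableSet_Ioi
      exact ((continuousOn_const.sub (continuousOn_pow 2)).mul
        (hcont.mono Set.Ioi_subset_Ici_self)).mul
        ((Real.continuous_sinh.comp (continuous_id.mul continuous_const)).continuousOn)
    apply Integrable.mono (hint.const_mul (2 * Real.exp (v ^ 2))) hmeas
    filter_upwards [ae_restrict_mem measurableSet_Ioi] with s hs
    have hs0 : (0:ℝ) < s := hs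
    have hψ := hpos s hs0.le
    have hb1 : |Real.sinh (s * v)| ≤ Real.exp (s * |v|) := by
      rw [Real.abs_sinh, abs_mul, abs_of_pos hs0, Real.sinh_eq]
      have h1 := Real.exp_pos (s * |v|)
      have h2 := Real.exp_pos (-(s * |v|))
      linarith
    have hb2 : Real.exp (s * |v|) ≤ Real.exp (s ^ 2 / 2 + v ^ 2 / 2) :=
      Real.exp_le_exp.2 (by nlinarith [sq_nonneg (s - |v|), sq_abs v])
    have hb3 : |1 - s ^ 2| ≤ 1 + s ^ 2 :=
      abs_le.2 ⟨by nlinarith [sq_nonneg s], by nlinarith [sq_nonneg s]⟩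
    have hb4 : 1 + s ^ 2 ≤ 2 * Real.exp (s ^ 2 / 2) := by
      nlinarith [Real.add_one_le_exp (s ^ 2 / 2)]
    have hnorm : ‖(1 - s ^ 2) * ψ s * Real.sinh (s * v)‖ =
        |1 - s ^ 2| * ψ s * |Real.sinh (s * v)| := by
      rw [Real.norm_eq_abs, abs_mul, abs_mul, abs_of_pos hψ]
    rw [hnorm, Real.norm_eq_abs]
    have e1 : Real.exp (v ^ 2) = Real.exp (v ^ 2 / 2) * Real.exp (v ^ 2 / 2) := by
      rw [← Real.exp_add]; congr 1; ring
    have e2 : Real.exp (s ^ 2) = Real.exp (s ^ 2 / 2) * Real.exp (s ^ 2 / 2) := by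
      rw [← Real.exp_add]; congr 1; ring
    have e3 : Real.exp (s ^ 2 / 2 + v ^ 2 / 2) = Real.exp (s ^ 2 / 2) * Real.exp (v ^ 2 / 2) :=
      Real.exp_add _ _
    have hre : 2 * Real.exp (v ^ 2) * (ψ s * Real.exp (s ^ 2)) =
        (2 * Real.exp (s ^ 2 / 2)) * ψ s * (Real.exp (s ^ 2 / 2 + v ^ 2 / 2)) *
          Real.exp (v ^ 2 / 2) := by
      rw [e1, e2, e3]; ring
    have habs : |2 * Real.exp (v ^ 2) * (ψ s * Real.exp (s ^ 2))| =
        2 * Real.exp (v ^ 2) * (ψ s * Real.exp (s ^ 2)) := by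
      apply abs_of_pos
      have := Real.exp_pos (v ^ 2); have := Real.exp_pos (s ^ 2); positivity
    rw [habs]
    calc |1 - s ^ 2| * ψ s * |Real.sinh (s * v)|
        ≤ (2 * Real.exp (s ^ 2 / 2)) * ψ s * Real.exp (s ^ 2 / 2 + v ^ 2 / 2) := by
          apply le_trans (mul_le_mul (mul_le_mul hb3 le_rfl hψ.le (by positivity))
            (hb1.trans hb2) (abs_nonneg _) (by positivity))
          exact mul_le_mul_of_nonneg_right
            (mul_le_mul_of_nonneg_right hb4 hψ.le) (Real.exp_pos _).le
      _ ≤ (2 * Real.exp (s ^ 2 / 2)) * ψ s * Real.exp (s ^ 2 / 2 + v ^ 2 / 2) *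
            Real.exp (v ^ 2 / 2) := by
          nlinarith [Real.one_le_exp (by positivity : (0:ℝ) ≤ v ^ 2 / 2),
            mul_pos (mul_pos (by positivity : (0:ℝ) < 2 * Real.exp (s ^ 2 / 2)) hψ)
              (Real.exp_pos (s ^ 2 / 2 + v ^ 2 / 2))]
      _ = 2 * Real.exp (v ^ 2) * (ψ s * Real.exp (s ^ 2)) := hre.symm
  intro u hu
  have hu0 : 0 < u := hustar.trans hu
  have hsu : 0 < Real.sinh ustar := Real.sinh_pos_iff.2 hustar
  set c : ℝ := Real.sinh u / Real.sinh ustar with hc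
  set g : ℝ → ℝ := fun s =>
    (1 - s ^ 2) * ψ s * Real.sinh (s * u) -
      c * ((1 - s ^ 2) * ψ s * Real.sinh (s * ustar)) with hgdef
  have hgint : IntegrableOn g (Set.Ioi 0) := (integ u).sub ((integ ustar).const_mul c)
  have hgval : ∫ s in Set.Ioi (0:ℝ), g s = H u := by
    rw [hgdef]
    rw [MeasureTheory.integral_sub (integ u) ((integ ustar).const_mul c),
      MeasureTheory.integral_const_mul, ← hH u, ← hH ustar, hzero]
    ring
  have mono := aux_mono hustar hu
  have hgpt : ∀ s ∈ Set.Ioi (0:ℝ), (s ≠ 1 → g s < 0) ∧ g s ≤ 0 := by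
    intro s hs
    have hs0 : (0:ℝ) < s := hs
    have hψ := hpos s hs0.le
    have hss : 0 < Real.sinh (s * ustar) := Real.sinh_pos_iff.2 (mul_pos hs0 hustar)
    have hfact : g s = (1 - s ^ 2) * ψ s *
        (Real.sinh (s * u) - c * Real.sinh (s * ustar)) := by rw [hgdef]; ring
    rcases lt_trichotomy s 1 with h1 | h1 | h1
    · have hlt := mono hs (Set.mem_Ioi.2 one_pos) h1
      simp only [one_mul] at hlt
      have hlt2 : Real.sinh (s * u) < c * Real.sinh (s * ustar) := by
        rw [hc, div_mul_eq_mul_div, lt_div_iff₀ hsu]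
        exact (div_lt_div_iff₀ hss hsu).1 hlt
      have hneg : g s < 0 := by
        rw [hfact]
        apply mul_neg_of_pos_of_neg (mul_pos (by nlinarith) hψ) (by linarith)
      exact ⟨fun _ => hneg, hneg.le⟩
    · subst h1
      have : g 1 = 0 := by
        rw [hfact, hc]
        field_simp
        norm_num
      constructor
      · intro h; exact absurd rfl h
      · rw [this]
    · have hlt := mono (Set.mem_Ioi.2 one_pos) hs h1
      simp only [one_mul] at hlt
      have hlt2 : c * Real.sinh (s * ustar) < Real.sinh (s * u) := by
        rw [hc, div_mul_eq_mul_div, div_lt_iff₀ hsu]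
        exact (div_lt_div_iff₀ hsu hss).1 hlt
      have hneg : g s < 0 := by
        rw [hfact]
        exact mul_neg_of_neg_of_pos (mul_neg_of_neg_of_pos (by nlinarith) hψ) (by linarith)
      exact ⟨fun _ => hneg, hneg.le⟩
  have key : 0 < ∫ s in Set.Ioi (0:ℝ), (-g) s := by
    rw [integral_pos_iff_support_of_nonneg_ae ?_ hgint.neg]
    · apply lt_of_lt_of_le _ (measure_mono
        (show Set.Ioi (2:ℝ) ⊆ Function.support (-g) by
          intro s hs
          have hs2 : (2:ℝ) < s := hs
          have hs0 : s ∈ Set.Ioi (0:ℝ) := Set.mem_Ioi.2 (by linarith)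
          have hneg := (hgpt s hs0).1 (by intro h; rw [h] at hs2; linarith)
          simp only [Function.mem_support, Pi.neg_apply, ne_eq, neg_eq_zero]
          intro hc0
          rw [hc0] at hneg
          exact lt_irrefl 0 hneg))
      rw [Measure.restrict_apply measurableSet_Ioi]
      rw [show Set.Ioi (2:ℝ) ∩ Set.Ioi 0 = Set.Ioi 2 from
        Set.inter_eq_self_of_subset_left (fun x hx => Set.mem_Ioi.2 (lt_trans (two_pos : (0:ℝ) < 2) hx))]
      simp [Real.volume_Ioi]
    · refine (ae_restrict_iff' measurableSet_Ioi).2 ?_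
      filter_upwards with s hs
      have := (hgpt s hs).2
      simp only [Pi.zero_apply, Pi.neg_apply]
      linarith
  have hnegint : ∫ s in Set.Ioi (0:ℝ), (-g) s = -H u := by
    rw [← hgval]
    simp only [Pi.neg_apply]
    exact MeasureTheory.integral_neg g
  rw [hnegint] at key
  linarith
end

section
/- For d = 1, D > 0 and α > 0, the function H(u) = ∫₀^∞ (1 - v²) v e^{-φ_α(v)/D} sinh(uv/D) dv tends to -∞ as u → +∞. -/
open MeasureTheory Real Filter

private noncomputable def gfun (D α u : ℝ) : ℝ → ℝ := fun v =>
  (1 - v ^ 2) * v * Real.exp (-(α / 4 * v ^ 4 + (1 - α) / 2 * v ^ 2) / D) *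
    Real.sinh (u * v / D)

private lemma gfun_cont (D α u : ℝ) : Continuous (gfun D α u) := by
  unfold gfun; fun_prop

private lemma gfun_integrable (D α : ℝ) (hD : 0 < D) (hα : 0 < α) (u : ℝ) (hu : 0 ≤ u) :
    IntegrableOn (gfun D α u) (Set.Ioi 0) := by
  set R : ℝ := max 1 (4 * D / α * (2 + u / D + |1 - α| / (2 * D))) with hRdef
  have hR1 : (1 : ℝ) ≤ R := le_max_left _ _
  have h1 : IntegrableOn (gfun D α u) (Set.Ioc 0 R) :=
    ((gfun_cont D α u).integrableOn_Icc (a := 0) (b := R)).mono_set Set.Ioc_subset_Icc_self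
  have h2 : IntegrableOn (gfun D α u) (Set.Ioi R) := by
    apply Integrable.mono' (exp_neg_integrableOn_Ioi R one_pos)
      ((gfun_cont D α u).aestronglyMeasurable.restrict)
    filter_upwards [ae_restrict_mem measurableSet_Ioi] with v hv
    have hv1 : (1 : ℝ) ≤ v := le_trans hR1 (le_of_lt hv)
    have hvK : 4 * D / α * (2 + u / D + |1 - α| / (2 * D)) ≤ v :=
      le_trans (le_max_right _ _) (le_of_lt hv)
    have hv0 : (0 : ℝ) < v := by linarith
    have hKv : (2 * D + u + |1 - α| / 2) * v ^ 3 ≤ α / 4 * v ^ 4 := by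
      have h' : 2 * D + u + |1 - α| / 2 ≤ α / 4 * v := by
        have := mul_le_mul_of_nonneg_left hvK (by positivity : (0:ℝ) ≤ α / 4)
        calc 2 * D + u + |1 - α| / 2
            = α / 4 * (4 * D / α * (2 + u / D + |1 - α| / (2 * D))) := by
              field_simp
          _ ≤ α / 4 * v := this
      calc (2 * D + u + |1 - α| / 2) * v ^ 3 ≤ (α / 4 * v) * v ^ 3 :=
            mul_le_mul_of_nonneg_right h' (by positivity)
        _ = α / 4 * v ^ 4 := by ring
    have hmul : D * v ^ 3 + D * v + u * v ≤ α / 4 * v ^ 4 + (1 - α) / 2 * v ^ 2 := by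
      have habs : -|1 - α| ≤ 1 - α := neg_abs_le _
      have hvc : v ≤ v ^ 3 := by nlinarith [mul_nonneg (mul_nonneg hv0.le (by linarith : (0:ℝ) ≤ v - 1)) (by linarith : (0:ℝ) ≤ v + 1)]
      nlinarith [mul_le_mul_of_nonneg_left hvc hD.le,
        mul_le_mul_of_nonneg_left hvc hu,
        mul_le_mul_of_nonneg_left (by nlinarith : v ^ 2 ≤ v ^ 3) (abs_nonneg (1 - α)),
        mul_le_mul_of_nonneg_right habs (sq_nonneg v)]
    have hexp : v ^ 3 + (-(α / 4 * v ^ 4 + (1 - α) / 2 * v ^ 2) / D) + u * v / D ≤ -1 * v := by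
      have key : v ^ 3 + u * v / D + v ≤ (α / 4 * v ^ 4 + (1 - α) / 2 * v ^ 2) / D := by
        rw [le_div_iff₀ hD]
        have heq : (v ^ 3 + u * v / D + v) * D = D * v ^ 3 + u * v + D * v := by
          field_simp
        rw [heq]; linarith
      have : -(α / 4 * v ^ 4 + (1 - α) / 2 * v ^ 2) / D
          = -((α / 4 * v ^ 4 + (1 - α) / 2 * v ^ 2) / D) := by ring
      rw [this]; linarith
    have hsinh : |Real.sinh (u * v / D)| ≤ Real.exp (u * v / D) := by
      have hx : (0:ℝ) ≤ u * v / D := by positivity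
      have hmono : Real.exp (-(u * v / D)) ≤ Real.exp (u * v / D) :=
        Real.exp_le_exp.mpr (by linarith)
      rw [Real.sinh_eq, abs_of_nonneg (by linarith : (0:ℝ) ≤ (Real.exp (u * v / D) - Real.exp (-(u * v / D))) / 2)]
      have := (Real.exp_pos (-(u * v / D))).le
      linarith
    have hpoly : |(1 - v ^ 2) * v| ≤ v ^ 3 := by
      rw [abs_mul, abs_of_nonneg hv0.le, abs_of_nonpos (by nlinarith : 1 - v ^ 2 ≤ 0)]
      nlinarith
    have hcube : v ^ 3 ≤ Real.exp (v ^ 3) := by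
      have := Real.add_one_le_exp (v ^ 3); linarith
    calc ‖gfun D α u v‖
        = |(1 - v ^ 2) * v| * Real.exp (-(α / 4 * v ^ 4 + (1 - α) / 2 * v ^ 2) / D) *
            |Real.sinh (u * v / D)| := by
          simp only [gfun, Real.norm_eq_abs, abs_mul, Real.abs_exp]
      _ ≤ Real.exp (v ^ 3) * Real.exp (-(α / 4 * v ^ 4 + (1 - α) / 2 * v ^ 2) / D) *
            Real.exp (u * v / D) := by
          have h1' : |(1 - v ^ 2) * v| ≤ Real.exp (v ^ 3) := le_trans hpoly hcube
          gcongr <;> positivity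
      _ = Real.exp (v ^ 3 + (-(α / 4 * v ^ 4 + (1 - α) / 2 * v ^ 2) / D) + u * v / D) := by
          rw [← Real.exp_add, ← Real.exp_add]
      _ ≤ Real.exp (-1 * v) := Real.exp_le_exp.mpr hexp
  have := h1.union h2
  apply this.mono_set
  intro x hx
  rcases le_or_gt x R with h | h
  · exact Or.inl ⟨hx, h⟩
  · exact Or.inr h

private lemma gfun_bound (D α : ℝ) (hD : 0 < D) (hα : 0 < α) (u : ℝ) (hu : 0 ≤ u) :
    (∫ v in Set.Ioi (0:ℝ), gfun D α u v) ≤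
      Real.exp (|1 - α| / (2 * D)) * Real.sinh (u / D) -
        6 * Real.exp (-(α * 81 / 4 + |1 - α| * 9 / 2) / D) * Real.sinh (2 * u / D) := by
  have hsinh0 : ∀ x : ℝ, 0 ≤ x → 0 ≤ Real.sinh x := by
    intro x hx; rw [← Real.sinh_zero]; exact Real.sinh_le_sinh.mpr hx
  have hint := gfun_integrable D α hD hα u hu
  have hsplit : Set.Ioc (0:ℝ) 1 ∪ Set.Ioi 1 = Set.Ioi 0 := Set.Ioc_union_Ioi_eq_Ioi zero_le_one
  have hint1 : IntegrableOn (gfun D α u) (Set.Ioc 0 1) :=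
    hint.mono_set (by rw [← hsplit]; exact Set.subset_union_left)
  have hint2 : IntegrableOn (gfun D α u) (Set.Ioi 1) :=
    hint.mono_set (by rw [← hsplit]; exact Set.subset_union_right)
  have heq : (∫ v in Set.Ioi (0:ℝ), gfun D α u v) =
      (∫ v in Set.Ioc (0:ℝ) 1, gfun D α u v) + ∫ v in Set.Ioi (1:ℝ), gfun D α u v := by
    rw [← hsplit, setIntegral_union (Set.Ioc_disjoint_Ioi le_rfl) measurableSet_Ioi hint1 hint2]
  have hI1 : (∫ v in Set.Ioc (0:ℝ) 1, gfun D α u v) ≤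
      Real.exp (|1 - α| / (2 * D)) * Real.sinh (u / D) := by
    have hmono : (∫ v in Set.Ioc (0:ℝ) 1, gfun D α u v) ≤
        ∫ _ in Set.Ioc (0:ℝ) 1, Real.exp (|1 - α| / (2 * D)) * Real.sinh (u / D) := by
      apply setIntegral_mono_on hint1
        (integrableOn_const measure_Ioc_lt_top.ne) measurableSet_Ioc
      intro v hv
      obtain ⟨hv0, hv1⟩ := hv
      have e1 : (1 - v ^ 2) * v ≤ 1 := by nlinarith
      have e2 : Real.exp (-(α / 4 * v ^ 4 + (1 - α) / 2 * v ^ 2) / D) ≤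
          Real.exp (|1 - α| / (2 * D)) := by
        apply Real.exp_le_exp.mpr
        have h0 : -(α / 4 * v ^ 4 + (1 - α) / 2 * v ^ 2) ≤ |1 - α| / 2 := by
          have habs : -|1 - α| ≤ 1 - α := neg_abs_le _
          nlinarith [sq_nonneg v, sq_nonneg (v ^ 2),
            mul_le_mul_of_nonneg_left (by nlinarith : v ^ 2 ≤ 1) (abs_nonneg (1 - α)),
            mul_le_mul_of_nonneg_right habs (sq_nonneg v)]
        calc -(α / 4 * v ^ 4 + (1 - α) / 2 * v ^ 2) / D ≤ (|1 - α| / 2) / D :=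
              (div_le_div_iff_of_pos_right hD).mpr h0
          _ = |1 - α| / (2 * D) := by ring
      have e3 : Real.sinh (u * v / D) ≤ Real.sinh (u / D) :=
        Real.sinh_le_sinh.mpr ((div_le_div_iff_of_pos_right hD).mpr (by nlinarith))
      have e3' : 0 ≤ Real.sinh (u * v / D) := hsinh0 _ (by positivity)
      calc gfun D α u v ≤ 1 * Real.exp (|1 - α| / (2 * D)) * Real.sinh (u / D) := by
            unfold gfun
            gcongr
            all_goals first | positivity | nlinarith
        _ = Real.exp (|1 - α| / (2 * D)) * Real.sinh (u / D) := by ring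
    calc (∫ v in Set.Ioc (0:ℝ) 1, gfun D α u v)
        ≤ ∫ _ in Set.Ioc (0:ℝ) 1, Real.exp (|1 - α| / (2 * D)) * Real.sinh (u / D) := hmono
      _ = Real.exp (|1 - α| / (2 * D)) * Real.sinh (u / D) := by
          rw [setIntegral_const]
          simp [Real.volume_Ioc]
  have hI2 : (∫ v in Set.Ioi (1:ℝ), gfun D α u v) ≤
      -(6 * Real.exp (-(α * 81 / 4 + |1 - α| * 9 / 2) / D) * Real.sinh (2 * u / D)) := by
    have hnegint : IntegrableOn (fun v => -gfun D α u v) (Set.Ioi 1) := hint2.neg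
    have hpos : 0 ≤ᶠ[ae (volume.restrict (Set.Ioi (1:ℝ)))] fun v => -gfun D α u v := by
      filter_upwards [ae_restrict_mem measurableSet_Ioi] with v hv
      have hv1 : (1:ℝ) < v := hv
      have hX : (1 - v ^ 2) * v ≤ 0 := by nlinarith
      have hES : 0 ≤ Real.exp (-(α / 4 * v ^ 4 + (1 - α) / 2 * v ^ 2) / D) *
          Real.sinh (u * v / D) :=
        mul_nonneg (Real.exp_pos _).le (hsinh0 _ (by positivity))
      have : gfun D α u v ≤ 0 := by
        unfold gfun
        calc (1 - v ^ 2) * v * Real.exp (-(α / 4 * v ^ 4 + (1 - α) / 2 * v ^ 2) / D) *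
              Real.sinh (u * v / D)
            = ((1 - v ^ 2) * v) * (Real.exp (-(α / 4 * v ^ 4 + (1 - α) / 2 * v ^ 2) / D) *
              Real.sinh (u * v / D)) := by ring
          _ ≤ 0 := mul_nonpos_of_nonpos_of_nonneg hX hES
      simpa using this
    have hsub : (∫ v in Set.Ioc (2:ℝ) 3, -gfun D α u v) ≤
        ∫ v in Set.Ioi (1:ℝ), -gfun D α u v :=
      setIntegral_mono_set hnegint hpos
        (HasSubset.Subset.eventuallyLE (by intro x hx; exact lt_trans one_lt_two hx.1))
    have hlow : 6 * Real.exp (-(α * 81 / 4 + |1 - α| * 9 / 2) / D) * Real.sinh (2 * u / D) ≤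
        ∫ v in Set.Ioc (2:ℝ) 3, -gfun D α u v := by
      have hconst : (∫ _ in Set.Ioc (2:ℝ) 3,
          6 * Real.exp (-(α * 81 / 4 + |1 - α| * 9 / 2) / D) * Real.sinh (2 * u / D)) =
          6 * Real.exp (-(α * 81 / 4 + |1 - α| * 9 / 2) / D) * Real.sinh (2 * u / D) := by
        rw [setIntegral_const]
        simp [Real.volume_Ioc]
        norm_num
      rw [← hconst]
      apply setIntegral_mono_on (integrableOn_const measure_Ioc_lt_top.ne)
        ((hint2.mono_set (by intro x hx; exact lt_trans one_lt_two hx.1)).neg)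
        measurableSet_Ioc
      intro v hv
      obtain ⟨hv2, hv3⟩ := hv
      have e1 : (6:ℝ) ≤ (v ^ 2 - 1) * v := by nlinarith
      have e2 : Real.exp (-(α * 81 / 4 + |1 - α| * 9 / 2) / D) ≤
          Real.exp (-(α / 4 * v ^ 4 + (1 - α) / 2 * v ^ 2) / D) := by
        apply Real.exp_le_exp.mpr
        apply (div_le_div_iff_of_pos_right hD).mpr
        have h9 : v ^ 2 ≤ 9 := by nlinarith
        have h81 : v ^ 4 ≤ 81 := by nlinarith
        have h1 : (1 - α) * v ^ 2 ≤ |1 - α| * 9 := by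
          calc (1 - α) * v ^ 2 ≤ |1 - α| * v ^ 2 :=
                mul_le_mul_of_nonneg_right (le_abs_self _) (sq_nonneg v)
            _ ≤ |1 - α| * 9 := mul_le_mul_of_nonneg_left h9 (abs_nonneg _)
        have h2 : α * v ^ 4 ≤ α * 81 := mul_le_mul_of_nonneg_left h81 hα.le
        linarith
      have e3 : Real.sinh (2 * u / D) ≤ Real.sinh (u * v / D) :=
        Real.sinh_le_sinh.mpr ((div_le_div_iff_of_pos_right hD).mpr (by nlinarith))
      have key : 6 * Real.exp (-(α * 81 / 4 + |1 - α| * 9 / 2) / D) * Real.sinh (2 * u / D) ≤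
          ((v ^ 2 - 1) * v) * Real.exp (-(α / 4 * v ^ 4 + (1 - α) / 2 * v ^ 2) / D) *
            Real.sinh (u * v / D) := by
        gcongr
        all_goals first | positivity | exact hsinh0 _ (by positivity) | nlinarith
      have hrw : -gfun D α u v = ((v ^ 2 - 1) * v) *
          Real.exp (-(α / 4 * v ^ 4 + (1 - α) / 2 * v ^ 2) / D) * Real.sinh (u * v / D) := by
        unfold gfun; ring
      simp only [Pi.neg_apply]
      rw [hrw]; exact key
    have := le_trans hlow hsub
    rw [integral_neg] at this
    linarith
  linarith [heq, hI1, hI2]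

theorem stmt_7 (D α : ℝ) (hD : 0 < D) (hα : 0 < α)
    (H : ℝ → ℝ)
    (hH : ∀ u : ℝ, H u = ∫ v in Set.Ioi (0:ℝ),
      (1 - v ^ 2) * v * Real.exp (-(α / 4 * v ^ 4 + (1 - α) / 2 * v ^ 2) / D) *
        Real.sinh (u * v / D)) :
    Tendsto H atTop atBot := by
  set E : ℝ := Real.exp (|1 - α| / (2 * D)) with hE
  set m : ℝ := 6 * Real.exp (-(α * 81 / 4 + |1 - α| * 9 / 2) / D) with hm
  have hm0 : 0 < m := by positivity
  have hs : Tendsto (fun u : ℝ => Real.sinh (u / D)) atTop atTop := by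
    apply tendsto_atTop_mono' atTop (f₁ := fun u => u / D)
    · filter_upwards [eventually_ge_atTop (0:ℝ)] with u hu
      exact Real.self_le_sinh_iff.mpr (by positivity)
    · exact tendsto_id.atTop_div_const hD
  have hc : Tendsto (fun u : ℝ => Real.cosh (u / D)) atTop atTop :=
    tendsto_atTop_mono (fun u => (Real.sinh_lt_cosh _).le) hs
  have hbound : Tendsto (fun u : ℝ => E * Real.sinh (u / D) - m * Real.sinh (2 * u / D))
      atTop atBot := by
    have h1 : Tendsto (fun u : ℝ => E - 2 * m * Real.cosh (u / D)) atTop atBot := by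
      have h2 : Tendsto (fun u : ℝ => 2 * m * Real.cosh (u / D)) atTop atTop :=
        hc.const_mul_atTop (by positivity)
      have h3 : Tendsto (fun u : ℝ => -(2 * m * Real.cosh (u / D))) atTop atBot :=
        tendsto_neg_atTop_atBot.comp h2
      have := tendsto_atBot_add_const_left atTop E h3
      simpa [sub_eq_add_neg] using this
    have hprod := hs.atTop_mul_atBot₀ h1
    apply hprod.congr
    intro u
    have : (2:ℝ) * u / D = 2 * (u / D) := by ring
    rw [this, Real.sinh_two_mul]
    ring
  apply tendsto_atBot_mono' atTop _ hbound
  filter_upwards [eventually_ge_atTop (0:ℝ)] with u hu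
  have hb := gfun_bound D α hD hα u hu
  rw [hH u]
  exact hb
end

section
/- Fix d ≥ 2 and let h(s) = ∫₀^{π/2} cos θ (sin θ)^{d-2} sinh(s cos θ) dθ for s > 0. Then the function s ↦ s h'(s)/h(s) is strictly monotone increasing on (0, ∞). -/
open MeasureTheory Real

lemma cont_sinh_term (k : ℕ) (s : ℝ) :
    Continuous fun θ => Real.cos θ * Real.sin θ ^ k * Real.sinh (s * Real.cos θ) := by
  

  exact (continuous_cos.mul (continuous_sin.pow k)).mul
    (Real.continuous_sinh.comp (continuous_const.mul continuous_cos))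

lemma cont_cosh_term (k : ℕ) (s : ℝ) :
    Continuous fun θ => Real.cos θ * Real.sin θ ^ k * (Real.cosh (s * Real.cos θ) * Real.cos θ) := by
  exact (continuous_cos.mul (continuous_sin.pow k)).mul
    ((Real.continuous_cosh.comp (continuous_const.mul continuous_cos)).mul continuous_cos)

lemma hasDeriv_h (k : ℕ) (s₀ : ℝ) :
    HasDerivAt (fun s => ∫ θ in (0:ℝ)..(Real.pi/2),
        Real.cos θ * Real.sin θ ^ k * Real.sinh (s * Real.cos θ))
      (∫ θ in (0:ℝ)..(Real.pi/2),
        Real.cos θ * Real.sin θ ^ k * (Real.cosh (s₀ * Real.cos θ) * Real.cos θ)) s₀ := by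
  have key := intervalIntegral.hasDerivAt_integral_of_dominated_loc_of_deriv_le
    (F := fun s θ => Real.cos θ * Real.sin θ ^ k * Real.sinh (s * Real.cos θ))
    (F' := fun s θ => Real.cos θ * Real.sin θ ^ k * (Real.cosh (s * Real.cos θ) * Real.cos θ))
    (x₀ := s₀) (a := 0) (b := Real.pi/2) (μ := volume)
    (bound := fun _ => Real.cosh (|s₀| + 1)) (Metric.ball_mem_nhds s₀ one_pos)
    (Filter.Eventually.of_forall fun x => ((cont_sinh_term k x).aestronglyMeasurable))
    ((cont_sinh_term k s₀).intervalIntegrable _ _)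
    ((cont_cosh_term k s₀).aestronglyMeasurable)
    ?_ (intervalIntegrable_const) ?_
  · exact key.2
  · refine Filter.Eventually.of_forall fun θ _ x hx => ?_
    have hcosh : Real.cosh (x * Real.cos θ) ≤ Real.cosh (|s₀| + 1) := by
      rw [Real.cosh_le_cosh]
      have h1 : |x * Real.cos θ| ≤ |x| := by
        rw [abs_mul]
        nlinarith [Real.abs_cos_le_one θ, abs_nonneg x, abs_nonneg (Real.cos θ)]
      have h2 : |x| ≤ |s₀| + 1 := by
        have := mem_ball_iff_norm.mp hx
        rw [Real.norm_eq_abs] at this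
        have := abs_sub_abs_le_abs_sub x s₀
        linarith
      calc |x * Real.cos θ| ≤ |x| := h1
        _ ≤ |s₀| + 1 := h2
        _ ≤ |(|s₀| + 1)| := le_abs_self _
    rw [Real.norm_eq_abs, abs_mul, abs_mul, abs_mul, abs_pow, abs_of_pos (Real.cosh_pos (x * Real.cos θ))]
    calc |Real.cos θ| * |Real.sin θ| ^ k * (Real.cosh (x * Real.cos θ) * |Real.cos θ|)
        ≤ 1 * 1 * (Real.cosh (|s₀| + 1) * 1) := by
          apply mul_le_mul
          · apply mul_le_mul (Real.abs_cos_le_one θ) _ (by positivity) zero_le_one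
            exact pow_le_one₀ (abs_nonneg _) (Real.abs_sin_le_one θ)
          · exact mul_le_mul hcosh (Real.abs_cos_le_one θ) (abs_nonneg _)
              (Real.cosh_pos _).le
          · positivity
          · norm_num
      _ = Real.cosh (|s₀| + 1) := by ring
  · refine Filter.Eventually.of_forall fun θ _ x _ => ?_
    exact ((hasDerivAt_mul_const (Real.cos θ)).sinh).const_mul _

lemma h_pos (k : ℕ) (s : ℝ) (hs : 0 < s) :
    0 < ∫ θ in (0:ℝ)..(Real.pi/2),
      Real.cos θ * Real.sin θ ^ k * Real.sinh (s * Real.cos θ) := by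
  apply intervalIntegral.intervalIntegral_pos_of_pos_on
    ((cont_sinh_term k s).intervalIntegrable _ _)
  · intro θ hθ
    obtain ⟨h0, h1⟩ := hθ
    have hcos : 0 < Real.cos θ := Real.cos_pos_of_mem_Ioo ⟨by linarith [Real.pi_div_two_pos], h1⟩
    have hsin : 0 < Real.sin θ := Real.sin_pos_of_pos_of_lt_pi h0 (by linarith [Real.pi_pos])
    have : 0 < Real.sinh (s * Real.cos θ) := by
      rw [Real.sinh_pos_iff]; positivity
    positivity
  · exact Real.pi_div_two_pos
set_option maxHeartbeats 1000000 in
lemma sinh_kernel_pos {t u x y : ℝ} (ht : 0 < t) (htu : t < u) (hx : 0 < x) (hy : 0 < y)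
    (hyx : y ≤ x) :
    0 < u*x*Real.cosh (u*x)*Real.sinh (t*y) + u*y*Real.cosh (u*y)*Real.sinh (t*x)
      - t*x*Real.cosh (t*x)*Real.sinh (u*y) - t*y*Real.cosh (t*y)*Real.sinh (u*x) := by
  have hu : 0 < u := ht.trans htu
  set G := u*x*Real.cosh (u*x)*Real.sinh (t*y) + u*y*Real.cosh (u*y)*Real.sinh (t*x)
      - t*x*Real.cosh (t*x)*Real.sinh (u*y) - t*y*Real.cosh (t*y)*Real.sinh (u*x) with hG
  set a := u*x + t*y with hadef
  set b := u*x - t*y with hbdef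
  set c := u*y + t*x with hcdef
  set e := u*y - t*x with hedef
  have key : 2*G = b*Real.sinh a - a*Real.sinh b + e*Real.sinh c - c*Real.sinh e := by
    rw [hG, hadef, hbdef, hcdef, hedef]
    simp only [Real.sinh_add, Real.sinh_sub]
    ring
  have ha : 0 < a := by rw [hadef]; nlinarith
  have hc : 0 < c := by rw [hcdef]; nlinarith
  have hb : 0 < b := by rw [hbdef]; nlinarith
  have hca : c ≤ a := by rw [hcdef, hadef]; nlinarith
  have heb : |e| ≤ b := by
    rw [abs_le, hedef, hbdef]; constructor <;> nlinarith
  have hm : 0 < a^2 - b^2 := by rw [hadef, hbdef]; nlinarith [mul_pos (mul_pos hu hx) (mul_pos ht hy)]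
  have hm' : c^2 - e^2 = a^2 - b^2 := by rw [hadef, hbdef, hcdef, hedef]; ring
  have habpos : 0 < a*b := mul_pos ha hb
  have hc2a2 : c^2 ≤ a^2 := by nlinarith
  have he2b2 : e^2 ≤ b^2 := sq_le_sq' (by linarith [(abs_le.mp heb).1]) (abs_le.mp heb).2
  set T : ℕ → ℝ := fun k => (b*a^(2*k+1) - a*b^(2*k+1) + e*c^(2*k+1) - c*e^(2*k+1))
      / (Nat.factorial (2*k+1) : ℝ) with hT
  have hs : HasSum T (2*G) := by
    rw [key]
    have h3 := (((Real.hasSum_sinh a).mul_left b).sub ((Real.hasSum_sinh b).mul_left a)).add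
      (((Real.hasSum_sinh c).mul_left e).sub ((Real.hasSum_sinh e).mul_left c))
    have hfg : T = (fun n : ℕ => b * (a ^ (2*n+1) / (Nat.factorial (2*n+1) : ℝ))
        - a * (b ^ (2*n+1) / (Nat.factorial (2*n+1) : ℝ))
        + (e * (c ^ (2*n+1) / (Nat.factorial (2*n+1) : ℝ)) - c * (e ^ (2*n+1) / (Nat.factorial (2*n+1) : ℝ)))) := by
      funext k; simp only [hT]; ring
    rw [hfg]
    convert h3 using 1
    · rfl
    ring
  have hnonneg : ∀ k, 0 ≤ T k := by
    intro k
    rw [hT]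
    apply div_nonneg _ (by positivity)
    have hre : b*a^(2*k+1) - a*b^(2*k+1) + e*c^(2*k+1) - c*e^(2*k+1)
        = a*b*((a^2)^k - (b^2)^k) + c*e*((c^2)^k - (e^2)^k) := by
      rw [← pow_mul, ← pow_mul, ← pow_mul, ← pow_mul]; ring
    rw [hre, ← geom_sum₂_mul (a^2) (b^2) k, ← geom_sum₂_mul (c^2) (e^2) k, hm']
    set S := ∑ i ∈ Finset.range k, (a^2)^i * (b^2)^(k-1-i) with hS
    set S' := ∑ i ∈ Finset.range k, (c^2)^i * (e^2)^(k-1-i) with hS'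
    have hS'0 : 0 ≤ S' := Finset.sum_nonneg fun i _ => by positivity
    have hS'S : S' ≤ S := by
      apply Finset.sum_le_sum
      intro i _
      exact mul_le_mul (pow_le_pow_left₀ (sq_nonneg c) hc2a2 i)
        (pow_le_pow_left₀ (sq_nonneg e) he2b2 _) (by positivity) (by positivity)
    have h5 : c * |e| ≤ a*b := mul_le_mul hca heb (abs_nonneg e) ha.le
    have h6 : -(c * |e|) ≤ c*e := by
      have := mul_le_mul_of_nonneg_left (neg_abs_le e) hc.le
      linarith
    have hA : c * |e| * S' ≤ a*b*S := mul_le_mul h5 hS'S hS'0 habpos.le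
    have hB : -(c * |e|)*S' ≤ c*e*S' := mul_le_mul_of_nonneg_right h6 hS'0
    nlinarith [mul_le_mul_of_nonneg_right hA hm.le, mul_le_mul_of_nonneg_right hB hm.le]
  have hpos1 : 0 < T 1 := by
    have hnum : b*a^(2*1+1) - a*b^(2*1+1) + e*c^(2*1+1) - c*e^(2*1+1)
        = (4*(t*u)*(x*y))*((u^2-t^2)*(x^2+y^2)) := by
      rw [hadef, hbdef, hcdef, hedef]; ring
    have h1 : 0 < u^2 - t^2 := by nlinarith
    simp only [hT]
    rw [hnum]
    apply div_pos
    · exact mul_pos (mul_pos (mul_pos (by norm_num) (mul_pos ht hu)) (mul_pos hx hy))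
        (mul_pos h1 (add_pos (pow_pos hx 2) (pow_pos hy 2)))
    · norm_num [Nat.factorial]
  have hle := le_hasSum hs 1 (fun j _ => hnonneg j)
  linarith

lemma sinh_kernel_pos' {t u x y : ℝ} (ht : 0 < t) (htu : t < u) (hx : 0 < x) (hy : 0 < y) :
    0 < u*x*Real.cosh (u*x)*Real.sinh (t*y) + u*y*Real.cosh (u*y)*Real.sinh (t*x)
      - t*x*Real.cosh (t*x)*Real.sinh (u*y) - t*y*Real.cosh (t*y)*Real.sinh (u*x) := by
  rcases le_total y x with hyx | hxy
  · exact sinh_kernel_pos ht htu hx hy hyx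
  · have := sinh_kernel_pos ht htu hy hx hxy
    linarith


lemma F_pos (k : ℕ) {s₁ s₂ : ℝ} (hs₁ : 0 < s₁) (h12 : s₁ < s₂) {θ : ℝ}
    (hθ : θ ∈ Set.Ioo (0:ℝ) (Real.pi/2)) {A B C D : ℝ}
    (hA : A = ∫ φ in (0:ℝ)..(Real.pi/2), Real.cos φ * Real.sin φ ^ k * Real.sinh (s₁ * Real.cos φ))
    (hB : B = ∫ φ in (0:ℝ)..(Real.pi/2), Real.cos φ * Real.sin φ ^ k * Real.sinh (s₂ * Real.cos φ))
    (hC : C = ∫ φ in (0:ℝ)..(Real.pi/2),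
      Real.cos φ * Real.sin φ ^ k * (Real.cosh (s₁ * Real.cos φ) * Real.cos φ))
    (hD : D = ∫ φ in (0:ℝ)..(Real.pi/2),
      Real.cos φ * Real.sin φ ^ k * (Real.cosh (s₂ * Real.cos φ) * Real.cos φ)) :
    0 < Real.cos θ * Real.sin θ ^ k * (Real.cosh (s₂ * Real.cos θ) * Real.cos θ) * (s₂ * A)
      - Real.cos θ * Real.sin θ ^ k * (Real.cosh (s₁ * Real.cos θ) * Real.cos θ) * (s₁ * B)
      + Real.cos θ * Real.sin θ ^ k * Real.sinh (s₁ * Real.cos θ) * (s₂ * D)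
      - Real.cos θ * Real.sin θ ^ k * Real.sinh (s₂ * Real.cos θ) * (s₁ * C) := by
  obtain ⟨hθ0, hθ1⟩ := hθ
  have hcosθ : 0 < Real.cos θ :=
    Real.cos_pos_of_mem_Ioo ⟨by linarith [Real.pi_div_two_pos], hθ1⟩
  have hsinθ : 0 < Real.sin θ := Real.sin_pos_of_pos_of_lt_pi hθ0 (by linarith [Real.pi_pos])
  rw [hA, hB, hC, hD]
  rw [← intervalIntegral.integral_const_mul s₂, ← intervalIntegral.integral_const_mul
      (Real.cos θ * Real.sin θ ^ k * (Real.cosh (s₂ * Real.cos θ) * Real.cos θ)),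
    ← intervalIntegral.integral_const_mul s₁, ← intervalIntegral.integral_const_mul
      (Real.cos θ * Real.sin θ ^ k * (Real.cosh (s₁ * Real.cos θ) * Real.cos θ)),
    ← intervalIntegral.integral_const_mul s₂, ← intervalIntegral.integral_const_mul
      (Real.cos θ * Real.sin θ ^ k * Real.sinh (s₁ * Real.cos θ)),
    ← intervalIntegral.integral_const_mul s₁, ← intervalIntegral.integral_const_mul
      (Real.cos θ * Real.sin θ ^ k * Real.sinh (s₂ * Real.cos θ))]
  have i1 : IntervalIntegrable (fun φ => Real.cos θ * Real.sin θ ^ k *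
      (Real.cosh (s₂ * Real.cos θ) * Real.cos θ) *
      (s₂ * (Real.cos φ * Real.sin φ ^ k * Real.sinh (s₁ * Real.cos φ)))) volume 0 (Real.pi/2) :=
    ((continuous_const.mul (continuous_const.mul (cont_sinh_term k s₁)))).intervalIntegrable _ _
  have i2 : IntervalIntegrable (fun φ => Real.cos θ * Real.sin θ ^ k *
      (Real.cosh (s₁ * Real.cos θ) * Real.cos θ) *
      (s₁ * (Real.cos φ * Real.sin φ ^ k * Real.sinh (s₂ * Real.cos φ)))) volume 0 (Real.pi/2) :=
    ((continuous_const.mul (continuous_const.mul (cont_sinh_term k s₂)))).intervalIntegrable _ _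
  have i3 : IntervalIntegrable (fun φ => Real.cos θ * Real.sin θ ^ k *
      Real.sinh (s₁ * Real.cos θ) *
      (s₂ * (Real.cos φ * Real.sin φ ^ k * (Real.cosh (s₂ * Real.cos φ) * Real.cos φ))))
      volume 0 (Real.pi/2) :=
    ((continuous_const.mul (continuous_const.mul (cont_cosh_term k s₂)))).intervalIntegrable _ _
  have i4 : IntervalIntegrable (fun φ => Real.cos θ * Real.sin θ ^ k *
      Real.sinh (s₂ * Real.cos θ) *
      (s₁ * (Real.cos φ * Real.sin φ ^ k * (Real.cosh (s₁ * Real.cos φ) * Real.cos φ))))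
      volume 0 (Real.pi/2) :=
    ((continuous_const.mul (continuous_const.mul (cont_cosh_term k s₁)))).intervalIntegrable _ _
  rw [← intervalIntegral.integral_sub i1 i2, ← intervalIntegral.integral_add (i1.sub i2) i3,
    ← intervalIntegral.integral_sub ((i1.sub i2).add i3) i4]
  apply intervalIntegral.intervalIntegral_pos_of_pos_on
    ((((i1.sub i2).add i3).sub i4))
  · intro φ ⟨hφ0, hφ1⟩
    have hcosφ : 0 < Real.cos φ :=
      Real.cos_pos_of_mem_Ioo ⟨by linarith [Real.pi_div_two_pos], hφ1⟩
    have hsinφ : 0 < Real.sin φ := Real.sin_pos_of_pos_of_lt_pi hφ0 (by linarith [Real.pi_pos])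
    have hker := sinh_kernel_pos' (t := s₁) (u := s₂) (x := Real.cos θ) (y := Real.cos φ)
      hs₁ h12 hcosθ hcosφ
    have hw : 0 < (Real.cos θ * Real.sin θ ^ k) * (Real.cos φ * Real.sin φ ^ k) :=
      mul_pos (mul_pos hcosθ (pow_pos hsinθ k)) (mul_pos hcosφ (pow_pos hsinφ k))
    have heq : Real.cos θ * Real.sin θ ^ k * (Real.cosh (s₂ * Real.cos θ) * Real.cos θ) *
        (s₂ * (Real.cos φ * Real.sin φ ^ k * Real.sinh (s₁ * Real.cos φ)))
      - Real.cos θ * Real.sin θ ^ k * (Real.cosh (s₁ * Real.cos θ) * Real.cos θ) *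
        (s₁ * (Real.cos φ * Real.sin φ ^ k * Real.sinh (s₂ * Real.cos φ)))
      + Real.cos θ * Real.sin θ ^ k * Real.sinh (s₁ * Real.cos θ) *
        (s₂ * (Real.cos φ * Real.sin φ ^ k * (Real.cosh (s₂ * Real.cos φ) * Real.cos φ)))
      - Real.cos θ * Real.sin θ ^ k * Real.sinh (s₂ * Real.cos θ) *
        (s₁ * (Real.cos φ * Real.sin φ ^ k * (Real.cosh (s₁ * Real.cos φ) * Real.cos φ)))
      = ((Real.cos θ * Real.sin θ ^ k) * (Real.cos φ * Real.sin φ ^ k)) *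
        (s₂ * Real.cos θ * Real.cosh (s₂ * Real.cos θ) * Real.sinh (s₁ * Real.cos φ)
          + s₂ * Real.cos φ * Real.cosh (s₂ * Real.cos φ) * Real.sinh (s₁ * Real.cos θ)
          - s₁ * Real.cos θ * Real.cosh (s₁ * Real.cos θ) * Real.sinh (s₂ * Real.cos φ)
          - s₁ * Real.cos φ * Real.cosh (s₁ * Real.cos φ) * Real.sinh (s₂ * Real.cos θ)) := by
      ring
    rw [heq]
    exact mul_pos hw hker
  · exact Real.pi_div_two_pos
lemma integral_F (k : ℕ) (s₁ s₂ : ℝ) {A B C D : ℝ}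
    (hA : A = ∫ φ in (0:ℝ)..(Real.pi/2), Real.cos φ * Real.sin φ ^ k * Real.sinh (s₁ * Real.cos φ))
    (hB : B = ∫ φ in (0:ℝ)..(Real.pi/2), Real.cos φ * Real.sin φ ^ k * Real.sinh (s₂ * Real.cos φ))
    (hC : C = ∫ φ in (0:ℝ)..(Real.pi/2),
      Real.cos φ * Real.sin φ ^ k * (Real.cosh (s₁ * Real.cos φ) * Real.cos φ))
    (hD : D = ∫ φ in (0:ℝ)..(Real.pi/2),
      Real.cos φ * Real.sin φ ^ k * (Real.cosh (s₂ * Real.cos φ) * Real.cos φ)) :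
    (∫ θ in (0:ℝ)..(Real.pi/2),
      (Real.cos θ * Real.sin θ ^ k * (Real.cosh (s₂ * Real.cos θ) * Real.cos θ) * (s₂ * A)
      - Real.cos θ * Real.sin θ ^ k * (Real.cosh (s₁ * Real.cos θ) * Real.cos θ) * (s₁ * B)
      + Real.cos θ * Real.sin θ ^ k * Real.sinh (s₁ * Real.cos θ) * (s₂ * D)
      - Real.cos θ * Real.sin θ ^ k * Real.sinh (s₂ * Real.cos θ) * (s₁ * C)))
    = 2 * (s₂ * D * A - s₁ * C * B) := by
  have i1 : IntervalIntegrable (fun θ => Real.cos θ * Real.sin θ ^ k *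
      (Real.cosh (s₂ * Real.cos θ) * Real.cos θ) * (s₂ * A)) volume 0 (Real.pi/2) :=
    ((cont_cosh_term k s₂).mul continuous_const).intervalIntegrable _ _
  have i2 : IntervalIntegrable (fun θ => Real.cos θ * Real.sin θ ^ k *
      (Real.cosh (s₁ * Real.cos θ) * Real.cos θ) * (s₁ * B)) volume 0 (Real.pi/2) :=
    ((cont_cosh_term k s₁).mul continuous_const).intervalIntegrable _ _
  have i3 : IntervalIntegrable (fun θ => Real.cos θ * Real.sin θ ^ k *
      Real.sinh (s₁ * Real.cos θ) * (s₂ * D)) volume 0 (Real.pi/2) :=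
    ((cont_sinh_term k s₁).mul continuous_const).intervalIntegrable _ _
  have i4 : IntervalIntegrable (fun θ => Real.cos θ * Real.sin θ ^ k *
      Real.sinh (s₂ * Real.cos θ) * (s₁ * C)) volume 0 (Real.pi/2) :=
    ((cont_sinh_term k s₂).mul continuous_const).intervalIntegrable _ _
  rw [intervalIntegral.integral_sub ((i1.sub i2).add i3) i4,
    intervalIntegral.integral_add (i1.sub i2) i3, intervalIntegral.integral_sub i1 i2,
    intervalIntegral.integral_mul_const, intervalIntegral.integral_mul_const,
    intervalIntegral.integral_mul_const, intervalIntegral.integral_mul_const,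
    ← hA, ← hB, ← hC, ← hD]
  ring

theorem stmt_8 (d : ℕ) (hd : 2 ≤ d)
    (h : ℝ → ℝ)
    (hh : ∀ s : ℝ, h s = ∫ θ in (0:ℝ)..(Real.pi / 2),
      Real.cos θ * (Real.sin θ) ^ (d - 2) * Real.sinh (s * Real.cos θ)) :
    StrictMonoOn (fun s => s * deriv h s / h s) (Set.Ioi (0:ℝ)) := by
  have hfun : h = fun s => ∫ θ in (0:ℝ)..(Real.pi/2),
      Real.cos θ * Real.sin θ ^ (d - 2) * Real.sinh (s * Real.cos θ) := funext hh
  have hDer : ∀ s : ℝ, deriv h s = ∫ θ in (0:ℝ)..(Real.pi/2),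
      Real.cos θ * Real.sin θ ^ (d - 2) * (Real.cosh (s * Real.cos θ) * Real.cos θ) := by
    intro s; rw [hfun]; exact (hasDeriv_h (d - 2) s).deriv
  intro s₁ hs₁ s₂ hs₂ h12
  simp only [Set.mem_Ioi] at hs₁ hs₂
  have h1 : 0 < h s₁ := by rw [hh s₁]; exact h_pos (d - 2) s₁ hs₁
  have h2 : 0 < h s₂ := by rw [hh s₂]; exact h_pos (d - 2) s₂ hs₂
  simp only
  rw [div_lt_div_iff₀ h1 h2]
  have hIpos : 0 < ∫ θ in (0:ℝ)..(Real.pi/2),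
      (Real.cos θ * Real.sin θ ^ (d - 2) * (Real.cosh (s₂ * Real.cos θ) * Real.cos θ)
        * (s₂ * h s₁)
      - Real.cos θ * Real.sin θ ^ (d - 2) * (Real.cosh (s₁ * Real.cos θ) * Real.cos θ)
        * (s₁ * h s₂)
      + Real.cos θ * Real.sin θ ^ (d - 2) * Real.sinh (s₁ * Real.cos θ) * (s₂ * deriv h s₂)
      - Real.cos θ * Real.sin θ ^ (d - 2) * Real.sinh (s₂ * Real.cos θ) * (s₁ * deriv h s₁)) := by
    apply intervalIntegral.intervalIntegral_pos_of_pos_on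
    · exact (((((cont_cosh_term (d - 2) s₂).mul continuous_const).sub
        ((cont_cosh_term (d - 2) s₁).mul continuous_const)).add
        ((cont_sinh_term (d - 2) s₁).mul continuous_const)).sub
        ((cont_sinh_term (d - 2) s₂).mul continuous_const)).intervalIntegrable _ _
    · intro θ hθ
      exact F_pos (d - 2) hs₁ h12 hθ (hh s₁) (hh s₂) (hDer s₁) (hDer s₂)
    · exact Real.pi_div_two_pos
  rw [integral_F (d - 2) s₁ s₂ (hh s₁) (hh s₂) (hDer s₁) (hDer s₂)] at hIpos
  nlinarith [hIpos]
end

section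
/- Let d ≥ 2, D > 0, u > 0, and f_u(v) = Z⁻¹ e^{-(φ_α(v) - u v₁)/D} be the polarized Gibbs state with φ_α(v) = (α/4)|v|⁴ + ((1-α)/2)|v|². Then for every coordinate i with 2 ≤ i ≤ d, ∫_{ℝ^d} v_i² f_u(v) dv = D. -/
open MeasureTheory Real Filter Set Topology

noncomputable def Sq (n : ℕ) (x : Fin (n+1) → ℝ) : ℝ := ∑ j, x j ^ 2

noncomputable def Gw (n : ℕ) (α D u : ℝ) (x : Fin (n+1) → ℝ) : ℝ :=
  Real.exp (-(α/4 * Sq n x ^ 2 + (1-α)/2 * Sq n x - u * x 0)/D)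

lemma Sq_nonneg (n : ℕ) (x : Fin (n+1) → ℝ) : 0 ≤ Sq n x :=
  Finset.sum_nonneg fun _ _ => sq_nonneg _

lemma Sq_continuous (n : ℕ) : Continuous (Sq n) :=
  continuous_finset_sum _ fun j _ => (continuous_apply j).pow 2

lemma Gw_continuous (n : ℕ) (α D u : ℝ) : Continuous (Gw n α D u) := by
  have h := Sq_continuous n
  unfold Gw
  exact Real.continuous_exp.comp (((((continuous_const.mul (h.pow 2)).add (continuous_const.mul h)).sub (continuous_const.mul (continuous_apply 0))).neg.div_const D))

lemma Gw_pos (n : ℕ) (α D u : ℝ) (x : Fin (n+1) → ℝ) : 0 < Gw n α D u x := Real.exp_pos _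

lemma sq_le_Sq (n : ℕ) (x : Fin (n+1) → ℝ) (k : Fin (n+1)) : x k ^ 2 ≤ Sq n x :=
  Finset.single_le_sum (f := fun j => x j ^ 2) (fun _ _ => sq_nonneg _) (Finset.mem_univ k)

lemma abs_le_one_add_Sq (n : ℕ) (x : Fin (n+1) → ℝ) (k : Fin (n+1)) :
    |x k| ≤ 1 + Sq n x := by
  have h1 := sq_le_Sq n x k
  have h2 := Sq_nonneg n x
  nlinarith [sq_abs (x k), abs_nonneg (x k)]

lemma Gw_bound (n : ℕ) {α D u : ℝ} (hα : 0 < α) (hD : 0 < D) (hu : 0 ≤ u) (m : ℕ) :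
    ∃ C : ℝ, 0 ≤ C ∧ ∀ x : Fin (n+1) → ℝ,
      (1 + Sq n x) ^ m * Gw n α D u x ≤ C * Real.exp (-∑ j, |x j|) := by
  set a : ℝ := α / (4*D) with ha_def
  have ha : 0 < a := by positivity
  set b : ℝ := (m : ℝ) + |1-α|/(2*D) + (u/D+1)/2 with hb_def
  set c : ℝ := (u/D+1)*(n+1)/2 with hc_def
  refine ⟨Real.exp (b^2/(4*a) + c), (Real.exp_pos _).le, fun x => ?_⟩
  set t := Sq n x with ht_def
  set T := ∑ j, |x j| with hT_def
  have ht0 : 0 ≤ t := Sq_nonneg n x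
  have hT0 : 0 ≤ T := Finset.sum_nonneg fun _ _ => abs_nonneg _
  have hTt : T^2 ≤ (n+1 : ℝ) * t := by
    have h := sq_sum_le_card_mul_sum_sq (s := (Finset.univ : Finset (Fin (n+1))))
      (f := fun j => |x j|)
    simp only [Finset.card_univ, Fintype.card_fin, sq_abs] at h
    calc T^2 ≤ ((n+1 : ℕ) : ℝ) * ∑ j, x j ^ 2 := h
    _ = (n+1:ℝ) * t := by push_cast; rfl
  have hT2 : 2*T ≤ (n+1:ℝ) + t := by nlinarith [sq_nonneg ((n+1:ℝ) - t)]
  have h1 : (1+t)^m ≤ Real.exp ((m:ℝ) * t) := by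
    calc (1+t)^m ≤ (Real.exp t)^m :=
          pow_le_pow_left₀ (by linarith) (by linarith [Real.add_one_le_exp t]) m
    _ = Real.exp ((m:ℝ)*t) := by rw [← Real.exp_nat_mul]
  have hx0 : x 0 ≤ T := by
    calc x 0 ≤ |x 0| := le_abs_self _
    _ ≤ T := Finset.single_le_sum (f := fun j => |x j|) (fun _ _ => abs_nonneg _)
        (Finset.mem_univ 0)
  have hGle : Gw n α D u x = Real.exp (-(a*t^2) - ((1-α)/(2*D))*t + (u/D)*(x 0)) := by
    unfold Gw
    rw [← ht_def]
    congr 1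
    rw [ha_def]
    field_simp
    ring
  have p1 : (u/D)*(x 0) ≤ (u/D)*T :=
    mul_le_mul_of_nonneg_left hx0 (by positivity)
  have p2 : -((1-α)/(2*D))*t ≤ (|1-α|/(2*D))*t := by
    apply mul_le_mul_of_nonneg_right _ ht0
    rw [show -((1-α)/(2*D)) = (-(1-α))/(2*D) by ring]
    gcongr
    exact neg_le_abs _
  have p3 : (u/D)*T + T ≤ c + ((u/D+1)/2)*t := by
    have h := mul_le_mul_of_nonneg_left hT2 (show (0:ℝ) ≤ (u/D+1)/2 by positivity)
    rw [hc_def]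
    nlinarith [h]
  have key1 : -(a*t^2) + b*t ≤ b^2/(4*a) := by
    rw [le_div_iff₀ (by positivity)]
    nlinarith [sq_nonneg (2*a*t - b)]
  have key2 : -(a*t^2) + (m:ℝ)*t + (|1-α|/(2*D))*t + ((u/D+1)/2)*t ≤ b^2/(4*a) := by
    calc -(a*t^2) + (m:ℝ)*t + (|1-α|/(2*D))*t + ((u/D+1)/2)*t
        = -(a*t^2) + b*t := by rw [hb_def]; ring
    _ ≤ b^2/(4*a) := key1
  calc (1+t)^m * Gw n α D u x
      ≤ Real.exp ((m:ℝ)*t) * Real.exp (-(a*t^2) - ((1-α)/(2*D))*t + (u/D)*(x 0)) := by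
        rw [hGle]; exact mul_le_mul_of_nonneg_right h1 (Real.exp_pos _).le
    _ = Real.exp ((m:ℝ)*t + (-(a*t^2) - ((1-α)/(2*D))*t + (u/D)*(x 0))) := by
        rw [← Real.exp_add]
    _ ≤ Real.exp (b^2/(4*a) + c - T) := by
        apply Real.exp_le_exp.2
        linarith [p1, p2, p3, key2]
    _ = Real.exp (b^2/(4*a) + c) * Real.exp (-T) := by rw [← Real.exp_add]; ring_nf

lemma integrable_exp_neg_abs : Integrable (fun s : ℝ => Real.exp (-|s|)) := by
  have h1 : IntegrableOn (fun s : ℝ => Real.exp (-|s|)) (Iic 0) := by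
    apply (integrableOn_exp_Iic 0).congr_fun _ measurableSet_Iic
    intro s hs
    simp only [Set.mem_Iic] at hs
    simp [abs_of_nonpos hs]
  have h2 : IntegrableOn (fun s : ℝ => Real.exp (-|s|)) (Ioi 0) := by
    apply (exp_neg_integrableOn_Ioi 0 one_pos).congr_fun _ measurableSet_Ioi
    intro s hs
    simp only [Set.mem_Ioi] at hs
    simp [abs_of_pos hs]
  have := h1.union h2
  rwa [Set.Iic_union_Ioi, integrableOn_univ] at this

lemma integrable_exp_neg_abs_sum (n : ℕ) :
    Integrable (fun x : Fin (n+1) → ℝ => Real.exp (-∑ j, |x j|)) := by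
  have h : (fun x : Fin (n+1) → ℝ => Real.exp (-∑ j, |x j|))
      = fun x => ∏ j, Real.exp (-|x j|) := by
    funext x
    rw [← Real.exp_sum]
    congr 1
    rw [← Finset.sum_neg_distrib]
  rw [h]
  exact Integrable.fin_nat_prod (fun _ => integrable_exp_neg_abs)

/-- Integrability of `P * G` from a polynomial bound on `P`. -/
lemma integrable_of_poly_bound (n : ℕ) {α D u : ℝ} (hα : 0 < α) (hD : 0 < D) (hu : 0 ≤ u)
    (m : ℕ) (P : (Fin (n+1) → ℝ) → ℝ) (hPc : Continuous P)
    (hPb : ∀ x, |P x| ≤ (1 + Sq n x) ^ m) :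
    Integrable (fun x => P x * Gw n α D u x) := by
  obtain ⟨C, hC0, hC⟩ := Gw_bound n hα hD hu m
  have hdom : Integrable (fun x : Fin (n+1) → ℝ => C * Real.exp (-∑ j, |x j|)) :=
    (integrable_exp_neg_abs_sum n).const_mul C
  apply hdom.mono ((hPc.mul (Gw_continuous n α D u)).aestronglyMeasurable)
  filter_upwards with x
  rw [Real.norm_eq_abs, Real.norm_eq_abs, Pi.mul_apply, abs_mul (P x), abs_of_pos (Gw_pos n α D u x)]
  calc |P x| * Gw n α D u x ≤ (1 + Sq n x) ^ m * Gw n α D u x :=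
        mul_le_mul_of_nonneg_right (hPb x) (Gw_pos n α D u x).le
    _ ≤ C * Real.exp (-∑ j, |x j|) := hC x
    _ ≤ |C * Real.exp (-∑ j, |x j|)| := le_abs_self _

noncomputable def Mon (n : ℕ) (α D u : ℝ) (i : Fin (n+1)) (a b c : ℕ)
    (x : Fin (n+1) → ℝ) : ℝ :=
  x i ^ a * x 0 ^ b * Sq n x ^ c * Gw n α D u x

lemma Mon_poly_bound (n : ℕ) (i : Fin (n+1)) (a b c : ℕ) (x : Fin (n+1) → ℝ) :
    |x i ^ a * x 0 ^ b * Sq n x ^ c| ≤ (1 + Sq n x) ^ (a + b + c) := by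
  have ht0 : 0 ≤ Sq n x := Sq_nonneg n x
  have h1 : |x i| ≤ 1 + Sq n x := abs_le_one_add_Sq n x i
  have h0 : |x 0| ≤ 1 + Sq n x := abs_le_one_add_Sq n x 0
  have hs : |Sq n x| ≤ 1 + Sq n x := by rw [abs_of_nonneg ht0]; linarith
  calc |x i ^ a * x 0 ^ b * Sq n x ^ c|
      = |x i| ^ a * |x 0| ^ b * |Sq n x| ^ c := by
        rw [abs_mul, abs_mul, abs_pow, abs_pow, abs_pow]
    _ ≤ (1 + Sq n x) ^ a * (1 + Sq n x) ^ b * (1 + Sq n x) ^ c := by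
        apply mul_le_mul (mul_le_mul (pow_le_pow_left₀ (abs_nonneg _) h1 a)
          (pow_le_pow_left₀ (abs_nonneg _) h0 b) (by positivity) (by positivity))
          (pow_le_pow_left₀ (abs_nonneg _) hs c) (by positivity) (by positivity)
    _ = (1 + Sq n x) ^ (a + b + c) := by rw [← pow_add, ← pow_add]

lemma Mon_continuous (n : ℕ) (α D u : ℝ) (i : Fin (n+1)) (a b c : ℕ) :
    Continuous (Mon n α D u i a b c) := by
  unfold Mon
  exact ((((continuous_apply i).pow a).mul ((continuous_apply 0).pow b)).mul
    ((Sq_continuous n).pow c)).mul (Gw_continuous n α D u)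

lemma Mon_integrable (n : ℕ) {α D u : ℝ} (hα : 0 < α) (hD : 0 < D) (hu : 0 ≤ u)
    (i : Fin (n+1)) (a b c : ℕ) : Integrable (Mon n α D u i a b c) := by
  apply integrable_of_poly_bound n hα hD hu (a+b+c)
    (fun x => x i ^ a * x 0 ^ b * Sq n x ^ c)
  · exact (((continuous_apply i).pow a).mul ((continuous_apply 0).pow b)).mul
      ((Sq_continuous n).pow c)
  · exact Mon_poly_bound n i a b c

lemma Mon_global_bound (n : ℕ) {α D u : ℝ} (hα : 0 < α) (hD : 0 < D) (hu : 0 ≤ u)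
    (i : Fin (n+1)) (a b c : ℕ) :
    ∃ C : ℝ, 0 ≤ C ∧ ∀ x, |Mon n α D u i a b c x| ≤ C * Real.exp (-∑ j, |x j|) := by
  obtain ⟨C, hC0, hC⟩ := Gw_bound n hα hD hu (a+b+c)
  refine ⟨C, hC0, fun x => ?_⟩
  unfold Mon
  rw [abs_mul, abs_of_pos (Gw_pos n α D u x)]
  calc |x i ^ a * x 0 ^ b * Sq n x ^ c| * Gw n α D u x
      ≤ (1 + Sq n x) ^ (a+b+c) * Gw n α D u x :=
        mul_le_mul_of_nonneg_right (Mon_poly_bound n i a b c x) (Gw_pos n α D u x).le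
    _ ≤ C * Real.exp (-∑ j, |x j|) := hC x

lemma abs_le_sum_abs_insertNth (n : ℕ) (j : Fin (n+1)) (s : ℝ) (y : Fin n → ℝ) :
    |s| ≤ ∑ k, |(j.insertNth s y) k| := by
  rw [Fin.sum_univ_succAbove _ j]
  simp only [Fin.insertNth_apply_same, Fin.insertNth_apply_succAbove]
  exact le_add_of_nonneg_right (Finset.sum_nonneg fun _ _ => abs_nonneg _)

lemma continuous_insertNth_fst (n : ℕ) (j : Fin (n+1)) (y : Fin n → ℝ) :
    Continuous fun s : ℝ => (Fin.insertNth (α := fun _ => ℝ) j s y) := by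
  refine continuous_pi fun k => ?_
  rcases eq_or_ne k j with rfl | hk
  · simp only [Fin.insertNth_apply_same]
    exact continuous_id
  · obtain ⟨k', rfl⟩ := Fin.exists_succAbove_eq hk
    simp only [Fin.insertNth_apply_succAbove]
    exact continuous_const

lemma Mon_section_dominated (n : ℕ) {α D u : ℝ} (hα : 0 < α) (hD : 0 < D) (hu : 0 ≤ u)
    (i : Fin (n+1)) (a b c : ℕ) :
    ∃ C : ℝ, 0 ≤ C ∧ ∀ (j : Fin (n+1)) (y : Fin n → ℝ) (s : ℝ),
      |Mon n α D u i a b c (j.insertNth s y)| ≤ C * Real.exp (-|s|) := by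
  obtain ⟨C, hC0, hC⟩ := Mon_global_bound n hα hD hu i a b c
  refine ⟨C, hC0, fun j y s => ?_⟩
  calc |Mon n α D u i a b c (j.insertNth s y)|
      ≤ C * Real.exp (-∑ k, |(j.insertNth s y) k|) := hC _
    _ ≤ C * Real.exp (-|s|) := by
        apply mul_le_mul_of_nonneg_left _ hC0
        apply Real.exp_le_exp.2
        simpa using abs_le_sum_abs_insertNth n j s y

lemma exp_neg_abs_tendsto_atTop : Tendsto (fun s : ℝ => Real.exp (-|s|)) atTop (𝓝 0) :=
  Real.tendsto_exp_atBot.comp (tendsto_neg_atTop_atBot.comp tendsto_abs_atTop_atTop)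

lemma exp_neg_abs_tendsto_atBot : Tendsto (fun s : ℝ => Real.exp (-|s|)) atBot (𝓝 0) :=
  Real.tendsto_exp_atBot.comp (tendsto_neg_atTop_atBot.comp tendsto_abs_atBot_atTop)

lemma Mon_section_integrable (n : ℕ) {α D u : ℝ} (hα : 0 < α) (hD : 0 < D) (hu : 0 ≤ u)
    (i : Fin (n+1)) (a b c : ℕ) (j : Fin (n+1)) (y : Fin n → ℝ) :
    Integrable (fun s : ℝ => Mon n α D u i a b c (j.insertNth s y)) := by
  obtain ⟨C, hC0, hC⟩ := Mon_section_dominated n hα hD hu i a b c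
  apply (integrable_exp_neg_abs.const_mul C).mono
    (((Mon_continuous n α D u i a b c).comp (continuous_insertNth_fst n j y)).aestronglyMeasurable)
  filter_upwards with s
  rw [Real.norm_eq_abs, Real.norm_eq_abs]
  exact (hC j y s).trans (le_abs_self _)

lemma Mon_section_tendsto (n : ℕ) {α D u : ℝ} (hα : 0 < α) (hD : 0 < D) (hu : 0 ≤ u)
    (i : Fin (n+1)) (a b c : ℕ) (j : Fin (n+1)) (y : Fin n → ℝ) :
    Tendsto (fun s : ℝ => Mon n α D u i a b c (j.insertNth s y)) atTop (𝓝 0) ∧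
    Tendsto (fun s : ℝ => Mon n α D u i a b c (j.insertNth s y)) atBot (𝓝 0) := by
  obtain ⟨C, hC0, hC⟩ := Mon_section_dominated n hα hD hu i a b c
  constructor
  · apply squeeze_zero_norm (fun s => hC j y s)
    simpa using exp_neg_abs_tendsto_atTop.const_mul C
  · apply squeeze_zero_norm (fun s => hC j y s)
    simpa using exp_neg_abs_tendsto_atBot.const_mul C

lemma integral_deriv_eq_zero_1d {g g' : ℝ → ℝ} (h : ∀ s, HasDerivAt g (g' s) s)
    (hint : Integrable g') (ht : Tendsto g atTop (𝓝 0)) (hb : Tendsto g atBot (𝓝 0)) :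
    ∫ s, g' s = 0 := by
  have h1 : ∫ s in Ioi (0:ℝ), g' s = 0 - g 0 :=
    integral_Ioi_of_hasDerivAt_of_tendsto' (fun x _ => h x) hint.integrableOn ht
  have h2 : ∫ s in Iic (0:ℝ), g' s = g 0 - 0 :=
    integral_Iic_of_hasDerivAt_of_tendsto' (fun x _ => h x) hint.integrableOn hb
  rw [← intervalIntegral.integral_Iic_add_Ioi (b := (0:ℝ)) hint.integrableOn hint.integrableOn, h1, h2]
  ring

lemma integral_pderiv_eq_zero (n : ℕ) (j : Fin (n+1)) (F' : (Fin (n+1) → ℝ) → ℝ)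
    (hF' : Integrable F')
    (h1 : ∀ y : Fin n → ℝ, ∫ s : ℝ, F' (Fin.insertNth (α := fun _ => ℝ) j s y) = 0) :
    ∫ x, F' x = 0 := by
  have hmp : MeasurePreserving (MeasurableEquiv.piFinSuccAbove (fun _ : Fin (n+1) => ℝ) j).symm
      ((volume : Measure ℝ).prod (Measure.pi fun _ => (volume : Measure ℝ)))
      (Measure.pi fun _ => (volume : Measure ℝ)) :=
    (measurePreserving_piFinSuccAbove (fun _ : Fin (n+1) => (volume : Measure ℝ)) j).symm _
  rw [show (volume : Measure (Fin (n+1) → ℝ)) = Measure.pi fun _ => (volume : Measure ℝ) from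
    volume_pi]
  rw [← hmp.integral_comp (MeasurableEquiv.measurableEmbedding _) F']
  have hint : Integrable (fun z : ℝ × (Fin n → ℝ) =>
      F' ((MeasurableEquiv.piFinSuccAbove (fun _ : Fin (n+1) => ℝ) j).symm z))
      ((volume : Measure ℝ).prod (Measure.pi fun _ => (volume : Measure ℝ))) := by
    rw [show (fun z : ℝ × (Fin n → ℝ) =>
        F' ((MeasurableEquiv.piFinSuccAbove (fun _ : Fin (n+1) => ℝ) j).symm z))
      = F' ∘ (MeasurableEquiv.piFinSuccAbove (fun _ : Fin (n+1) => ℝ) j).symm from rfl]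
    rw [hmp.integrable_comp_emb (MeasurableEquiv.measurableEmbedding _)]
    rwa [← volume_pi]
  rw [MeasureTheory.integral_prod _ hint]
  have : ∀ s : ℝ, ∀ y : Fin n → ℝ,
      (MeasurableEquiv.piFinSuccAbove (fun _ : Fin (n+1) => ℝ) j).symm (s, y)
        = Fin.insertNth (α := fun _ => ℝ) j s y := by
    intro s y
    simp [MeasurableEquiv.piFinSuccAbove_symm_apply, Fin.insertNthEquiv]
  simp_rw [this]
  rw [integral_integral_swap]
  · simp_rw [show ∀ y : Fin n → ℝ, ∫ s : ℝ, F' (Fin.insertNth (α := fun _ => ℝ) j s y)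
        ∂(volume : Measure ℝ) = 0 from h1]
    simp
  · rw [show Function.uncurry (fun (s : ℝ) (y : Fin n → ℝ) =>
        F' (Fin.insertNth (α := fun _ => ℝ) j s y)) = fun z : ℝ × (Fin n → ℝ) =>
        F' (Fin.insertNth (α := fun _ => ℝ) j z.1 z.2) from rfl]
    simp_rw [← this]
    exact hint

lemma Sq_insertNth (n : ℕ) (j : Fin (n+1)) (t : ℝ) (y : Fin n → ℝ) :
    Sq n (Fin.insertNth (α := fun _ => ℝ) j t y) = t^2 + ∑ k, (y k)^2 := by
  unfold Sq
  rw [Fin.sum_univ_succAbove (fun k => (Fin.insertNth (α := fun _ => ℝ) j t y) k ^ 2) j]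
  simp [Fin.insertNth_apply_same, Fin.insertNth_apply_succAbove]

lemma derivA (n : ℕ) (α D u : ℝ) (hD : 0 < D) (i : Fin (n+1)) (hi : i ≠ 0)
    (y : Fin n → ℝ) (s : ℝ) :
    HasDerivAt (fun t => Mon n α D u i 2 0 0 (Fin.insertNth (α := fun _ => ℝ) 0 t y))
      ((-(α/D)) * Mon n α D u i 2 1 1 (Fin.insertNth (α := fun _ => ℝ) 0 s y)
        + (-((1-α)/D)) * Mon n α D u i 2 1 0 (Fin.insertNth (α := fun _ => ℝ) 0 s y)
        + (u/D) * Mon n α D u i 2 0 0 (Fin.insertNth (α := fun _ => ℝ) 0 s y)) s := by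
  obtain ⟨ki, hki⟩ := Fin.exists_succAbove_eq hi
  set c := ∑ k, (y k)^2 with hc
  have hS : ∀ t : ℝ, Sq n (Fin.insertNth (α := fun _ => ℝ) 0 t y) = t^2 + c :=
    fun t => Sq_insertNth n 0 t y
  have h0 : ∀ t : ℝ, Fin.insertNth (α := fun _ => ℝ) 0 t y 0 = t :=
    fun t => Fin.insertNth_apply_same (α := fun _ => ℝ) 0 t y
  have hvi : ∀ t : ℝ, Fin.insertNth (α := fun _ => ℝ) 0 t y i = y ki := by
    intro t
    rw [← hki]
    exact Fin.insertNth_apply_succAbove (α := fun _ => ℝ) 0 t y ki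
  have heq : (fun t => Mon n α D u i 2 0 0 (Fin.insertNth (α := fun _ => ℝ) 0 t y))
      = fun t => (y ki)^2 *
        Real.exp (-(α/4*(t^2+c)^2 + (1-α)/2*(t^2+c) - u*t)/D) := by
    funext t
    simp only [Mon, Gw, pow_zero, one_mul, mul_one, hS, h0, hvi]
  have h1 : HasDerivAt (fun t : ℝ => t^2 + c) (2*s) s := by
    simpa using (hasDerivAt_pow 2 s).add_const c
  have h2 : HasDerivAt (fun t : ℝ => (t^2+c)^2) (2*(s^2+c)*(2*s)) s := by
    simpa using h1.fun_pow 2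
  have hu' : HasDerivAt (fun t : ℝ => u*t) u s := by
    simpa using (hasDerivAt_id s).const_mul u
  have h3 : HasDerivAt (fun t : ℝ => -(α/4*(t^2+c)^2 + (1-α)/2*(t^2+c) - u*t)/D)
      (-(α/4*(2*(s^2+c)*(2*s)) + (1-α)/2*(2*s) - u)/D) s :=
    (((h2.const_mul (α/4)).add (h1.const_mul ((1-α)/2))).sub hu').neg.div_const D
  have h5 := (h3.exp).const_mul ((y ki)^2)
  rw [heq]
  refine h5.congr_deriv ?_
  simp only [Mon, Gw, pow_zero, pow_one, one_mul, mul_one, hS, h0, hvi]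
  ring

lemma derivB (n : ℕ) (α D u : ℝ) (hD : 0 < D) (i : Fin (n+1)) (hi : i ≠ 0)
    (y : Fin n → ℝ) (s : ℝ) :
    HasDerivAt (fun t => Mon n α D u i 1 1 0 (Fin.insertNth (α := fun _ => ℝ) i t y))
      (Mon n α D u i 0 1 0 (Fin.insertNth (α := fun _ => ℝ) i s y)
        + (-(α/D)) * Mon n α D u i 2 1 1 (Fin.insertNth (α := fun _ => ℝ) i s y)
        + (-((1-α)/D)) * Mon n α D u i 2 1 0 (Fin.insertNth (α := fun _ => ℝ) i s y)) s := by
  obtain ⟨k0, hk0⟩ := Fin.exists_succAbove_eq (Ne.symm hi)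
  set c := ∑ k, (y k)^2 with hc
  set b := y k0 with hb
  have hS : ∀ t : ℝ, Sq n (Fin.insertNth (α := fun _ => ℝ) i t y) = t^2 + c :=
    fun t => Sq_insertNth n i t y
  have hvi : ∀ t : ℝ, Fin.insertNth (α := fun _ => ℝ) i t y i = t :=
    fun t => Fin.insertNth_apply_same (α := fun _ => ℝ) i t y
  have h0 : ∀ t : ℝ, Fin.insertNth (α := fun _ => ℝ) i t y 0 = b := by
    intro t
    rw [← hk0]
    exact Fin.insertNth_apply_succAbove (α := fun _ => ℝ) i t y k0
  have heq : (fun t => Mon n α D u i 1 1 0 (Fin.insertNth (α := fun _ => ℝ) i t y))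
      = fun t => t * b *
        Real.exp (-(α/4*(t^2+c)^2 + (1-α)/2*(t^2+c) - u*b)/D) := by
    funext t
    simp only [Mon, Gw, pow_zero, pow_one, one_mul, mul_one, hS, h0, hvi]
  have h1 : HasDerivAt (fun t : ℝ => t^2 + c) (2*s) s := by
    simpa using (hasDerivAt_pow 2 s).add_const c
  have h2 : HasDerivAt (fun t : ℝ => (t^2+c)^2) (2*(s^2+c)*(2*s)) s := by
    simpa using h1.fun_pow 2
  have h3 : HasDerivAt (fun t : ℝ => -(α/4*(t^2+c)^2 + (1-α)/2*(t^2+c) - u*b)/D)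
      (-(α/4*(2*(s^2+c)*(2*s)) + (1-α)/2*(2*s))/D) s := by
    have := (((h2.const_mul (α/4)).add (h1.const_mul ((1-α)/2))).sub_const (u*b)).neg.div_const D
    simpa using this
  have hlin : HasDerivAt (fun t : ℝ => t * b) b s := by
    simpa using (hasDerivAt_id s).mul_const b
  have h5 := hlin.mul h3.exp
  rw [heq]
  refine h5.congr_deriv ?_
  simp only [Mon, Gw, pow_zero, pow_one, one_mul, mul_one, hS, h0, hvi]
  ring

lemma ibp_key (n : ℕ) {α D u : ℝ} (hα : 0 < α) (hD : 0 < D) (hu : 0 < u)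
    (i : Fin (n+1)) (hi : i ≠ 0) :
    (u/D) * ∫ x, Mon n α D u i 2 0 0 x = ∫ x, Mon n α D u i 0 1 0 x := by
  have hu0 : 0 ≤ u := hu.le
  set M := Mon n α D u i with hM
  set F'A : (Fin (n+1) → ℝ) → ℝ := fun x =>
    (-(α/D)) * M 2 1 1 x + (-((1-α)/D)) * M 2 1 0 x + (u/D) * M 2 0 0 x with hF'A
  set F'B : (Fin (n+1) → ℝ) → ℝ := fun x =>
    M 0 1 0 x + (-(α/D)) * M 2 1 1 x + (-((1-α)/D)) * M 2 1 0 x with hF'B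
  have intMon : ∀ a b c, Integrable (M a b c) := fun a b c =>
    Mon_integrable n hα hD hu0 i a b c
  have intsec : ∀ a b c j y, Integrable (fun s : ℝ =>
      M a b c (Fin.insertNth (α := fun _ => ℝ) j s y)) := fun a b c j y =>
    Mon_section_integrable n hα hD hu0 i a b c j y
  have hFA' : Integrable F'A :=
    (((intMon 2 1 1).const_mul _).add ((intMon 2 1 0).const_mul _)).add
      ((intMon 2 0 0).const_mul _)
  have hFB' : Integrable F'B :=
    ((intMon 0 1 0).add ((intMon 2 1 1).const_mul _)).add ((intMon 2 1 0).const_mul _)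
  have hA : ∫ x, F'A x = 0 := by
    apply integral_pderiv_eq_zero n 0 F'A hFA'
    intro y
    apply integral_deriv_eq_zero_1d (g := fun t =>
        M 2 0 0 (Fin.insertNth (α := fun _ => ℝ) 0 t y))
      (fun s => derivA n α D u hD i hi y s)
    · exact (((intsec 2 1 1 0 y).const_mul _).add ((intsec 2 1 0 0 y).const_mul _)).add
        ((intsec 2 0 0 0 y).const_mul _)
    · exact (Mon_section_tendsto n hα hD hu0 i 2 0 0 0 y).1
    · exact (Mon_section_tendsto n hα hD hu0 i 2 0 0 0 y).2
  have hB : ∫ x, F'B x = 0 := by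
    apply integral_pderiv_eq_zero n i F'B hFB'
    intro y
    apply integral_deriv_eq_zero_1d (g := fun t =>
        M 1 1 0 (Fin.insertNth (α := fun _ => ℝ) i t y))
      (fun s => derivB n α D u hD i hi y s)
    · exact ((intsec 0 1 0 i y).add ((intsec 2 1 1 i y).const_mul _)).add
        ((intsec 2 1 0 i y).const_mul _)
    · exact (Mon_section_tendsto n hα hD hu0 i 1 1 0 i y).1
    · exact (Mon_section_tendsto n hα hD hu0 i 1 1 0 i y).2
  have hdiff : ∫ x, (F'A x - F'B x) = 0 := by
    rw [integral_sub hFA' hFB', hA, hB]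
    ring
  have hfun : (fun x => F'A x - F'B x) = fun x => (u/D) * M 2 0 0 x - M 0 1 0 x := by
    funext x
    rw [hF'A, hF'B]
    ring
  rw [hfun] at hdiff
  rw [integral_sub ((intMon 2 0 0).const_mul _) (intMon 0 1 0), integral_const_mul] at hdiff
  linarith

lemma pi_main (n : ℕ) {α D u : ℝ} (hα : 0 < α) (hD : 0 < D) (hu : 0 < u)
    (i : Fin (n+1)) (hi : i ≠ 0) (Z : ℝ) (hZ : Z = ∫ x, Gw n α D u x)
    (hstat : ∫ x, (x 0 - u) * (Gw n α D u x / Z) = 0) :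
    ∫ x, x i ^ 2 * (Gw n α D u x / Z) = D := by
  have hu0 : 0 ≤ u := hu.le
  have hMonGw : Mon n α D u i 0 0 0 = Gw n α D u := by
    funext x
    simp [Mon]
  have hGint : Integrable (Gw n α D u) := by
    rw [← hMonGw]
    exact Mon_integrable n hα hD hu0 i 0 0 0
  have hZpos : 0 < Z := by
    rw [hZ]
    rw [integral_pos_iff_support_of_nonneg (fun x => (Gw_pos n α D u x).le) hGint]
    have hsupp : Function.support (Gw n α D u) = Set.univ :=
      Set.eq_univ_iff_forall.2 fun x => (Gw_pos n α D u x).ne'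
    rw [hsupp]
    exact isOpen_univ.measure_pos volume Set.univ_nonempty
  have hstatG : ∫ x, (x 0 - u) * Gw n α D u x = 0 := by
    have heq : (fun x : Fin (n+1) → ℝ => (x 0 - u) * (Gw n α D u x / Z))
        = fun x => ((x 0 - u) * Gw n α D u x) * Z⁻¹ := by
      funext x
      ring
    rw [heq, integral_mul_const] at hstat
    rcases mul_eq_zero.1 hstat with h | h
    · exact h
    · exact absurd h (inv_ne_zero hZpos.ne')
  have hMon010 : Mon n α D u i 0 1 0 = fun x => x 0 * Gw n α D u x := by
    funext x
    simp [Mon]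
  have hx0G : Integrable fun x => x 0 * Gw n α D u x := by
    rw [← hMon010]
    exact Mon_integrable n hα hD hu0 i 0 1 0
  have hsub : ∫ x, (x 0 - u) * Gw n α D u x
      = (∫ x, x 0 * Gw n α D u x) - u * ∫ x, Gw n α D u x := by
    have heq : (fun x : Fin (n+1) → ℝ => (x 0 - u) * Gw n α D u x)
        = fun x => x 0 * Gw n α D u x - u * Gw n α D u x := by
      funext x
      ring
    rw [heq, integral_sub hx0G (hGint.const_mul u), integral_const_mul]
  have hmean : ∫ x, x 0 * Gw n α D u x = u * Z := by
    rw [hZ]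
    linarith [hsub, hstatG]
  have hibp := ibp_key n hα hD hu i hi
  rw [hMon010, hmean] at hibp
  have hMon200 : Mon n α D u i 2 0 0 = fun x => x i ^ 2 * Gw n α D u x := by
    funext x
    simp [Mon]
  rw [hMon200] at hibp
  have hA : ∫ x, x i ^ 2 * Gw n α D u x = D * Z := by
    have h2 : u * (∫ x, x i ^ 2 * Gw n α D u x) = u * (D * Z) := by
      have h := hibp
      field_simp at h
      nlinarith [h]
    exact mul_left_cancel₀ hu.ne' h2
  have heq : (fun x : Fin (n+1) → ℝ => x i ^ 2 * (Gw n α D u x / Z))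
      = fun x => (x i ^ 2 * Gw n α D u x) * Z⁻¹ := by
    funext x
    ring
  rw [heq, integral_mul_const, hA]
  field_simp

theorem stmt_11 (d : ℕ) (hd : 2 ≤ d) (α D u : ℝ) (hα : 0 < α) (hD : 0 < D)
    (hu : 0 < u)
    (φ : ℝ → ℝ) (hφ : ∀ s : ℝ, φ s = α / 4 * s ^ 4 + (1 - α) / 2 * s ^ 2)
    (Z : ℝ)
    (hZ : Z = ∫ v : EuclideanSpace ℝ (Fin d),
      Real.exp (-(φ ‖v‖ - u * v ⟨0, by omega⟩) / D))
    (f : EuclideanSpace ℝ (Fin d) → ℝ)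
    (hf : ∀ v, f v = Real.exp (-(φ ‖v‖ - u * v ⟨0, by omega⟩) / D) / Z)
    (hstat : ∫ v : EuclideanSpace ℝ (Fin d), (v ⟨0, by omega⟩ - u) * f v = 0) :
    ∀ i : Fin d, i ≠ ⟨0, by omega⟩ →
      ∫ v : EuclideanSpace ℝ (Fin d), (v i) ^ 2 * f v = D := by
  obtain ⟨n, rfl⟩ : ∃ n, d = n + 1 := ⟨d - 1, by omega⟩
  intro i hi
  have h0 : (⟨0, by omega⟩ : Fin (n+1)) = 0 := rfl
  rw [h0] at hZ hstat hi
  have hψ := EuclideanSpace.volume_preserving_symm_measurableEquiv_toLp (Fin (n+1))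
  set ψ := (MeasurableEquiv.toLp 2 (Fin (n+1) → ℝ)).symm with hψdef
  have hψv : ∀ (v : EuclideanSpace ℝ (Fin (n+1))) (j : Fin (n+1)), ψ v j = v j :=
    fun v j => rfl
  have hnorm : ∀ v : EuclideanSpace ℝ (Fin (n+1)), ‖v‖^2 = ∑ j, v j ^ 2 := by
    intro v
    rw [EuclideanSpace.norm_eq, Real.sq_sqrt (by positivity)]
    simp [sq_abs]
  have hE : ∀ v : EuclideanSpace ℝ (Fin (n+1)),
      Real.exp (-(φ ‖v‖ - u * v 0) / D) = Gw n α D u (ψ v) := by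
    intro v
    unfold Gw Sq
    congr 1
    rw [hφ]
    have h4 : ‖v‖^4 = (‖v‖^2)^2 := by ring
    rw [h4, hnorm v]
    simp only [hψv]
  have trans : ∀ g : (Fin (n+1) → ℝ) → ℝ,
      ∫ v : EuclideanSpace ℝ (Fin (n+1)), g (ψ v) = ∫ x, g x :=
    fun g => hψ.integral_comp ψ.measurableEmbedding g
  have hZ' : Z = ∫ x, Gw n α D u x := by
    rw [hZ, ← trans (Gw n α D u)]
    congr 1
    funext v
    rw [hE v]
  have hstat' : ∫ x, (x 0 - u) * (Gw n α D u x / Z) = 0 := by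
    rw [← trans (fun x => (x 0 - u) * (Gw n α D u x / Z))]
    rw [← hstat]
    congr 1
    funext v
    rw [hf v, h0, hE v, hψv]
  have hgoal := pi_main n hα hD hu i hi Z hZ' hstat'
  rw [← trans (fun x => x i ^ 2 * (Gw n α D u x / Z))] at hgoal
  rw [← hgoal]
  congr 1
  funext v
  rw [hf v, h0, hE v, hψv]
end

section
/- Fix d ≥ 1, α > 0, D > 0. Define the free energy F[f] = D ∫ f log f + ∫ φ_α f - (1/2)|u_f|², where φ_α(v) = (α/4)|v|⁴ + ((1-α)/2)|v|² and u_f = ∫ v f dv. Then for any probability density f on ℝ^d with ∫ |v|⁴ f < ∞, F[f] ≥ -(D+α)²/(4α) - (d/2) log(2π) D, and moreover ∫ |v|⁴ f dv ≤ α⁻² (D + α + √((D+α)² + 4α(F[f] + (d/2)log(2π) D)))². -/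
open MeasureTheory Real

/-- Cauchy–Schwarz via AM–GM for a probability density. -/
lemma cs_aux {Ω : Type*} [MeasurableSpace Ω] {μ : Measure Ω} {f g : Ω → ℝ}
    (hf : ∀ v, 0 ≤ f v) (hg : ∀ v, 0 ≤ g v)
    (hfg : Integrable (fun v => f v * g v) μ)
    (hfg2 : Integrable (fun v => f v * g v ^ 2) μ)
    (hint : Integrable f μ)
    (hmass : ∫ v, f v ∂μ = 1) :
    (∫ v, f v * g v ∂μ) ^ 2 ≤ ∫ v, f v * g v ^ 2 ∂μ := by
  set I1 := ∫ v, f v * g v ∂μ with hI1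
  set I2 := ∫ v, f v * g v ^ 2 ∂μ with hI2
  have hI1nn : 0 ≤ I1 := integral_nonneg fun v => mul_nonneg (hf v) (hg v)
  have hI2nn : 0 ≤ I2 := integral_nonneg fun v => mul_nonneg (hf v) (sq_nonneg _)
  have hpt : ∀ v, 2 * I1 * (f v * g v) ≤ I1 ^ 2 * f v + f v * g v ^ 2 := by
    intro v
    nlinarith [mul_nonneg (hf v) (sq_nonneg (g v - I1))]
  have hmono : ∫ v, 2 * I1 * (f v * g v) ∂μ ≤ ∫ v, (I1 ^ 2 * f v + f v * g v ^ 2) ∂μ :=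
    integral_mono (hfg.const_mul (2 * I1)) ((hint.const_mul (I1 ^ 2)).add hfg2) hpt
  rw [integral_const_mul, integral_add (hint.const_mul (I1 ^ 2)) hfg2,
    integral_const_mul, hmass, mul_one, ← hI1, ← hI2] at hmono
  nlinarith

/-- Pointwise entropy inequality: `a - b ≤ a log a - a log b` for `a ≥ 0`, `b > 0`. -/
lemma ent_pt {a b : ℝ} (ha : 0 ≤ a) (hb : 0 < b) :
    a - b ≤ a * Real.log a - a * Real.log b := by
  rcases eq_or_lt_of_le ha with h | h
  · simp [← h, hb.le]
  · have hlog : Real.log (b / a) ≤ b / a - 1 :=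
      Real.log_le_sub_one_of_pos (div_pos hb h)
    rw [Real.log_div (ne_of_gt hb) (ne_of_gt h)] at hlog
    have := mul_le_mul_of_nonneg_left hlog ha
    have hba : a * (b / a - 1) = b - a := by field_simp
    nlinarith


/-- Final quadratic optimization step. -/
lemma alg_aux {α D X C : ℝ} (hα : 0 < α) (hXnn : 0 ≤ X)
    (hC : α / 4 * X ^ 2 - (D + α) / 2 * X ≤ C) :
    -(D + α) ^ 2 / (4 * α) ≤ C ∧
    X ^ 2 ≤ α⁻¹ ^ 2 * (D + α + Real.sqrt ((D + α) ^ 2 + 4 * α * C)) ^ 2 := by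
  have h4α : (0:ℝ) < 4 * α := by linarith
  have part1 : -(D + α) ^ 2 / (4 * α) ≤ C := by
    rw [div_le_iff₀ h4α]
    nlinarith [sq_nonneg (α * X - (D + α))]
  refine ⟨part1, ?_⟩
  have hdisc : 0 ≤ (D + α) ^ 2 + 4 * α * C := by
    have h := part1
    rw [div_le_iff₀ h4α] at h
    nlinarith
  set R := Real.sqrt ((D + α) ^ 2 + 4 * α * C) with hR
  have hRnn : 0 ≤ R := Real.sqrt_nonneg _
  have hRsq : R ^ 2 = (D + α) ^ 2 + 4 * α * C := Real.sq_sqrt hdisc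
  clear_value R
  have hXR : α * X ≤ D + α + R := by
    by_contra hcon
    push_neg at hcon
    have h1 : R < α * X - (D + α) := by linarith
    have h2 : R ^ 2 < (α * X - (D + α)) ^ 2 := by nlinarith
    nlinarith
  have hXle : X ≤ (D + α + R) / α := by
    rw [le_div_iff₀ hα]
    linarith
  calc X ^ 2 ≤ ((D + α + R) / α) ^ 2 := pow_le_pow_left₀ hXnn hXle 2
    _ = α⁻¹ ^ 2 * (D + α + R) ^ 2 := by ring

theorem stmt_13 (d : ℕ) (hd : 1 ≤ d) (α D : ℝ) (hα : 0 < α) (hD : 0 < D)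
    (φ : ℝ → ℝ) (hφ : ∀ s : ℝ, φ s = α / 4 * s ^ 4 + (1 - α) / 2 * s ^ 2)
    (f : EuclideanSpace ℝ (Fin d) → ℝ)
    (hpos : ∀ v, 0 ≤ f v)
    (hint : Integrable f)
    (hmass : ∫ v, f v = 1)
    (hent : Integrable (fun v => f v * Real.log (f v)))
    (hmom4 : Integrable (fun v => ‖v‖ ^ 4 * f v))
    (hmom2 : Integrable (fun v => ‖v‖ ^ 2 * f v))
    (hmom1 : Integrable (fun v => f v • v))
    (uf : EuclideanSpace ℝ (Fin d)) (huf : uf = ∫ v, f v • v)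
    (F : ℝ)
    (hF : F = D * (∫ v, f v * Real.log (f v)) + (∫ v, φ ‖v‖ * f v)
      - (1 / 2) * ‖uf‖ ^ 2) :
    F ≥ -(D + α) ^ 2 / (4 * α) - (d / 2 : ℝ) * Real.log (2 * Real.pi) * D
    ∧ (∫ v, ‖v‖ ^ 4 * f v) ≤ α⁻¹ ^ 2 *
        (D + α + Real.sqrt ((D + α) ^ 2
          + 4 * α * (F + (d / 2 : ℝ) * Real.log (2 * Real.pi) * D))) ^ 2 := by
  set S := ∫ v : EuclideanSpace ℝ (Fin d), f v * Real.log (f v) with hS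
  have hmom2' : Integrable (fun v : EuclideanSpace ℝ (Fin d) => f v * ‖v‖ ^ 2) := by
    simpa [mul_comm] using hmom2
  have hmom4' : Integrable (fun v : EuclideanSpace ℝ (Fin d) => f v * (‖v‖ ^ 2) ^ 2) := by
    have : (fun v : EuclideanSpace ℝ (Fin d) => f v * (‖v‖ ^ 2) ^ 2)
        = fun v => ‖v‖ ^ 4 * f v := by funext v; ring
    rw [this]; exact hmom4
  set E2 := ∫ v : EuclideanSpace ℝ (Fin d), ‖v‖ ^ 2 * f v with hE2def
  set E4 := ∫ v : EuclideanSpace ℝ (Fin d), ‖v‖ ^ 4 * f v with hE4def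
  have hE2nn : 0 ≤ E2 := integral_nonneg fun v => mul_nonneg (sq_nonneg _) (hpos v)
  have hE4nn : 0 ≤ E4 :=
    integral_nonneg fun v => mul_nonneg (by positivity) (hpos v)
  -- E2 ^ 2 ≤ E4
  have hE2sq : E2 ^ 2 ≤ E4 := by
    have := cs_aux (μ := volume) (g := fun v : EuclideanSpace ℝ (Fin d) => ‖v‖ ^ 2)
      hpos (fun v => sq_nonneg _) hmom2' hmom4' hint hmass
    have e1 : (∫ v : EuclideanSpace ℝ (Fin d), f v * ‖v‖ ^ 2) = E2 := by
      rw [hE2def]; congr 1; funext v; ring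
    have e2 : (∫ v : EuclideanSpace ℝ (Fin d), f v * (‖v‖ ^ 2) ^ 2) = E4 := by
      rw [hE4def]; congr 1; funext v; ring
    rwa [e1, e2] at this
  -- first moment integrability
  have hmeasnorm : Integrable (fun v : EuclideanSpace ℝ (Fin d) => f v * ‖v‖) := by
    refine Integrable.mono' (hint.add hmom2') (hint.aestronglyMeasurable.mul
      continuous_norm.aestronglyMeasurable) (Filter.Eventually.of_forall fun v => ?_)
    have h1 : ‖v‖ ≤ 1 + ‖v‖ ^ 2 := by nlinarith [sq_nonneg (‖v‖ - 1), norm_nonneg v]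
    have h2 : 0 ≤ f v * ‖v‖ := mul_nonneg (hpos v) (norm_nonneg v)
    rw [Real.norm_eq_abs, abs_of_nonneg h2]
    simp only [Pi.add_apply]
    nlinarith [mul_le_mul_of_nonneg_left h1 (hpos v)]
  -- ‖uf‖ ^ 2 ≤ E2
  have hufE2 : ‖uf‖ ^ 2 ≤ E2 := by
    have h1 : ‖uf‖ ≤ ∫ v : EuclideanSpace ℝ (Fin d), f v * ‖v‖ := by
      rw [huf]
      refine le_trans (norm_integral_le_integral_norm _) (le_of_eq ?_)
      congr 1; funext v
      rw [norm_smul, Real.norm_eq_abs, abs_of_nonneg (hpos v)]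
    have h2 : (∫ v : EuclideanSpace ℝ (Fin d), f v * ‖v‖) ^ 2 ≤ E2 := by
      have := cs_aux (μ := volume) (g := fun v : EuclideanSpace ℝ (Fin d) => ‖v‖)
        hpos (fun v => norm_nonneg v) hmeasnorm hmom2' hint hmass
      have e1 : (∫ v : EuclideanSpace ℝ (Fin d), f v * ‖v‖ ^ 2) = E2 := by
        rw [hE2def]; congr 1; funext v; ring
      rwa [e1] at this
    calc ‖uf‖ ^ 2 ≤ (∫ v : EuclideanSpace ℝ (Fin d), f v * ‖v‖) ^ 2 :=
          pow_le_pow_left₀ (norm_nonneg _) h1 2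
      _ ≤ E2 := h2
  -- entropy lower bound
  set c2 : ℝ := (d / 2 : ℝ) * Real.log (2 * Real.pi) with hc2
  have h2pi : (0:ℝ) < 2 * π := by positivity
  set c0 : ℝ := (2 * π) ^ (-(d:ℝ)/2) with hc0
  have hc0pos : 0 < c0 := Real.rpow_pos_of_pos h2pi _
  set g : EuclideanSpace ℝ (Fin d) → ℝ := fun v => c0 * Real.exp (-(1/2) * ‖v‖ ^ 2)
    with hgdef
  have hgpos : ∀ v, 0 < g v := fun v => mul_pos hc0pos (Real.exp_pos _)
  have hexpint : Integrable (fun v : EuclideanSpace ℝ (Fin d) =>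
      Real.exp (-(1/2) * ‖v‖ ^ 2)) := by
    have h := (GaussianFourier.integrable_cexp_neg_mul_sq_norm_add
      (by norm_num : (0:ℝ) < ((1/2 : ℂ)).re) 0 (0 : EuclideanSpace ℝ (Fin d))).norm
    convert h using 2 with v
    rw [Complex.norm_exp]
    congr 1
    simp [← Complex.ofReal_pow]
  have hgint : Integrable g := hexpint.const_mul c0
  have hgone : ∫ v, g v = 1 := by
    rw [hgdef]
    simp only
    rw [integral_const_mul]
    have : ∫ v : EuclideanSpace ℝ (Fin d), Real.exp (-(1/2) * ‖v‖ ^ 2)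
        = (2*π) ^ ((d:ℝ)/2) := by
      rw [GaussianFourier.integral_rexp_neg_mul_sq_norm (by norm_num : (0:ℝ) < 1/2),
        finrank_euclideanSpace_fin]
      congr 1
      ring
    rw [this, hc0, ← Real.rpow_add h2pi]
    have he : -(d:ℝ)/2 + (d:ℝ)/2 = 0 := by ring
    rw [he, Real.rpow_zero]
  have hglog : ∀ v, Real.log (g v) = -c2 - ‖v‖ ^ 2 / 2 := by
    intro v
    rw [hgdef]
    simp only
    rw [Real.log_mul (ne_of_gt hc0pos) (ne_of_gt (Real.exp_pos _)), hc0,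
      Real.log_rpow h2pi, Real.log_exp, hc2]
    ring
  have hfloggint : Integrable (fun v : EuclideanSpace ℝ (Fin d) =>
      f v * Real.log (g v)) := by
    have : (fun v : EuclideanSpace ℝ (Fin d) => f v * Real.log (g v))
        = fun v => (-c2) * f v + (-(1/2)) * (‖v‖ ^ 2 * f v) := by
      funext v; rw [hglog v]; ring
    rw [this]
    exact (hint.const_mul _).add (hmom2.const_mul _)
  have hfloggval : (∫ v : EuclideanSpace ℝ (Fin d), f v * Real.log (g v))
      = -c2 - E2 / 2 := by
    have e : (fun v : EuclideanSpace ℝ (Fin d) => f v * Real.log (g v))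
        = fun v => (-c2) * f v + (-(1/2)) * (‖v‖ ^ 2 * f v) := by
      funext v; rw [hglog v]; ring
    rw [e, integral_add (hint.const_mul _) (hmom2.const_mul _),
      integral_const_mul, integral_const_mul, hmass, ← hE2def]
    ring
  have hentLB : S ≥ -c2 - E2 / 2 := by
    have hnonneg : 0 ≤ ∫ v : EuclideanSpace ℝ (Fin d),
        (f v * Real.log (f v) - f v * Real.log (g v) - f v + g v) := by
      refine integral_nonneg fun v => ?_
      simp only [Pi.zero_apply]
      have := ent_pt (hpos v) (hgpos v)
      linarith
    have e1 : ∫ v : EuclideanSpace ℝ (Fin d),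
        (f v * Real.log (f v) - f v * Real.log (g v) - f v + g v)
        = (∫ v : EuclideanSpace ℝ (Fin d),
            (f v * Real.log (f v) - f v * Real.log (g v) - f v))
          + ∫ v : EuclideanSpace ℝ (Fin d), g v :=
      integral_add ((hent.sub hfloggint).sub hint) hgint
    have e2 : ∫ v : EuclideanSpace ℝ (Fin d),
        (f v * Real.log (f v) - f v * Real.log (g v) - f v)
        = (∫ v : EuclideanSpace ℝ (Fin d),
            (f v * Real.log (f v) - f v * Real.log (g v)))
          - ∫ v : EuclideanSpace ℝ (Fin d), f v :=
      integral_sub (hent.sub hfloggint) hint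
    have e3 : ∫ v : EuclideanSpace ℝ (Fin d),
        (f v * Real.log (f v) - f v * Real.log (g v))
        = (∫ v : EuclideanSpace ℝ (Fin d), f v * Real.log (f v))
          - ∫ v : EuclideanSpace ℝ (Fin d), f v * Real.log (g v) :=
      integral_sub hent hfloggint
    rw [e1, e2, e3, hfloggval, hmass, hgone, ← hS] at hnonneg
    linarith
  -- potential term
  have hφval : (∫ v : EuclideanSpace ℝ (Fin d), φ ‖v‖ * f v)
      = α / 4 * E4 + (1 - α) / 2 * E2 := by
    have e : (fun v : EuclideanSpace ℝ (Fin d) => φ ‖v‖ * f v)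
        = fun v => α / 4 * (‖v‖ ^ 4 * f v) + (1 - α) / 2 * (‖v‖ ^ 2 * f v) := by
      funext v; rw [hφ]; ring
    rw [e, integral_add (hmom4.const_mul _) (hmom2.const_mul _),
      integral_const_mul, integral_const_mul, ← hE4def, ← hE2def]
  -- main algebra
  set X := Real.sqrt E4 with hX
  have hXnn : 0 ≤ X := Real.sqrt_nonneg _
  have hXsq : X ^ 2 = E4 := Real.sq_sqrt hE4nn
  have hE2X : E2 ≤ X := by
    rw [hX]
    exact (Real.le_sqrt hE2nn hE4nn).mpr hE2sq
  clear_value S E2 E4 X c2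
  clear hpos hint hmass hent hmom4 hmom2 hmom1 hglog hgpos hgone hgint hexpint
    hfloggint hfloggval hmeasnorm hmom2' hmom4' hc0pos hE2def hE4def hE2sq hd h2pi
    hc0 hgdef hφ
  clear g c0
  have hC : α / 4 * X ^ 2 - (D + α) / 2 * X ≤ F + c2 * D := by
    rw [hF, hφval, hXsq]
    have h1 : D * S ≥ D * (-c2 - E2 / 2) := mul_le_mul_of_nonneg_left hentLB hD.le
    nlinarith [mul_le_mul_of_nonneg_left hE2X (by linarith : (0:ℝ) ≤ (D + α) / 2)]
  obtain ⟨p1, p2⟩ := alg_aux hα hXnn hC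
  constructor
  · linarith
  · rw [hXsq] at p2
    exact p2
end
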